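/- arXiv:1905.10895 — 5 statements merged into one kernel-verified Lean document; each statement's English description precedes it below -/
import Mathlib

section
/- Let h ∈ (0,1) and let ξ₁, ξ₂, ξ₃, … be i.i.d. random variables with P[ξᵢ = 1] = h and P[ξᵢ = 0] = 1 − h. Let r, s ≥ 1 be integers, let τ be the first time a run of r consecutive ones is completed and σ the first time a run of s consecutive zeros is completed, and set D = h^{r−1} + (1−h)^{s−1} − h^{r−1}(1−h)^{s−1}. Then the conditional probabilities satisfy P[τ < σ ∣ ξ₁ = 0] = h^{r−1}(1 − (1−h)^{s−1}) / D and P[τ < σ ∣ ξ₁ = 1] = h^{r−1} / D. -/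
open MeasureTheory ProbabilityTheory
open scoped ENNReal

/-- The first (1-based) time `m ≥ r` at which a run of `r` consecutive values `v`
(at positions `m, m-1, …, m-r+1`) is completed, for the sequence `ξ` (where `ξ n`
represents the `(n+1)`-th variable, i.e. `ξ 0 = ξ₁`); it equals `⊤` if no such
run ever occurs. -/
noncomputable def runTime {Ω : Type*} (ξ : ℕ → Ω → ℕ) (r : ℕ) (v : ℕ) (ω : Ω) : ℕ∞ :=
  sInf {t : ℕ∞ | ∃ m : ℕ, t = (m : ℕ∞) ∧ r ≤ m ∧ ∀ i < r, ξ (m - 1 - i) ω = v}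

namespace RunsAux

lemma sInf_coe_le {S : Set ℕ} {m : ℕ} (hm : m ∈ S) :
    sInf {t : ℕ∞ | ∃ m : ℕ, t = (m : ℕ∞) ∧ m ∈ S} ≤ (m : ℕ∞) :=
  sInf_le ⟨m, rfl, hm⟩

lemma runTime_lt_iff {Ω : Type*} (ξ : ℕ → Ω → ℕ) (r s : ℕ) (ω : Ω) :
    runTime ξ r 1 ω < runTime ξ s 0 ω ↔
      ∃ m : ℕ, (r ≤ m ∧ ∀ i < r, ξ (m - 1 - i) ω = 1) ∧
        ∀ k : ℕ, s ≤ k → k ≤ m → ¬ (∀ i < s, ξ (k - 1 - i) ω = 0) := by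
  constructor
  · intro hlt
    set A : Set ℕ := {m | r ≤ m ∧ ∀ i < r, ξ (m - 1 - i) ω = 1} with hA
    have hAne : A.Nonempty := by
      by_contra hne
      rw [Set.not_nonempty_iff_eq_empty] at hne
      have htop : runTime ξ r 1 ω = ⊤ := by
        rw [runTime]
        have : {t : ℕ∞ | ∃ m : ℕ, t = (m : ℕ∞) ∧ r ≤ m ∧ ∀ i < r, ξ (m - 1 - i) ω = 1}
            = ∅ := by
          ext t
          simp only [Set.mem_setOf_eq, Set.mem_empty_iff_false, iff_false]
          rintro ⟨m, rfl, hm1, hm2⟩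
          have : m ∈ A := ⟨hm1, hm2⟩
          rw [hne] at this
          exact this
        rw [this, sInf_empty]
      rw [htop] at hlt
      exact absurd hlt (by simp)
    set m := sInf A with hm
    have hmA : m ∈ A := Nat.sInf_mem hAne
    have hmmin : ∀ k ∈ A, m ≤ k := fun k hk => Nat.sInf_le hk
    have hrt : runTime ξ r 1 ω = (m : ℕ∞) := by
      apply le_antisymm
      · exact sInf_le ⟨m, rfl, hmA.1, hmA.2⟩
      apply le_sInf
      rintro t ⟨k, rfl, hk1, hk2⟩
      exact_mod_cast hmmin k ⟨hk1, hk2⟩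

    refine ⟨m, hmA, fun k hk1 hk2 hk3 => ?_⟩
    have : runTime ξ s 0 ω ≤ (k : ℕ∞) := sInf_le ⟨k, rfl, hk1, hk3⟩
    have : (m : ℕ∞) < (k : ℕ∞) := lt_of_lt_of_le (hrt ▸ hlt) this
    exact absurd hk2 (by exact_mod_cast not_le_of_gt this)
  · rintro ⟨m, hmA, hB⟩
    have h1 : runTime ξ r 1 ω ≤ (m : ℕ∞) := sInf_le ⟨m, rfl, hmA.1, hmA.2⟩
    have h2 : ((m : ℕ) + 1 : ℕ∞) ≤ runTime ξ s 0 ω := by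
      apply le_sInf
      rintro t ⟨k, rfl, hk1, hk2⟩
      have : m < k := by
        by_contra hc
        exact hB k hk1 (le_of_not_gt hc) hk2
      exact_mod_cast this
    calc runTime ξ r 1 ω ≤ (m : ℕ∞) := h1
      _ < (m + 1 : ℕ) := by exact_mod_cast Nat.lt_succ_self m
      _ ≤ runTime ξ s 0 ω := by exact_mod_cast h2



variable {Ω : Type*}

def matchesAt (ξ : ℕ → Ω → ℕ) (t : ℕ) (w : List ℕ) (ω : Ω) : Prop :=
  ∀ i < w.length, ξ (t + i) ω = w.getD i 0

def word1 (r : ℕ) (l : List (ℕ × ℕ)) : List ℕ :=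
  l.foldr (fun p w => List.replicate p.1 1 ++ (List.replicate p.2 0 ++ w))
    (List.replicate r 1)

def Good (r s : ℕ) (l : List (ℕ × ℕ)) : Prop :=
  ∀ p ∈ l, (1 ≤ p.1 ∧ p.1 < r) ∧ (1 ≤ p.2 ∧ p.2 < s)

instance (r s : ℕ) (l : List (ℕ × ℕ)) : Decidable (Good r s l) := by
  unfold Good; infer_instance

@[simp] lemma word1_nil (r : ℕ) : word1 r ([] : List (ℕ × ℕ)) = List.replicate r 1 := rfl

@[simp] lemma word1_cons (r : ℕ) (a b : ℕ) (l : List (ℕ × ℕ)) :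
    word1 r ((a, b) :: l) =
      List.replicate a 1 ++ (List.replicate b 0 ++ word1 r l) := rfl

lemma getD_replicate {c d : ℕ} {n i : ℕ} (h : i < n) :
    (List.replicate n c).getD i d = c := by
  rw [List.getD_eq_getElem _ _ (by simpa using h)]
  simp

lemma matchesAt_append {ξ : ℕ → Ω → ℕ} {t : ℕ} {u v : List ℕ} {ω : Ω} :
    matchesAt ξ t (u ++ v) ω ↔
      matchesAt ξ t u ω ∧ matchesAt ξ (t + u.length) v ω := by
  constructor
  · intro hm
    constructor
    · intro i hi
      have := hm i (by simp; omega)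
      rwa [List.getD_append _ _ _ _ hi] at this
    · intro i hi
      have := hm (u.length + i) (by simp; omega)
      rw [List.getD_append_right _ _ _ _ (by omega)] at this
      simpa [Nat.add_sub_cancel_left, add_assoc] using this
  · rintro ⟨h1, h2⟩ i hi
    simp only [List.length_append] at hi
    rcases lt_or_ge i u.length with hlt | hge
    · rw [List.getD_append _ _ _ _ hlt]; exact h1 i hlt
    · rw [List.getD_append_right _ _ _ _ hge]
      have := h2 (i - u.length) (by omega)
      rw [← this]; congr 1; omega

lemma matchesAt_replicate {ξ : ℕ → Ω → ℕ} {t : ℕ} {n c : ℕ} {ω : Ω} :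
    matchesAt ξ t (List.replicate n c) ω ↔ ∀ i < n, ξ (t + i) ω = c := by
  constructor
  · intro hm i hi
    have := hm i (by simpa using hi)
    rwa [getD_replicate hi] at this
  · intro hc i hi
    rw [List.length_replicate] at hi
    rw [getD_replicate hi]
    exact hc i hi

lemma length_word1_cons (r a b : ℕ) (l : List (ℕ × ℕ)) :
    (word1 r ((a, b) :: l)).length = a + b + (word1 r l).length := by
  simp [word1_cons]; omega

lemma r_le_length_word1 (r : ℕ) (l : List (ℕ × ℕ)) : r ≤ (word1 r l).length := by
  induction l with
  | nil => simp
  | cons p tl ih => rw [← p.eta, length_word1_cons]; omega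

lemma matchesAt_word1_cons {ξ : ℕ → Ω → ℕ} {t a b r : ℕ} {l : List (ℕ × ℕ)} {ω : Ω} :
    matchesAt ξ t (word1 r ((a, b) :: l)) ω ↔
      (∀ i < a, ξ (t + i) ω = 1) ∧ (∀ i < b, ξ (t + a + i) ω = 0) ∧
        matchesAt ξ (t + a + b) (word1 r l) ω := by
  rw [word1_cons, matchesAt_append, matchesAt_append, matchesAt_replicate,
    matchesAt_replicate, List.length_replicate, List.length_replicate]


variable {Ω : Type*}

lemma word1_head {ξ : ℕ → Ω → ℕ} {t r s : ℕ} {l : List (ℕ × ℕ)} {ω : Ω}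
    (hr : 1 ≤ r) (hg : Good r s l) (hm : matchesAt ξ t (word1 r l) ω) :
    ξ t ω = 1 := by
  cases l with
  | nil =>
    have := (matchesAt_replicate.1 (by simpa using hm)) 0 hr
    simpa using this
  | cons p tl =>
    rw [← p.eta, matchesAt_word1_cons] at hm
    have ha : 1 ≤ p.1 := (hg p (by simp)).1.1
    have := hm.1 0 ha
    simpa using this

lemma word1_final_ones {ξ : ℕ → Ω → ℕ} {t r : ℕ} {l : List (ℕ × ℕ)} {ω : Ω}
    (hm : matchesAt ξ t (word1 r l) ω) :
    ∀ i < r, ξ (t + ((word1 r l).length - 1 - i)) ω = 1 := by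
  induction l generalizing t with
  | nil =>
    intro i hi
    have := (matchesAt_replicate.1 (by simpa using hm)) (r - 1 - i) (by omega)
    simpa using this
  | cons p tl ih =>
    intro i hi
    rw [← p.eta, matchesAt_word1_cons] at hm
    have hL' : r ≤ (word1 r tl).length := r_le_length_word1 r tl
    have := ih hm.2.2 i hi
    rw [← p.eta, length_word1_cons]
    have harith : t + (p.1 + p.2 + (word1 r tl).length - 1 - i)
        = t + p.1 + p.2 + ((word1 r tl).length - 1 - i) := by omega
    rw [harith]
    exact this

lemma word1_no_zero_run {ξ : ℕ → Ω → ℕ} {t r s : ℕ} {l : List (ℕ × ℕ)} {ω : Ω}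
    (hr : 1 ≤ r) (hs : 1 ≤ s) (hg : Good r s l) (hm : matchesAt ξ t (word1 r l) ω) :
    ∀ k, t + s ≤ k → k ≤ t + (word1 r l).length → ∃ i < s, ξ (k - 1 - i) ω = 1 := by
  induction l generalizing t with
  | nil =>
    intro k hk1 hk2
    refine ⟨0, hs, ?_⟩
    simp only [word1_nil, List.length_replicate] at hk2
    have := (matchesAt_replicate.1 (by simpa using hm)) (k - 1 - t) (by omega)
    rw [show t + (k - 1 - t) = k - 1 - 0 by omega] at this
    exact this
  | cons p tl ih =>
    intro k hk1 hk2
    obtain ⟨a, b⟩ := p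
    have hab := hg (a, b) (by simp)
    simp only at hab
    obtain ⟨⟨ha1, ha2⟩, hb1, hb2⟩ := hab
    rw [matchesAt_word1_cons] at hm
    obtain ⟨hones, hzeros, hm'⟩ := hm
    have hgtl : Good r s tl := fun q hq => hg q (by simp [hq])
    rw [length_word1_cons] at hk2
    rcases le_or_gt k (t + a) with hka | hka
    · refine ⟨0, hs, ?_⟩
      have := hones (k - 1 - t) (by omega)
      rw [show t + (k - 1 - t) = k - 1 - 0 by omega] at this
      exact this
    · rcases le_or_gt k (t + a + b) with hkb | hkb
      · refine ⟨k - t - a, by omega, ?_⟩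
        have := hones (a - 1) (by omega)
        rw [show t + (a - 1) = k - 1 - (k - t - a) by omega] at this
        exact this
      · rcases le_or_gt (t + a + b + s) k with hks | hks
        · have := ih hgtl hm' k (by omega) (by omega)
          exact this
        · refine ⟨k - 1 - (t + a + b), by omega, ?_⟩
          have hhead := word1_head hr hgtl hm'
          rw [show k - 1 - (k - 1 - (t + a + b)) = t + a + b by omega]
          exact hhead


variable {Ω : Type*}

lemma word1_unique {ξ : ℕ → Ω → ℕ} {r s : ℕ} (hr : 1 ≤ r) {ω : Ω} :
    ∀ (l l' : List (ℕ × ℕ)) (t : ℕ), Good r s l → Good r s l' →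
      matchesAt ξ t (word1 r l) ω → matchesAt ξ t (word1 r l') ω → l = l' := by
  intro l
  induction l with
  | nil =>
    rintro (_ | ⟨⟨a, b⟩, tl'⟩) t hg hg' hm hm'
    · rfl
    · exfalso
      rw [matchesAt_word1_cons] at hm'
      obtain ⟨⟨ha1, ha2⟩, hb1, _⟩ := hg' (a, b) (by simp)
      have h0 : ξ (t + a + 0) ω = 0 := hm'.2.1 0 hb1
      have h1 : ξ (t + a) ω = 1 :=
        (matchesAt_replicate.1 (by simpa using hm)) a ha2
      rw [add_zero] at h0
      rw [h0] at h1
      exact absurd h1 (by norm_num)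
  | cons p tl ih =>
    rintro (_ | ⟨⟨a', b'⟩, tl'⟩) t hg hg' hm hm'
    · exfalso
      obtain ⟨a, b⟩ := p
      rw [matchesAt_word1_cons] at hm
      obtain ⟨⟨ha1, ha2⟩, hb1, _⟩ := hg (a, b) (by simp)
      have h0 : ξ (t + a + 0) ω = 0 := hm.2.1 0 hb1
      have h1 : ξ (t + a) ω = 1 :=
        (matchesAt_replicate.1 (by simpa using hm')) a ha2
      rw [add_zero] at h0
      rw [h0] at h1
      exact absurd h1 (by norm_num)
    · obtain ⟨a, b⟩ := p
      rw [matchesAt_word1_cons] at hm hm'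
      obtain ⟨⟨ha1, ha2⟩, hb1, hb2⟩ := hg (a, b) (by simp)
      obtain ⟨⟨ha1', ha2'⟩, hb1', hb2'⟩ := hg' (a', b') (by simp)
      have hgtl : Good r s tl := fun q hq => hg q (by simp [hq])
      have hgtl' : Good r s tl' := fun q hq => hg' q (by simp [hq])
      have haa : a = a' := by
        by_contra hne
        rcases lt_or_gt_of_ne hne with hlt | hgt
        · have h1 : ξ (t + a) ω = 1 := hm'.1 a hlt
          have h0 : ξ (t + a + 0) ω = 0 := hm.2.1 0 hb1
          rw [add_zero] at h0; rw [h0] at h1; exact absurd h1 (by norm_num)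
        · have h1 : ξ (t + a') ω = 1 := hm.1 a' hgt
          have h0 : ξ (t + a' + 0) ω = 0 := hm'.2.1 0 hb1'
          rw [add_zero] at h0; rw [h0] at h1; exact absurd h1 (by norm_num)
      subst haa
      have hbb : b = b' := by
        by_contra hne
        rcases lt_or_gt_of_ne hne with hlt | hgt
        · have h1 : ξ (t + a + b) ω = 1 := word1_head hr hgtl hm.2.2
          have h0 : ξ (t + a + b) ω = 0 := hm'.2.1 b hlt
          rw [h0] at h1; exact absurd h1 (by norm_num)
        · have h1 : ξ (t + a + b') ω = 1 := word1_head hr hgtl' hm'.2.2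
          have h0 : ξ (t + a + b') ω = 0 := hm.2.1 b' hgt
          rw [h0] at h1; exact absurd h1 (by norm_num)
      subst hbb
      rw [ih tl' (t + a + b) hgtl hgtl' hm.2.2 hm'.2.2]

lemma decompose {ξ : ℕ → Ω → ℕ} {r s : ℕ} (hr : 1 ≤ r) (hs : 1 ≤ s) {ω : Ω} {m : ℕ}
    (hm_r : r ≤ m)
    (F1 : ∀ i < r, ξ (m - 1 - i) ω = 1)
    (F2 : ∀ k < m, r ≤ k → ¬ ∀ i < r, ξ (k - 1 - i) ω = 1)
    (F3 : ∀ k, s ≤ k → k ≤ m → ¬ ∀ i < s, ξ (k - 1 - i) ω = 0)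
    (h01 : ∀ j, ξ j ω = 0 ∨ ξ j ω = 1) :
    ∀ (n t : ℕ), m - t ≤ n → ξ t ω = 1 → (t = 0 ∨ ξ (t - 1) ω = 0) → t < m →
      ∃ l, Good r s l ∧ t + (word1 r l).length = m ∧ matchesAt ξ t (word1 r l) ω := by
  intro n
  induction n with
  | zero => intro t h1 _ _ h4; omega
  | succ n ih =>
    intro t hle hone hinv htm
    by_cases hA : ∀ i < r, ξ (t + i) ω = 1
    · -- all-ones case
      rcases lt_trichotomy (t + r) m with hlt | heq | hgt
      · exfalso
        refine F2 (t + r) hlt (by omega) fun i hi => ?_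
        have := hA (r - 1 - i) (by omega)
        rwa [show t + (r - 1 - i) = t + r - 1 - i by omega] at this
      · refine ⟨([] : List (ℕ × ℕ)), by intro p hp; simp at hp, by simpa using heq, ?_⟩
        rw [word1_nil, matchesAt_replicate]
        exact hA
      · exfalso
        have ht1 : 1 ≤ t := by omega
        have hinv' : ξ (t - 1) ω = 0 := by rcases hinv with h | h; omega; exact h
        have := F1 (m - 1 - (t - 1)) (by omega)
        rw [show m - 1 - (m - 1 - (t - 1)) = t - 1 by omega] at this
        rw [this] at hinv'
        exact absurd hinv' (by norm_num)
    · -- there is a zero among the next r trials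
      push_neg at hA
      have hex : ∃ j, ξ (t + j) ω = 0 ∧ j < r := by
        obtain ⟨j, hj, hne⟩ := hA
        exact ⟨j, (h01 (t + j)).resolve_right hne, hj⟩
      classical
      set a := Nat.find hex with ha_def
      obtain ⟨ha0, har⟩ : ξ (t + a) ω = 0 ∧ a < r := Nat.find_spec hex
      have hones : ∀ j < a, ξ (t + j) ω = 1 := by
        intro j hj
        have := Nat.find_min hex hj
        rcases h01 (t + j) with h | h
        · exact absurd ⟨h, by omega⟩ this
        · exact h
      have ha1 : 1 ≤ a := by
        rcases Nat.eq_zero_or_pos a with h | h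
        · rw [h, add_zero] at ha0; rw [ha0] at hone; exact absurd hone (by norm_num)
        · exact h
      -- t + a is strictly before the final block: t + a + r ≤ m
      have htar : t + a + r ≤ m := by
        by_contra hc
        push_neg at hc
        -- then t + a ≥ m - r
        rcases le_or_gt m (t + a) with hge | hlt2
        · -- t + a ≥ m: use invariant to find a one at t - 1 inside final block
          have ht1 : 1 ≤ t := by
            rcases Nat.eq_zero_or_pos t with h | h
            · omega
            · exact h
          have hinv' : ξ (t - 1) ω = 0 := by rcases hinv with h | h; omega; exact h
          have := F1 (m - 1 - (t - 1)) (by omega)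
          rw [show m - 1 - (m - 1 - (t - 1)) = t - 1 by omega] at this
          rw [this] at hinv'; exact absurd hinv' (by norm_num)
        · have := F1 (m - 1 - (t + a)) (by omega)
          rw [show m - 1 - (m - 1 - (t + a)) = t + a by omega] at this
          rw [this] at ha0; exact absurd ha0 (by norm_num)
      -- zeros cannot extend s long
      have hexb : ∃ i, ξ (t + a + i) ω = 1 ∧ i < s := by
        by_contra hc
        push_neg at hc
        have hzeros : ∀ i < s, ξ (t + a + i) ω = 0 := by
          intro i hi
          rcases h01 (t + a + i) with h | h
          · exact h
          · exact absurd h (by intro hh; exact absurd hi (by simpa using (hc i hh)))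
        have hsm : t + a + s ≤ m := by
          by_contra hc2
          push_neg at hc2
          have h0 : ξ (m - r) ω = 0 := by
            have := hzeros (m - r - (t + a)) (by omega)
            rwa [show t + a + (m - r - (t + a)) = m - r by omega] at this
          have h1 : ξ (m - 1 - (r - 1)) ω = 1 := F1 (r - 1) (by omega)
          rw [show m - 1 - (r - 1) = m - r by omega] at h1
          rw [h0] at h1; exact absurd h1 (by norm_num)
        refine F3 (t + a + s) (by omega) hsm fun i hi => ?_
        have := hzeros (s - 1 - i) (by omega)
        rwa [show t + a + (s - 1 - i) = t + a + s - 1 - i by omega] at this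
      set b := Nat.find hexb with hb_def
      obtain ⟨hb1v, hbs⟩ : ξ (t + a + b) ω = 1 ∧ b < s := Nat.find_spec hexb
      have hzerosb : ∀ i < b, ξ (t + a + i) ω = 0 := by
        intro i hi
        have := Nat.find_min hexb hi
        rcases h01 (t + a + i) with h | h
        · exact h
        · exact absurd ⟨h, by omega⟩ this
      have hb1 : 1 ≤ b := by
        rcases Nat.eq_zero_or_pos b with h | h
        · rw [h, add_zero] at hb1v; rw [hb1v] at ha0; exact absurd ha0 one_ne_zero
        · exact h
      -- the new start t' = t + a + b satisfies t' ≤ m - r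
      have htb : t + a + b + r ≤ m := by
        by_contra hc
        push_neg at hc
        -- position t + a + b - 1 is a zero inside or beyond final block
        have h0 : ξ (t + a + b - 1) ω = 0 := by
          have := hzerosb (b - 1) (by omega)
          rwa [show t + a + (b - 1) = t + a + b - 1 by omega] at this
        rcases le_or_gt m (t + a + b - 1 + 1) with hge | hlt2
        · -- m - 1 lies in the zero block [t+a, t+a+b)
          have h0' : ξ (m - 1) ω = 0 := by
            rcases le_or_gt (t + a + b) (m - 1) with h | h
            ·
              omega
            · have := hzerosb (m - 1 - (t + a)) (by omega)
              rwa [show t + a + (m - 1 - (t + a)) = m - 1 by omega] at this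
          have h1 : ξ (m - 1 - 0) ω = 1 := F1 0 (by omega)
          rw [Nat.sub_zero] at h1
          rw [h0'] at h1; exact absurd h1 (by norm_num)
        · have h1 : ξ (m - 1 - (m - 1 - (t + a + b - 1))) ω = 1 :=
            F1 (m - 1 - (t + a + b - 1)) (by omega)
          rw [show m - 1 - (m - 1 - (t + a + b - 1)) = t + a + b - 1 by omega] at h1
          rw [h0] at h1; exact absurd h1 (by norm_num)
      obtain ⟨l, hgl, hlen, hmatch⟩ := ih (t + a + b) (by omega) hb1v
        (Or.inr (by rw [show t + a + b - 1 = t + a + (b - 1) by omega]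
                    exact hzerosb (b - 1) (by omega)))
        (by omega)
      refine ⟨(a, b) :: l, ?_, ?_, ?_⟩
      · rintro p hp
        rcases List.mem_cons.1 hp with h | h
        · rw [h]; exact ⟨⟨ha1, har⟩, hb1, hbs⟩
        · exact hgl p h
      · rw [length_word1_cons]; omega
      · rw [matchesAt_word1_cons]
        exact ⟨hones, hzerosb, hmatch⟩




lemma tsum_pi_fin_prod {α : Type*} (f : α → ℝ≥0∞) :
    ∀ k : ℕ, ∑' x : Fin k → α, ∏ i, f (x i) = (∑' x : α, f x) ^ k := by
  intro k
  induction k with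
  | zero =>
    rw [pow_zero]
    rw [tsum_eq_single (fun i => i.elim0) (by
      intro b hb
      exact absurd (funext fun i => i.elim0) (Ne.symm hb))]
    simp
  | succ n ih =>
    rw [← (Fin.consEquiv (fun _ => α)).tsum_eq (fun x : Fin (n+1) → α => ∏ i, f (x i))]
    have : ∀ p : α × (Fin n → α),
        (∏ i, f ((Fin.consEquiv (fun _ => α)) p i)) = f p.1 * ∏ i, f (p.2 i) := by
      rintro ⟨a, g⟩
      simp only [Fin.consEquiv_apply]
      rw [Fin.prod_univ_succ]
      simp [Fin.cons_succ]
    simp only [this]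
    rw [ENNReal.tsum_prod']
    simp only [ENNReal.tsum_mul_left]
    rw [ENNReal.tsum_mul_right, ih, pow_succ, mul_comm]

lemma tsum_list_prod {α : Type*} (f : α → ℝ≥0∞) :
    ∑' l : List α, (l.map f).prod = ∑' k : ℕ, (∑' x : α, f x) ^ k := by
  rw [← List.equivSigmaTuple.symm.tsum_eq (fun l : List α => (l.map f).prod)]
  have : ∀ p : Σ n, Fin n → α,
      ((List.equivSigmaTuple.symm p).map f).prod = ∏ i, f (p.2 i) := by
    rintro ⟨n, x⟩
    show ((List.ofFn x).map f).prod = _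
    rw [List.map_ofFn, List.prod_ofFn]
    rfl
  simp only [this]
  rw [ENNReal.tsum_sigma']
  congr 1
  ext k
  exact tsum_pi_fin_prod f k



lemma prod_range_getD (g : ℕ → ℝ≥0∞) (w : List ℕ) :
    ∏ i ∈ Finset.range w.length, g (w.getD i 0) = (w.map g).prod := by
  induction w with
  | nil => simp
  | cons x tl ih =>
    rw [List.length_cons, Finset.prod_range_succ', List.map_cons, List.prod_cons]
    simp only [List.getD_cons_succ, List.getD_cons_zero]
    rw [ih, mul_comm]

lemma measure_matchesAt {Ω : Type*} [MeasurableSpace Ω] {P : Measure Ω}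
    [IsProbabilityMeasure P] {h : ℝ} {ξ : ℕ → Ω → ℕ}
    (h_indep : iIndepFun ξ P)
    (h_one : ∀ n, P {ω | ξ n ω = 1} = ENNReal.ofReal h)
    (h_zero : ∀ n, P {ω | ξ n ω = 0} = ENNReal.ofReal (1 - h))
    (t : ℕ) (w : List ℕ) (hw : ∀ x ∈ w, x = 0 ∨ x = 1) :
    P {ω | matchesAt ξ t w ω}
      = (w.map fun x => if x = 1 then ENNReal.ofReal h else ENNReal.ofReal (1 - h)).prod := by
  have hset : {ω | matchesAt ξ t w ω}
      = ⋂ j ∈ Finset.Ico t (t + w.length), ξ j ⁻¹' {w.getD (j - t) 0} := by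
    ext ω
    simp only [Set.mem_setOf_eq, Set.mem_iInter, Finset.mem_Ico, Set.mem_preimage,
      Set.mem_singleton_iff, matchesAt]
    constructor
    · rintro hm j ⟨hj1, hj2⟩
      have := hm (j - t) (by omega)
      rwa [show t + (j - t) = j by omega] at this
    · intro hm i hi
      have := hm (t + i) ⟨by omega, by omega⟩
      rwa [Nat.add_sub_cancel_left] at this
  rw [hset,
    h_indep.meas_biInter (fun j _ => ⟨{w.getD (j - t) 0}, measurableSet_singleton _, rfl⟩),
    Finset.prod_Ico_eq_prod_range]
  simp only [Nat.add_sub_cancel_left, Nat.add_sub_cancel]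
  rw [← prod_range_getD]
  apply Finset.prod_congr rfl
  intro i hi
  rw [Finset.mem_range] at hi
  have hpre : ∀ j (x : ℕ), ξ j ⁻¹' {x} = {ω | ξ j ω = x} := fun j x => rfl
  have hmem : w.getD i 0 ∈ w := by
    rw [List.getD_eq_getElem w 0 hi]
    exact List.getElem_mem hi
  rcases hw (w.getD i 0) hmem with h0 | h1
  · rw [hpre, h0, h_zero]
    norm_num
  · rw [hpre, h1, h_one]
    norm_num


-- ## word0 and further lemmas

def word0 (r b : ℕ) (l : List (ℕ × ℕ)) : List ℕ := List.replicate b 0 ++ word1 r l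

lemma matchesAt_word0 {Ω : Type*} {ξ : ℕ → Ω → ℕ} {t r b : ℕ} {l : List (ℕ × ℕ)} {ω : Ω} :
    matchesAt ξ t (word0 r b l) ω ↔
      (∀ i < b, ξ (t + i) ω = 0) ∧ matchesAt ξ (t + b) (word1 r l) ω := by
  rw [word0, matchesAt_append, matchesAt_replicate, List.length_replicate]

lemma measurableSet_matchesAt {Ω : Type*} [MeasurableSpace Ω] {ξ : ℕ → Ω → ℕ}
    (h_meas : ∀ n, Measurable (ξ n)) (t : ℕ) (w : List ℕ) :
    MeasurableSet {ω | matchesAt ξ t w ω} := by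
  have : {ω | matchesAt ξ t w ω}
      = ⋂ i, ⋂ (_ : i < w.length), ξ (t + i) ⁻¹' {w.getD i 0} := by
    ext ω
    simp only [Set.mem_setOf_eq, Set.mem_iInter, Set.mem_preimage, Set.mem_singleton_iff,
      matchesAt]
  rw [this]
  exact MeasurableSet.iInter fun i => MeasurableSet.iInter fun _ =>
    (h_meas (t + i)) (measurableSet_singleton _)

lemma word1_mem {r s : ℕ} (hr : 1 ≤ r) : ∀ (l : List (ℕ × ℕ)), Good r s l →
    ∀ x ∈ word1 r l, x = 0 ∨ x = 1 := by
  intro l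
  induction l with
  | nil =>
    intro _ x hx
    right
    simpa using List.eq_of_mem_replicate (by simpa using hx)
  | cons p tl ih =>
    intro hg x hx
    rw [← p.eta, word1_cons] at hx
    rcases List.mem_append.1 hx with h | h
    · right; exact List.eq_of_mem_replicate h
    · rcases List.mem_append.1 h with h2 | h2
      · left; exact List.eq_of_mem_replicate h2
      · exact ih (fun q hq => hg q (by simp [hq])) x h2

lemma word0_mem {r s : ℕ} (hr : 1 ≤ r) (b : ℕ) (l : List (ℕ × ℕ)) (hg : Good r s l) :
    ∀ x ∈ word0 r b l, x = 0 ∨ x = 1 := by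
  intro x hx
  rcases List.mem_append.1 hx with h | h
  · left; exact List.eq_of_mem_replicate h
  · exact word1_mem hr l hg x h

lemma word1_prod {r : ℕ} (X Y : ℝ≥0∞) : ∀ (l : List (ℕ × ℕ)),
    ((word1 r l).map fun x => if x = 1 then X else Y).prod
      = (l.map fun p => X ^ p.1 * Y ^ p.2).prod * X ^ r := by
  intro l
  induction l with
  | nil => simp
  | cons p tl ih =>
    rw [← p.eta, word1_cons]
    simp only [List.map_append, List.prod_append, List.map_replicate, List.prod_replicate,
      List.map_cons, List.prod_cons]
    rw [ih]
    norm_num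
    ring

lemma word0_prod {r : ℕ} (X Y : ℝ≥0∞) (b : ℕ) (l : List (ℕ × ℕ)) :
    ((word0 r b l).map fun x => if x = 1 then X else Y).prod
      = Y ^ b * (((word1 r l).map fun x => if x = 1 then X else Y).prod) := by
  rw [word0, List.map_append, List.prod_append, List.map_replicate, List.prod_replicate]
  norm_num

lemma if_good_prod {r s : ℕ} (u : ℕ × ℕ → ℝ≥0∞) : ∀ (l : List (ℕ × ℕ)),
    (if Good r s l then (l.map u).prod else 0)
      = (l.map fun p => if (1 ≤ p.1 ∧ p.1 < r) ∧ (1 ≤ p.2 ∧ p.2 < s) then u p else 0).prod := by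
  intro l
  induction l with
  | nil => simp [Good]
  | cons p tl ih =>
    have hiff : Good r s (p :: tl)
        ↔ ((1 ≤ p.1 ∧ p.1 < r) ∧ (1 ≤ p.2 ∧ p.2 < s)) ∧ Good r s tl := by
      unfold Good
      rw [List.forall_mem_cons]
    simp only [List.map_cons, List.prod_cons, ← ih]
    by_cases h1 : (1 ≤ p.1 ∧ p.1 < r) ∧ (1 ≤ p.2 ∧ p.2 < s) <;>
      by_cases h2 : Good r s tl <;>
      simp [hiff, h1, h2]

-- backward inclusions
lemma subset_win1 {Ω : Type*} {ξ : ℕ → Ω → ℕ} {r s : ℕ} (hr : 1 ≤ r) (hs : 1 ≤ s)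
    {l : List (ℕ × ℕ)} (hg : Good r s l) {ω : Ω} (hm : matchesAt ξ 0 (word1 r l) ω) :
    ξ 0 ω = 1 ∧ runTime ξ r 1 ω < runTime ξ s 0 ω := by
  refine ⟨word1_head hr hg hm, ?_⟩
  rw [runTime_lt_iff]
  refine ⟨(word1 r l).length, ⟨r_le_length_word1 r l, fun i hi => ?_⟩, fun k hk1 hk2 hall => ?_⟩
  · have := word1_final_ones hm i hi
    rwa [zero_add] at this
  · obtain ⟨i, his, hone⟩ := word1_no_zero_run hr hs hg hm k (by omega) (by omega)
    rw [hall i his] at hone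
    exact absurd hone (by norm_num)

lemma subset_win0 {Ω : Type*} {ξ : ℕ → Ω → ℕ} {r s : ℕ} (hr : 1 ≤ r) (hs : 1 ≤ s)
    {b : ℕ} (hb1 : 1 ≤ b) (hbs : b < s)
    {l : List (ℕ × ℕ)} (hg : Good r s l) {ω : Ω} (hm : matchesAt ξ 0 (word0 r b l) ω) :
    ξ 0 ω = 0 ∧ runTime ξ r 1 ω < runTime ξ s 0 ω := by
  rw [matchesAt_word0, zero_add] at hm
  obtain ⟨hzeros, hm1⟩ := hm
  have hL1 : r ≤ (word1 r l).length := r_le_length_word1 r l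
  constructor
  · have := hzeros 0 hb1
    rwa [zero_add] at this
  · rw [runTime_lt_iff]
    refine ⟨b + (word1 r l).length, ⟨by omega, fun i hi => ?_⟩, fun k hk1 hk2 hall => ?_⟩
    · have := word1_final_ones hm1 i hi
      rwa [show b + ((word1 r l).length - 1 - i) = b + (word1 r l).length - 1 - i by omega]
        at this
    · rcases le_or_gt (b + s) k with hks | hks
      · obtain ⟨i, his, hone⟩ := word1_no_zero_run hr hs hg hm1 k (by omega) (by omega)
        rw [hall i his] at hone
        exact absurd hone (by norm_num)
      · have hhead : ξ b ω = 1 := word1_head hr hg hm1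
        have hidx : k - 1 - (k - 1 - b) = b := by omega
        have := hall (k - 1 - b) (by omega)
        rw [hidx, hhead] at this
        exact absurd this (by norm_num)

-- uniqueness for word0 parameters
lemma word0_unique {Ω : Type*} {ξ : ℕ → Ω → ℕ} {r s : ℕ} (hr : 1 ≤ r) {ω : Ω}
    {b b' : ℕ} (hb1 : 1 ≤ b) (hb1' : 1 ≤ b') {l l' : List (ℕ × ℕ)}
    (hg : Good r s l) (hg' : Good r s l')
    (hm : matchesAt ξ 0 (word0 r b l) ω) (hm' : matchesAt ξ 0 (word0 r b' l') ω) :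
    b = b' ∧ l = l' := by
  rw [matchesAt_word0, zero_add] at hm hm'
  have hbb : b = b' := by
    by_contra hne
    rcases lt_or_gt_of_ne hne with hlt | hgt
    · have h1 : ξ b ω = 1 := word1_head hr hg hm.2
      have h0 : ξ (0 + b) ω = 0 := hm'.1 b hlt
      rw [zero_add] at h0
      rw [h0] at h1; exact absurd h1 (by norm_num)
    · have h1 : ξ b' ω = 1 := word1_head hr hg' hm'.2
      have h0 : ξ (0 + b') ω = 0 := hm.1 b' hgt
      rw [zero_add] at h0
      rw [h0] at h1; exact absurd h1 (by norm_num)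
  subst hbb
  exact ⟨rfl, word1_unique hr l l' b hg hg' hm.2 hm'.2⟩

-- forward decompositions
lemma win1_exists {Ω : Type*} {ξ : ℕ → Ω → ℕ} {r s : ℕ} (hr : 1 ≤ r) (hs : 1 ≤ s) {ω : Ω}
    (h01 : ∀ j, ξ j ω = 0 ∨ ξ j ω = 1) (hξ0 : ξ 0 ω = 1)
    (hlt : runTime ξ r 1 ω < runTime ξ s 0 ω) :
    ∃ l, Good r s l ∧ matchesAt ξ 0 (word1 r l) ω := by
  classical
  obtain ⟨m', ⟨hm'r, hm'ones⟩, hB'⟩ := (runTime_lt_iff ξ r s ω).1 hlt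
  have hexQ : ∃ m, r ≤ m ∧ ∀ i < r, ξ (m - 1 - i) ω = 1 := ⟨m', hm'r, hm'ones⟩
  set m := Nat.find hexQ with hm_def
  obtain ⟨hm_r, F1⟩ := Nat.find_spec hexQ
  have hm_le : m ≤ m' := Nat.find_min' hexQ ⟨hm'r, hm'ones⟩
  have F2 : ∀ k < m, r ≤ k → ¬ ∀ i < r, ξ (k - 1 - i) ω = 1 :=
    fun k hk hrk hall => Nat.find_min hexQ hk ⟨hrk, hall⟩
  have F3 : ∀ k, s ≤ k → k ≤ m → ¬ ∀ i < s, ξ (k - 1 - i) ω = 0 :=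
    fun k hk1 hk2 => hB' k hk1 (le_trans hk2 hm_le)
  obtain ⟨l, hgl, _, hmatch⟩ := decompose hr hs hm_r F1 F2 F3 h01 m 0 (by omega) hξ0
    (Or.inl rfl) (by omega)
  exact ⟨l, hgl, hmatch⟩

lemma win0_exists {Ω : Type*} {ξ : ℕ → Ω → ℕ} {r s : ℕ} (hr : 1 ≤ r) (hs : 1 ≤ s) {ω : Ω}
    (h01 : ∀ j, ξ j ω = 0 ∨ ξ j ω = 1) (hξ0 : ξ 0 ω = 0)
    (hlt : runTime ξ r 1 ω < runTime ξ s 0 ω) :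
    ∃ b l, 1 ≤ b ∧ b < s ∧ Good r s l ∧ matchesAt ξ 0 (word0 r b l) ω := by
  classical
  obtain ⟨m', ⟨hm'r, hm'ones⟩, hB'⟩ := (runTime_lt_iff ξ r s ω).1 hlt
  have hexQ : ∃ m, r ≤ m ∧ ∀ i < r, ξ (m - 1 - i) ω = 1 := ⟨m', hm'r, hm'ones⟩
  set m := Nat.find hexQ with hm_def
  obtain ⟨hm_r, F1⟩ := Nat.find_spec hexQ
  have hm_le : m ≤ m' := Nat.find_min' hexQ ⟨hm'r, hm'ones⟩
  have F2 : ∀ k < m, r ≤ k → ¬ ∀ i < r, ξ (k - 1 - i) ω = 1 :=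
    fun k hk hrk hall => Nat.find_min hexQ hk ⟨hrk, hall⟩
  have F3 : ∀ k, s ≤ k → k ≤ m → ¬ ∀ i < s, ξ (k - 1 - i) ω = 0 :=
    fun k hk1 hk2 => hB' k hk1 (le_trans hk2 hm_le)
  -- first one
  have hm1 : ξ (m - 1) ω = 1 := by
    have := F1 0 (by omega)
    rwa [Nat.sub_zero] at this
  have hexB : ∃ j, ξ j ω = 1 := ⟨m - 1, hm1⟩
  set b := Nat.find hexB with hb_def
  have hbspec : ξ b ω = 1 := Nat.find_spec hexB
  have hzeros : ∀ j < b, ξ j ω = 0 := by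
    intro j hj
    rcases h01 j with h | h
    · exact h
    · exact absurd h (Nat.find_min hexB hj)
  have hb1 : 1 ≤ b := by
    rcases Nat.eq_zero_or_pos b with h | h
    · rw [h] at hbspec; rw [hξ0] at hbspec; exact absurd hbspec (by norm_num)
    · exact h
  have hbm : b ≤ m - 1 := Nat.find_min' hexB hm1
  have hbs : b < s := by
    by_contra hc
    push_neg at hc
    rcases le_or_gt s m with hsm | hsm
    · refine F3 s le_rfl hsm fun i hi => hzeros (s - 1 - i) (by omega)
    · have : ξ (m - 1) ω = 0 := hzeros (m - 1) (by omega)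
      rw [hm1] at this; exact absurd this (by norm_num)
  obtain ⟨l, hgl, _, hmatch⟩ := decompose hr hs hm_r F1 F2 F3 h01 m b (by omega) hbspec
    (Or.inr (hzeros (b - 1) (by omega))) (by omega)
  refine ⟨b, l, hb1, hbs, hgl, ?_⟩
  rw [matchesAt_word0, zero_add]
  exact ⟨fun i hi => by rw [zero_add]; exact hzeros i hi, hmatch⟩

-- the box sum
lemma tsum_box (r s : ℕ) (X Y : ℝ≥0∞) :
    ∑' p : ℕ × ℕ, (if (1 ≤ p.1 ∧ p.1 < r) ∧ (1 ≤ p.2 ∧ p.2 < s)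
        then X ^ p.1 * Y ^ p.2 else 0)
      = (∑ a ∈ Finset.Ico 1 r, X ^ a) * (∑ b ∈ Finset.Ico 1 s, Y ^ b) := by
  have hfac : ∀ p : ℕ × ℕ, (if (1 ≤ p.1 ∧ p.1 < r) ∧ (1 ≤ p.2 ∧ p.2 < s)
        then X ^ p.1 * Y ^ p.2 else 0)
      = (if 1 ≤ p.1 ∧ p.1 < r then X ^ p.1 else 0)
        * (if 1 ≤ p.2 ∧ p.2 < s then Y ^ p.2 else 0) := by
    rintro ⟨a, b⟩
    by_cases h1 : 1 ≤ a ∧ a < r <;> by_cases h2 : 1 ≤ b ∧ b < s <;> simp [h1, h2]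
  simp only [hfac]
  rw [ENNReal.tsum_prod']
  simp only [ENNReal.tsum_mul_left]
  rw [ENNReal.tsum_mul_right]
  congr 1
  · rw [tsum_eq_sum (s := Finset.Ico 1 r)
      (fun a ha => if_neg (by rw [Finset.mem_Ico] at ha; exact ha))]
    exact Finset.sum_congr rfl fun a ha => if_pos (Finset.mem_Ico.1 ha)
  · rw [tsum_eq_sum (s := Finset.Ico 1 s)
      (fun b hb => if_neg (by rw [Finset.mem_Ico] at hb; exact hb))]
    exact Finset.sum_congr rfl fun b hb => if_pos (Finset.mem_Ico.1 hb)

section Measures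

variable {Ω : Type*} [MeasurableSpace Ω] (P : Measure Ω) [IsProbabilityMeasure P]
  {h : ℝ} {ξ : ℕ → Ω → ℕ}

lemma ae01 (h_pos : 0 < h) (h_lt : h < 1) (h_meas : ∀ n, Measurable (ξ n))
    (h_one : ∀ n, P {ω | ξ n ω = 1} = ENNReal.ofReal h)
    (h_zero : ∀ n, P {ω | ξ n ω = 0} = ENNReal.ofReal (1 - h)) :
    P {ω | ∀ n, ξ n ω = 0 ∨ ξ n ω = 1}ᶜ = 0 := by
  have hsetc : {ω | ∀ n, ξ n ω = 0 ∨ ξ n ω = 1}ᶜ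
      = ⋃ n, ({ω | ξ n ω = 0} ∪ {ω | ξ n ω = 1})ᶜ := by
    ext ω
    simp [Set.mem_iUnion, not_forall]
  rw [hsetc]
  refine measure_iUnion_null fun n => ?_
  have hmeasset : MeasurableSet ({ω | ξ n ω = 0} ∪ {ω | ξ n ω = 1}) :=
    ((h_meas n) (measurableSet_singleton 0)).union ((h_meas n) (measurableSet_singleton 1))
  rw [prob_compl_eq_zero_iff hmeasset]
  rw [measure_union ?hd (show MeasurableSet {ω | ξ n ω = 1} from (h_meas n) (measurableSet_singleton 1))]
  case hd =>
    rw [Set.disjoint_left]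
    rintro ω h0 h1
    simp only [Set.mem_setOf_eq] at h0 h1
    rw [h0] at h1
    exact absurd h1 (by norm_num)
  rw [h_zero n, h_one n, ← ENNReal.ofReal_add (by linarith) (by linarith)]
  norm_num

lemma measure_win1 (h_pos : 0 < h) (h_lt : h < 1) (h_meas : ∀ n, Measurable (ξ n))
    (h_indep : iIndepFun ξ P)
    (h_one : ∀ n, P {ω | ξ n ω = 1} = ENNReal.ofReal h)
    (h_zero : ∀ n, P {ω | ξ n ω = 0} = ENNReal.ofReal (1 - h))
    (r s : ℕ) (hr : 1 ≤ r) (hs : 1 ≤ s) :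
    P ({ω | ξ 0 ω = 1} ∩ {ω | runTime ξ r 1 ω < runTime ξ s 0 ω})
      = (ENNReal.ofReal h) ^ r *
        (1 - (∑ a ∈ Finset.Ico 1 r, (ENNReal.ofReal h) ^ a)
          * (∑ b ∈ Finset.Ico 1 s, (ENNReal.ofReal (1 - h)) ^ b))⁻¹ := by
  classical
  set X := ENNReal.ofReal h with hX
  set Y := ENNReal.ofReal (1 - h) with hY
  set W := {ω | runTime ξ r 1 ω < runTime ξ s 0 ω} with hW
  set E : Set Ω := {ω | ξ 0 ω = 1} with hE
  set G : Set Ω := {ω | ∀ n, ξ n ω = 0 ∨ ξ n ω = 1} with hG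
  set U : List (ℕ × ℕ) → Set Ω :=
    fun l => if Good r s l then {ω | matchesAt ξ 0 (word1 r l) ω} else ∅ with hU
  have hUm : ∀ l, MeasurableSet (U l) := by
    intro l
    simp only [hU]
    split
    · exact measurableSet_matchesAt h_meas 0 (word1 r l)
    · exact MeasurableSet.empty
  have hdisj : Pairwise (Function.onFun Disjoint U) := by
    intro l l' hne
    rw [Function.onFun, Set.disjoint_left]
    intro ω hωl hωl'
    simp only [hU] at hωl hωl'
    by_cases hg : Good r s l
    · by_cases hg' : Good r s l'
      · rw [if_pos hg] at hωl
        rw [if_pos hg'] at hωl'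
        exact hne (word1_unique hr l l' 0 hg hg' hωl hωl')
      · rw [if_neg hg'] at hωl'; exact hωl'
    · rw [if_neg hg] at hωl; exact hωl
  have hsub : ∀ l, U l ⊆ E ∩ W := by
    intro l ω hω
    simp only [hU] at hω
    by_cases hg : Good r s l
    · rw [if_pos hg] at hω
      obtain ⟨h1, h2⟩ := subset_win1 hr hs hg hω
      exact ⟨h1, h2⟩
    · rw [if_neg hg] at hω; exact hω.elim
  have hsup : E ∩ W ⊆ (⋃ l, U l) ∪ Gᶜ := by
    rintro ω ⟨hωE, hωW⟩
    by_cases hωG : ω ∈ G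
    · left
      obtain ⟨l, hgl, hmatch⟩ := win1_exists hr hs hωG hωE hωW
      exact Set.mem_iUnion.2 ⟨l, by simp only [hU, if_pos hgl]; exact hmatch⟩
    · right; exact hωG
  have hPeq : P (E ∩ W) = ∑' l, P (U l) := by
    apply le_antisymm
    · calc P (E ∩ W) ≤ P ((⋃ l, U l) ∪ Gᶜ) := measure_mono hsup
        _ ≤ P (⋃ l, U l) + P Gᶜ := measure_union_le _ _
        _ = P (⋃ l, U l) := by
            rw [ae01 P h_pos h_lt h_meas h_one h_zero, add_zero]
        _ = ∑' l, P (U l) := measure_iUnion hdisj hUm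
    · rw [← measure_iUnion hdisj hUm]
      exact measure_mono (Set.iUnion_subset hsub)
  have hPU : ∀ l, P (U l) =
      (l.map fun p => if (1 ≤ p.1 ∧ p.1 < r) ∧ (1 ≤ p.2 ∧ p.2 < s)
        then X ^ p.1 * Y ^ p.2 else 0).prod * X ^ r := by
    intro l
    rw [← if_good_prod]
    by_cases hg : Good r s l
    · simp only [hU]
      simp only [if_pos hg]
      rw [measure_matchesAt h_indep h_one h_zero 0 (word1 r l) (word1_mem hr l hg)]
      rw [word1_prod X Y l]
    · simp only [hU]
      simp only [if_neg hg]
      rw [measure_empty, zero_mul]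
  rw [hPeq]
  simp only [hPU]
  rw [ENNReal.tsum_mul_right, tsum_list_prod, ← tsum_box r s X Y, ENNReal.tsum_geometric]
  rw [mul_comm]

lemma measure_win0 (h_pos : 0 < h) (h_lt : h < 1) (h_meas : ∀ n, Measurable (ξ n))
    (h_indep : iIndepFun ξ P)
    (h_one : ∀ n, P {ω | ξ n ω = 1} = ENNReal.ofReal h)
    (h_zero : ∀ n, P {ω | ξ n ω = 0} = ENNReal.ofReal (1 - h))
    (r s : ℕ) (hr : 1 ≤ r) (hs : 1 ≤ s) :
    P ({ω | ξ 0 ω = 0} ∩ {ω | runTime ξ r 1 ω < runTime ξ s 0 ω})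
      = (∑ b ∈ Finset.Ico 1 s, (ENNReal.ofReal (1 - h)) ^ b) * ((ENNReal.ofReal h) ^ r *
        (1 - (∑ a ∈ Finset.Ico 1 r, (ENNReal.ofReal h) ^ a)
          * (∑ b ∈ Finset.Ico 1 s, (ENNReal.ofReal (1 - h)) ^ b))⁻¹) := by
  classical
  set X := ENNReal.ofReal h with hX
  set Y := ENNReal.ofReal (1 - h) with hY
  set W := {ω | runTime ξ r 1 ω < runTime ξ s 0 ω} with hW
  set E : Set Ω := {ω | ξ 0 ω = 0} with hE
  set G : Set Ω := {ω | ∀ n, ξ n ω = 0 ∨ ξ n ω = 1} with hG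
  set U : ℕ × List (ℕ × ℕ) → Set Ω :=
    fun p => if (1 ≤ p.1 ∧ p.1 < s) ∧ Good r s p.2
      then {ω | matchesAt ξ 0 (word0 r p.1 p.2) ω} else ∅ with hU
  have hUm : ∀ p, MeasurableSet (U p) := by
    intro p
    simp only [hU]
    split
    · exact measurableSet_matchesAt h_meas 0 _
    · exact MeasurableSet.empty
  have hdisj : Pairwise (Function.onFun Disjoint U) := by
    intro p p' hne
    rw [Function.onFun, Set.disjoint_left]
    intro ω hωl hωl'
    simp only [hU] at hωl hωl'
    by_cases hg : (1 ≤ p.1 ∧ p.1 < s) ∧ Good r s p.2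
    · by_cases hg' : (1 ≤ p'.1 ∧ p'.1 < s) ∧ Good r s p'.2
      · rw [if_pos hg] at hωl
        rw [if_pos hg'] at hωl'
        obtain ⟨hb, hl⟩ := word0_unique hr hg.1.1 hg'.1.1 hg.2 hg'.2 hωl hωl'
        exact hne (Prod.ext hb hl)
      · rw [if_neg hg'] at hωl'; exact hωl'
    · rw [if_neg hg] at hωl; exact hωl
  have hsub : ∀ p, U p ⊆ E ∩ W := by
    intro p ω hω
    simp only [hU] at hω
    by_cases hg : (1 ≤ p.1 ∧ p.1 < s) ∧ Good r s p.2
    · rw [if_pos hg] at hω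
      obtain ⟨h1, h2⟩ := subset_win0 hr hs hg.1.1 hg.1.2 hg.2 hω
      exact ⟨h1, h2⟩
    · rw [if_neg hg] at hω; exact hω.elim
  have hsup : E ∩ W ⊆ (⋃ p, U p) ∪ Gᶜ := by
    rintro ω ⟨hωE, hωW⟩
    by_cases hωG : ω ∈ G
    · left
      obtain ⟨b, l, hb1, hbs, hgl, hmatch⟩ := win0_exists hr hs hωG hωE hωW
      exact Set.mem_iUnion.2 ⟨(b, l), by
        simp only [hU, if_pos (show (1 ≤ b ∧ b < s) ∧ Good r s l from ⟨⟨hb1, hbs⟩, hgl⟩)]; exact hmatch⟩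
    · right; exact hωG
  have hPeq : P (E ∩ W) = ∑' p, P (U p) := by
    apply le_antisymm
    · calc P (E ∩ W) ≤ P ((⋃ p, U p) ∪ Gᶜ) := measure_mono hsup
        _ ≤ P (⋃ p, U p) + P Gᶜ := measure_union_le _ _
        _ = P (⋃ p, U p) := by
            rw [ae01 P h_pos h_lt h_meas h_one h_zero, add_zero]
        _ = ∑' p, P (U p) := measure_iUnion hdisj hUm
    · rw [← measure_iUnion hdisj hUm]
      exact measure_mono (Set.iUnion_subset hsub)
  have hPU : ∀ p : ℕ × List (ℕ × ℕ), P (U p) =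
      (if 1 ≤ p.1 ∧ p.1 < s then Y ^ p.1 else 0) *
      ((p.2.map fun q => if (1 ≤ q.1 ∧ q.1 < r) ∧ (1 ≤ q.2 ∧ q.2 < s)
        then X ^ q.1 * Y ^ q.2 else 0).prod * X ^ r) := by
    rintro ⟨b, l⟩
    simp only
    rw [← if_good_prod]
    by_cases hb : 1 ≤ b ∧ b < s
    · by_cases hg : Good r s l
      · simp only [hU]
        simp only [if_pos (And.intro hb hg), if_pos hb, if_pos hg]
        rw [measure_matchesAt h_indep h_one h_zero 0 (word0 r b l) (word0_mem hr b l hg)]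
        rw [word0_prod X Y b l, word1_prod X Y l]
      · simp only [hU]
        have : ¬ ((1 ≤ b ∧ b < s) ∧ Good r s l) := fun hc => hg hc.2
        simp only [if_neg this, if_neg hg]
        rw [measure_empty, zero_mul, mul_zero]
    · simp only [hU]
      have : ¬ ((1 ≤ b ∧ b < s) ∧ Good r s l) := fun hc => hb hc.1
      simp only [if_neg this, if_neg hb]
      rw [measure_empty, zero_mul]
  rw [hPeq]
  simp only [hPU]
  rw [ENNReal.tsum_prod']
  simp only [ENNReal.tsum_mul_left]
  rw [ENNReal.tsum_mul_right]
  congr 1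
  · rw [tsum_eq_sum (s := Finset.Ico 1 s)
      (fun b hb => if_neg (by rw [Finset.mem_Ico] at hb; exact hb))]
    exact Finset.sum_congr rfl fun b hb => if_pos (Finset.mem_Ico.1 hb)
  · rw [ENNReal.tsum_mul_right, tsum_list_prod, ← tsum_box r s X Y, ENNReal.tsum_geometric]
    rw [mul_comm]

end Measures

end RunsAux


theorem runs_conditional_on_first_trial
    {Ω : Type*} [MeasurableSpace Ω] (P : Measure Ω) [IsProbabilityMeasure P]
    (h : ℝ) (h_pos : 0 < h) (h_lt : h < 1)
    (ξ : ℕ → Ω → ℕ) (h_meas : ∀ n, Measurable (ξ n))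
    (h_indep : iIndepFun ξ P)
    (h_one : ∀ n, P {ω | ξ n ω = 1} = ENNReal.ofReal h)
    (h_zero : ∀ n, P {ω | ξ n ω = 0} = ENNReal.ofReal (1 - h))
    (r s : ℕ) (hr : 1 ≤ r) (hs : 1 ≤ s) :
    (ProbabilityTheory.cond P {ω | ξ 0 ω = 0}
        {ω | runTime ξ r 1 ω < runTime ξ s 0 ω}).toReal
      = h ^ (r - 1) * (1 - (1 - h) ^ (s - 1))
        / (h ^ (r - 1) + (1 - h) ^ (s - 1) - h ^ (r - 1) * (1 - h) ^ (s - 1))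
    ∧ (ProbabilityTheory.cond P {ω | ξ 0 ω = 1}
        {ω | runTime ξ r 1 ω < runTime ξ s 0 ω}).toReal
      = h ^ (r - 1)
        / (h ^ (r - 1) + (1 - h) ^ (s - 1) - h ^ (r - 1) * (1 - h) ^ (s - 1)) := by
  classical
  have h1h_pos : 0 < 1 - h := by linarith
  have hne : h ≠ 0 := ne_of_gt h_pos
  have h1ne : (1 : ℝ) - h ≠ 0 := ne_of_gt h1h_pos
  set Ar : ℝ := ∑ a ∈ Finset.Ico 1 r, h ^ a with hAr_def
  set Br : ℝ := ∑ b ∈ Finset.Ico 1 s, (1 - h) ^ b with hBr_def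
  have hAr0 : 0 ≤ Ar := Finset.sum_nonneg fun a _ => pow_nonneg h_pos.le a
  have hBr0 : 0 ≤ Br := Finset.sum_nonneg fun b _ => pow_nonneg h1h_pos.le b
  have hpowr : h ^ r = h ^ (r - 1) * h := by
    conv_lhs => rw [show r = (r - 1) + 1 by omega]
    rw [pow_succ]
  have hpows : (1 - h) ^ s = (1 - h) ^ (s - 1) * (1 - h) := by
    conv_lhs => rw [show s = (s - 1) + 1 by omega]
    rw [pow_succ]
  have hArmul : Ar * (1 - h) = h * (1 - h ^ (r - 1)) := by
    rw [hAr_def, geom_sum_Ico (ne_of_lt h_lt) hr, pow_one, hpowr]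
    have hh1 : h - 1 ≠ 0 := by intro hc; apply h1ne; linarith
    field_simp
    ring
  have hBrmul : Br * h = (1 - h) * (1 - (1 - h) ^ (s - 1)) := by
    have h1lt : (1 : ℝ) - h ≠ 1 := by intro hc; apply hne; linarith
    rw [hBr_def, geom_sum_Ico h1lt hs, pow_one, hpows,
      show (1 : ℝ) - h - 1 = -h by ring]
    rw [div_mul_eq_mul_div, div_eq_iff (neg_ne_zero.2 hne)]
    ring
  have hq : Ar * Br = (1 - h ^ (r - 1)) * (1 - (1 - h) ^ (s - 1)) := by
    have key : (Ar * Br) * ((1 - h) * h)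
        = ((1 - h ^ (r - 1)) * (1 - (1 - h) ^ (s - 1))) * ((1 - h) * h) := by
      calc (Ar * Br) * ((1 - h) * h) = (Ar * (1 - h)) * (Br * h) := by ring
        _ = (h * (1 - h ^ (r - 1))) * ((1 - h) * (1 - (1 - h) ^ (s - 1))) := by
            rw [hArmul, hBrmul]
        _ = _ := by ring
    exact mul_right_cancel₀ (mul_ne_zero h1ne hne) key
  have her1 : 0 < h ^ (r - 1) := pow_pos h_pos _
  have her2 : h ^ (r - 1) ≤ 1 := pow_le_one₀ h_pos.le h_lt.le
  have hes1 : 0 < (1 - h) ^ (s - 1) := pow_pos h1h_pos _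
  have hes2 : (1 - h) ^ (s - 1) ≤ 1 := pow_le_one₀ h1h_pos.le (by linarith)
  have hq0 : 0 ≤ Ar * Br := mul_nonneg hAr0 hBr0
  have hqlt : Ar * Br < 1 := by rw [hq]; nlinarith
  have hDpos : 0 < 1 - Ar * Br := by linarith
  have hD : 1 - Ar * Br
      = h ^ (r - 1) + (1 - h) ^ (s - 1) - h ^ (r - 1) * (1 - h) ^ (s - 1) := by
    rw [hq]; ring
  have hDne : h ^ (r - 1) + (1 - h) ^ (s - 1) - h ^ (r - 1) * (1 - h) ^ (s - 1) ≠ 0 := by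
    rw [← hD]; exact ne_of_gt hDpos
  -- ENNReal sums
  have hXsum : ∑ a ∈ Finset.Ico 1 r, (ENNReal.ofReal h) ^ a = ENNReal.ofReal Ar := by
    rw [hAr_def, ENNReal.ofReal_sum_of_nonneg fun a _ => pow_nonneg h_pos.le a]
    exact Finset.sum_congr rfl fun a _ => (ENNReal.ofReal_pow h_pos.le a).symm
  have hYsum : ∑ b ∈ Finset.Ico 1 s, (ENNReal.ofReal (1 - h)) ^ b = ENNReal.ofReal Br := by
    rw [hBr_def, ENNReal.ofReal_sum_of_nonneg fun b _ => pow_nonneg h1h_pos.le b]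
    exact Finset.sum_congr rfl fun b _ => (ENNReal.ofReal_pow h1h_pos.le b).symm
  have hcore : (ENNReal.ofReal h) ^ r *
      (1 - (∑ a ∈ Finset.Ico 1 r, (ENNReal.ofReal h) ^ a)
        * (∑ b ∈ Finset.Ico 1 s, (ENNReal.ofReal (1 - h)) ^ b))⁻¹
      = ENNReal.ofReal (h ^ r * (1 - Ar * Br)⁻¹) := by
    rw [hXsum, hYsum, ← ENNReal.ofReal_mul hAr0, ← ENNReal.ofReal_pow h_pos.le]
    rw [show (1 : ℝ≥0∞) - ENNReal.ofReal (Ar * Br)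
        = ENNReal.ofReal (1 - Ar * Br) by
      rw [ENNReal.ofReal_sub 1 hq0, ENNReal.ofReal_one]]
    rw [← ENNReal.ofReal_inv_of_pos hDpos]
    rw [← ENNReal.ofReal_mul (pow_nonneg h_pos.le r)]
  constructor
  · -- conditional on ξ₁ = 0
    have hmeasE : MeasurableSet {ω | ξ 0 ω = 0} := (h_meas 0) (measurableSet_singleton 0)
    rw [ProbabilityTheory.cond_apply hmeasE P]
    rw [RunsAux.measure_win0 P h_pos h_lt h_meas h_indep h_one h_zero r s hr hs]
    rw [hcore, hYsum, h_zero 0]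
    rw [← ENNReal.ofReal_inv_of_pos h1h_pos]
    rw [← ENNReal.ofReal_mul hBr0]
    rw [← ENNReal.ofReal_mul (inv_nonneg.2 h1h_pos.le)]
    rw [ENNReal.toReal_ofReal (by positivity)]
    have hBr' : Br = (1 - h) * (1 - (1 - h) ^ (s - 1)) / h := by
      rw [eq_div_iff hne]; exact hBrmul
    rw [hD, hBr', hpowr]
    field_simp
  · -- conditional on ξ₁ = 1
    have hmeasE : MeasurableSet {ω | ξ 0 ω = 1} := (h_meas 0) (measurableSet_singleton 1)
    rw [ProbabilityTheory.cond_apply hmeasE P]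
    rw [RunsAux.measure_win1 P h_pos h_lt h_meas h_indep h_one h_zero r s hr hs]
    rw [hcore, h_one 0]
    rw [← ENNReal.ofReal_inv_of_pos h_pos]
    rw [← ENNReal.ofReal_mul (inv_nonneg.2 h_pos.le)]
    rw [ENNReal.toReal_ofReal (by positivity)]
    rw [hD, hpowr]
    field_simp
end

section
/- Let h ∈ (0,1), let ℓ ≥ 1 and u ≥ 1 be integers, let (ξ_m)_{m≥1} be i.i.d. Bernoulli(h) random variables, and let τ⁽¹⁾ (respectively τ⁽⁰⁾) be the first time m ≥ ℓ such that ξ_m = ξ_{m−1} = ⋯ = ξ_{m−ℓ+1} = 1 (respectively all equal 0). Then P[τ⁽¹⁾ ≤ ℓu and τ⁽¹⁾ < τ⁽⁰⁾] ≥ 1 − (1 − h^ℓ)^u − ((1−h)/h)^{ℓ−1}. -/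
open MeasureTheory ProbabilityTheory

namespace RunAux

/-- one step of the run-tracking machine: state = (last value, current run length) -/
def mstep (s : Bool × ℕ) (c : Bool) : Bool × ℕ :=
  if c = s.1 ∧ 0 < s.2 then (s.1, s.2 + 1) else (c, 1)

def start : Bool × ℕ := (false, 0)

/-- state after reading `w 0, …, w (k-1)` starting from `s` -/
def stF (s : Bool × ℕ) (w : ℕ → Bool) : ℕ → Bool × ℕ
  | 0 => s
  | k + 1 => mstep (stF s w k) (w k)

lemma mstep_fst (s : Bool × ℕ) (c : Bool) : (mstep s c).1 = c := by
  unfold mstep; split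
  · rename_i hc; simp [hc.1.symm]
  · rfl

lemma mstep_pos (s : Bool × ℕ) (c : Bool) : 0 < (mstep s c).2 := by
  unfold mstep; split <;> simp

lemma stF_fst (w : ℕ → Bool) (k : ℕ) : (stF start w (k + 1)).1 = w k := by
  simp [stF, mstep_fst]

lemma stF_pos (w : ℕ → Bool) (k : ℕ) : 0 < (stF start w (k + 1)).2 := by
  simp [stF, mstep_pos]

lemma stF_cnt_le (w : ℕ → Bool) : ∀ k, (stF start w k).2 ≤ k := by
  intro k; induction k with
  | zero => simp [stF, start]
  | succ k ih =>
      show (mstep (stF start w k) (w k)).2 ≤ k + 1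
      unfold mstep; split
      · simpa using ih
      · simp

lemma stF_run (w : ℕ → Bool) : ∀ k, ∀ i < (stF start w k).2, w (k - 1 - i) = (stF start w k).1 := by
  intro k; induction k with
  | zero => simp [stF, start]
  | succ k ih =>
      intro i hi
      show w (k + 1 - 1 - i) = (mstep (stF start w k) (w k)).1
      rw [mstep_fst]
      simp only [stF] at hi
      by_cases hc : w k = (stF start w k).1 ∧ 0 < (stF start w k).2
      · have hms : (mstep (stF start w k) (w k)).2 = (stF start w k).2 + 1 := by
          unfold mstep; rw [if_pos hc]
        rw [hms] at hi
        rcases Nat.eq_zero_or_pos i with hi0 | hip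
        · subst hi0; simp
        · obtain ⟨i', rfl⟩ := Nat.exists_eq_succ_of_ne_zero hip.ne'
          have : w (k - 1 - i') = (stF start w k).1 := ih i' (by omega)
          have hidx : k + 1 - 1 - (i' + 1) = k - 1 - i' := by omega
          rw [hidx, this, ← hc.1]
      · have hms : (mstep (stF start w k) (w k)).2 = 1 := by
          unfold mstep; rw [if_neg hc]
        rw [hms] at hi
        interval_cases i
        simp

lemma stF_max (w : ℕ → Bool) :
    ∀ k, (stF start w k).2 = k ∨ w (k - 1 - (stF start w k).2) ≠ (stF start w k).1 := by
  intro k; induction k with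
  | zero => left; simp [stF, start]
  | succ k ih =>
      by_cases hc : w k = (stF start w k).1 ∧ 0 < (stF start w k).2
      · have hms : stF start w (k+1) = ((stF start w k).1, (stF start w k).2 + 1) := by
          show mstep _ _ = _; unfold mstep; rw [if_pos hc]
        rcases ih with h1 | h2
        · left; rw [hms]; simp [h1]
        · right; rw [hms]
          have hidx : k + 1 - 1 - ((stF start w k).2 + 1) = k - 1 - (stF start w k).2 := by omega
          simp only []
          rw [hidx]
          exact h2
      · have hms : stF start w (k+1) = (w k, 1) := by
          show mstep _ _ = _; unfold mstep; rw [if_neg hc]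
        rcases Nat.eq_zero_or_pos k with hk0 | hkp
        · left; rw [hms, hk0]
        · right; rw [hms]
          simp only []
          have hidx : k + 1 - 1 - 1 = k - 1 := by omega
          rw [hidx]
          obtain ⟨k', rfl⟩ := Nat.exists_eq_succ_of_ne_zero hkp.ne'
          have hfst : (stF start w (k' + 1)).1 = w k' := stF_fst w k'
          have hpos : 0 < (stF start w (k' + 1)).2 := stF_pos w k'
          simp only [Nat.succ_sub_one]
          intro heq
          apply hc
          refine ⟨?_, hpos⟩
          rw [show (stF start w k'.succ).1 = w k' from hfst]
          exact heq.symm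
section Bridge

variable (ℓ : ℕ)

/-- absorbed with a completed 0-run -/
def abs0 (s : Bool × ℕ) : Prop := s.1 = false ∧ ℓ ≤ s.2
/-- absorbed with a completed 1-run -/
def abs1 (s : Bool × ℕ) : Prop := s.1 = true ∧ ℓ ≤ s.2

lemma not_abs0_abs1 {s : Bool × ℕ} (h0 : abs0 ℓ s) (h1 : abs1 ℓ s) : False := by
  rw [abs0] at h0; rw [abs1] at h1; rw [h0.1] at h1; exact Bool.false_ne_true h1.1

/-- a completed run of value `c` of length `ℓ` ending at time `m` forces absorption -/
lemma run_to_abs (hℓ : 1 ≤ ℓ) (w : ℕ → Bool) (c : Bool) (m : ℕ) (hm : ℓ ≤ m)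
    (hrun : ∀ i < ℓ, w (m - 1 - i) = c) :
    (stF start w m).1 = c ∧ ℓ ≤ (stF start w m).2 := by
  obtain ⟨m', rfl⟩ : ∃ m', m = m' + 1 := ⟨m - 1, by omega⟩
  have hfst : (stF start w (m' + 1)).1 = w m' := stF_fst w m'
  have hwm : w m' = c := by
    have := hrun 0 (by omega)
    simpa using this
  refine ⟨by rw [hfst, hwm], ?_⟩
  by_contra hlt
  push_neg at hlt
  rcases stF_max w (m' + 1) with h1 | h2
  · omega
  · apply h2
    rw [hfst, hwm]
    exact hrun _ (by omega)

/-- absorption yields a completed run -/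
lemma abs_to_run (w : ℕ → Bool) (m : ℕ) (habs : ℓ ≤ (stF start w m).2) :
    ℓ ≤ m ∧ ∀ i < ℓ, w (m - 1 - i) = (stF start w m).1 := by
  have h1 := stF_cnt_le w m
  exact ⟨le_trans habs h1, fun i hi => stF_run w m i (lt_of_lt_of_le hi habs)⟩

/-- the zeros-run event (within horizon `n`, reading from state `s`): a 0-absorption
happens no later than every 1-absorption -/
def RUIN (s : Bool × ℕ) (w : ℕ → Bool) (n : ℕ) : Prop :=
  ∃ m ≤ n, abs0 ℓ (stF s w m) ∧ ∀ m' ≤ m, ¬ abs1 ℓ (stF s w m')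

def WIN (s : Bool × ℕ) (w : ℕ → Bool) (n : ℕ) : Prop :=
  ∃ m ≤ n, abs1 ℓ (stF s w m) ∧ ∀ m' ≤ m, ¬ abs0 ℓ (stF s w m')

lemma win_or_ruin (w : ℕ → Bool) (n : ℕ) (hex : ∃ m ≤ n, abs1 ℓ (stF start w m)) :
    WIN ℓ start w n ∨ RUIN ℓ start w n := by
  classical
  obtain ⟨m, hmn, hm⟩ := hex
  have hPex : ∃ k, abs1 ℓ (stF start w k) := ⟨m, hm⟩
  set m1 := Nat.find hPex with hm1
  have hm1abs : abs1 ℓ (stF start w m1) := Nat.find_spec hPex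
  have hm1le : m1 ≤ n := le_trans (Nat.find_le hm) hmn
  by_cases h0 : ∃ m' ≤ m1, abs0 ℓ (stF start w m')
  · right
    have hQex : ∃ k, abs0 ℓ (stF start w k) := ⟨h0.choose, h0.choose_spec.2⟩
    set m0 := Nat.find hQex with hm0
    have hm0abs : abs0 ℓ (stF start w m0) := Nat.find_spec hQex
    have hm0le : m0 ≤ m1 := le_trans (Nat.find_le h0.choose_spec.2) h0.choose_spec.1
    refine ⟨m0, le_trans hm0le hm1le, hm0abs, ?_⟩
    intro m' hm' habs1
    have hge : m1 ≤ m' := Nat.find_le habs1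
    have : m' = m0 := by omega
    exact not_abs0_abs1 ℓ (this ▸ hm0abs) habs1
  · left
    push_neg at h0
    exact ⟨m1, hm1le, hm1abs, h0⟩

lemma stF_shift (s : Bool × ℕ) (w : ℕ → Bool) :
    ∀ k, stF s w (k + 1) = stF (mstep s (w 0)) (fun i => w (i + 1)) k := by
  intro k; induction k with
  | zero => rfl
  | succ k ih =>
      show mstep (stF s w (k+1)) (w (k+1)) = mstep (stF (mstep s (w 0)) (fun i => w (i+1)) k) (w (k+1))
      rw [ih]

lemma stF_congr (s : Bool × ℕ) (w1 w2 : ℕ → Bool) :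
    ∀ k, (∀ i < k, w1 i = w2 i) → stF s w1 k = stF s w2 k := by
  intro k; induction k with
  | zero => intro _; rfl
  | succ k ih =>
      intro hw
      show mstep (stF s w1 k) (w1 k) = mstep (stF s w2 k) (w2 k)
      rw [ih (fun i hi => hw i (by omega)), hw k (by omega)]

lemma ruin_absorbed0 (s : Bool × ℕ) (w : ℕ → Bool) (n : ℕ) (h : abs0 ℓ s) :
    RUIN ℓ s w n := by
  refine ⟨0, Nat.zero_le _, h, ?_⟩
  intro m' hm'
  interval_cases m'
  exact fun h1 => not_abs0_abs1 ℓ h h1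

lemma ruin_absorbed1 (s : Bool × ℕ) (w : ℕ → Bool) (n : ℕ) (h : abs1 ℓ s) :
    ¬ RUIN ℓ s w n := by
  rintro ⟨m, _, _, hno⟩
  exact hno 0 (Nat.zero_le _) h

lemma ruin_rec (s : Bool × ℕ) (w : ℕ → Bool) (n : ℕ) (hok : s.2 < ℓ) :
    RUIN ℓ s w (n + 1) ↔ RUIN ℓ (mstep s (w 0)) (fun i => w (i + 1)) n := by
  constructor
  · rintro ⟨m, hmn, habs, hno⟩
    have hm0 : m ≠ 0 := by
      rintro rfl
      exact absurd habs.2 (Nat.not_le.mpr hok)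
    obtain ⟨m', rfl⟩ := Nat.exists_eq_succ_of_ne_zero hm0
    refine ⟨m', by omega, by rwa [← stF_shift], ?_⟩
    intro m'' hm''
    rw [← stF_shift]
    exact hno (m'' + 1) (by omega)
  · rintro ⟨m, hmn, habs, hno⟩
    refine ⟨m + 1, by omega, by rwa [stF_shift], ?_⟩
    intro m' hm'
    rcases Nat.eq_zero_or_pos m' with rfl | hp
    · show ¬ abs1 ℓ s
      intro h1
      exact absurd h1.2 (by omega)
    · obtain ⟨m'', rfl⟩ := Nat.exists_eq_succ_of_ne_zero hp.ne'
      rw [stF_shift]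
      exact hno m'' (by omega)

end Bridge
section Potential

open scoped Classical

variable (h : ℝ) (ℓ : ℕ)

noncomputable def DD : ℝ := h ^ (ℓ - 1) + (1 - h) ^ (ℓ - 1) - h ^ (ℓ - 1) * (1 - h) ^ (ℓ - 1)

noncomputable def y1v : ℝ := (1 - h) ^ (ℓ - 1) / DD h ℓ

noncomputable def x1v : ℝ := y1v h ℓ * (1 - h ^ (ℓ - 1))

noncomputable def Gx (j : ℕ) : ℝ := y1v h ℓ * (1 - h ^ (ℓ - j))

noncomputable def Gy (j : ℕ) : ℝ := (1 - h) ^ (ℓ - j) + x1v h ℓ * (1 - (1 - h) ^ (ℓ - j))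

noncomputable def v0v : ℝ := y1v h ℓ * (1 - h ^ ℓ)

noncomputable def G (s : Bool × ℕ) : ℝ :=
  if s.2 = 0 then v0v h ℓ else if s.1 then Gx h ℓ s.2 else Gy h ℓ s.2

noncomputable def BB (s : Bool × ℕ) : ℝ :=
  if abs0 ℓ s then 1 else if abs1 ℓ s then 0 else G h ℓ s

variable {h : ℝ} {ℓ : ℕ}

lemma DD_pos (hh0 : 0 < h) (hh1 : h < 1) : 0 < DD h ℓ := by
  have h1 : 0 < h ^ (ℓ - 1) := pow_pos hh0 _
  have h2 : (0:ℝ) ≤ (1 - h) ^ (ℓ - 1) := pow_nonneg (by linarith) _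
  have h3 : h ^ (ℓ - 1) ≤ 1 := pow_le_one₀ (le_of_lt hh0) (le_of_lt hh1)
  have : DD h ℓ = h ^ (ℓ - 1) + (1 - h) ^ (ℓ - 1) * (1 - h ^ (ℓ - 1)) := by
    unfold DD; ring
  rw [this]
  nlinarith

lemma y1v_nonneg (hh0 : 0 < h) (hh1 : h < 1) : 0 ≤ y1v h ℓ :=
  div_nonneg (pow_nonneg (by linarith) _) (DD_pos hh0 hh1).le

lemma x1v_nonneg (hh0 : 0 < h) (hh1 : h < 1) : 0 ≤ x1v h ℓ := by
  have := y1v_nonneg (ℓ := ℓ) hh0 hh1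
  have h3 : h ^ (ℓ - 1) ≤ 1 := pow_le_one₀ (le_of_lt hh0) (le_of_lt hh1)
  unfold x1v; nlinarith

lemma Gx_nonneg (hh0 : 0 < h) (hh1 : h < 1) (j : ℕ) : 0 ≤ Gx h ℓ j := by
  have := y1v_nonneg (ℓ := ℓ) hh0 hh1
  have h3 : h ^ (ℓ - j) ≤ 1 := pow_le_one₀ (le_of_lt hh0) (le_of_lt hh1)
  unfold Gx; nlinarith

lemma Gy_nonneg (hh0 : 0 < h) (hh1 : h < 1) (j : ℕ) : 0 ≤ Gy h ℓ j := by
  have := x1v_nonneg (ℓ := ℓ) hh0 hh1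
  have h2 : (0:ℝ) ≤ (1 - h) ^ (ℓ - j) := pow_nonneg (by linarith) _
  have h3 : (1 - h) ^ (ℓ - j) ≤ 1 := pow_le_one₀ (by linarith) (by linarith)
  unfold Gy; nlinarith

lemma v0v_nonneg (hh0 : 0 < h) (hh1 : h < 1) : 0 ≤ v0v h ℓ := by
  have := y1v_nonneg (ℓ := ℓ) hh0 hh1
  have h3 : h ^ ℓ ≤ 1 := pow_le_one₀ (le_of_lt hh0) (le_of_lt hh1)
  unfold v0v; nlinarith

lemma G_nonneg (hh0 : 0 < h) (hh1 : h < 1) (s : Bool × ℕ) : 0 ≤ G h ℓ s := by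
  unfold G
  split
  · exact v0v_nonneg hh0 hh1
  · split
    · exact Gx_nonneg hh0 hh1 _
    · exact Gy_nonneg hh0 hh1 _

lemma BB_nonneg (hh0 : 0 < h) (hh1 : h < 1) (s : Bool × ℕ) : 0 ≤ BB h ℓ s := by
  unfold BB
  split
  · norm_num
  · split
    · exact le_refl 0
    · exact G_nonneg hh0 hh1 s

lemma BB_eq_G (s : Bool × ℕ) (hs : s.2 < ℓ) : BB h ℓ s = G h ℓ s := by
  unfold BB
  rw [if_neg, if_neg]
  · rintro ⟨_, hle⟩; omega
  · rintro ⟨_, hle⟩; omega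

/-- the key identity `Gy 1 = y1v` -/
lemma Gy_one (hh0 : 0 < h) (hh1 : h < 1) : Gy h ℓ 1 = y1v h ℓ := by
  have hD := DD_pos (ℓ := ℓ) hh0 hh1
  unfold Gy x1v y1v
  rcases Nat.eq_zero_or_pos ℓ with rfl | hℓp
  · simp [DD]
  · have hexp : ℓ - 1 = ℓ - 1 := rfl
    field_simp
    unfold DD
    ring

end Potential
section Harmonic

variable {h : ℝ} {ℓ : ℕ}

lemma G_s0 (b : Bool) : G h ℓ (b, 0) = v0v h ℓ := by unfold G; simp

lemma G_tj {j : ℕ} (hj : j ≠ 0) : G h ℓ (true, j) = Gx h ℓ j := by unfold G; simp [hj]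

lemma G_fj {j : ℕ} (hj : j ≠ 0) : G h ℓ (false, j) = Gy h ℓ j := by unfold G; simp [hj]

lemma G_t1 : G h ℓ (true, 1) = x1v h ℓ := by
  rw [G_tj one_ne_zero]; unfold Gx x1v; rfl

lemma mstep_harm (hh0 : 0 < h) (hh1 : h < 1) (hℓ : 2 ≤ ℓ) (s : Bool × ℕ) (hs : s.2 < ℓ) :
    (1 - h) * BB h ℓ (mstep s false) + h * BB h ℓ (mstep s true) ≤ G h ℓ s := by
  have hD := DD_pos (ℓ := ℓ) hh0 hh1
  have hGy1 := Gy_one (ℓ := ℓ) hh0 hh1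
  have hy1 := y1v_nonneg (ℓ := ℓ) hh0 hh1
  obtain ⟨b, j⟩ := s
  rcases Nat.eq_zero_or_pos j with rfl | hj
  · -- start state
    have e0 : mstep (b, 0) false = (false, 1) := by unfold mstep; simp
    have e1 : mstep (b, 0) true = (true, 1) := by unfold mstep; simp
    rw [e0, e1, BB_eq_G _ (by simpa using by omega : ((false,(1:ℕ))).2 < ℓ),
      BB_eq_G _ (by simpa using by omega : ((true,(1:ℕ))).2 < ℓ),
      G_t1, G_fj one_ne_zero, hGy1, G_s0]
    have hpow : h ^ ℓ = h ^ (ℓ - 1) * h := by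
      rw [← pow_succ, Nat.sub_add_cancel (by omega)]
    unfold v0v x1v
    rw [hpow]; apply le_of_eq; ring
  · cases b
    · -- current run of zeros, length j ≥ 1, j < ℓ
      have e1 : mstep (false, j) true = (true, 1) := by
        unfold mstep; rw [if_neg]; simp
      have e0 : mstep (false, j) false = (false, j + 1) := by
        unfold mstep; rw [if_pos ⟨rfl, hj⟩]
      rw [e0, e1, BB_eq_G _ (by simpa using by omega : ((true,(1:ℕ))).2 < ℓ), G_t1,
        G_fj (by omega : j ≠ 0)]
      rcases eq_or_lt_of_le (by omega : j + 1 ≤ ℓ) with heq | hlt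
      · -- j = ℓ - 1 : stepping 0 absorbs
        have habs : BB h ℓ (false, j + 1) = 1 := by
          unfold BB; rw [if_pos ⟨rfl, by omega⟩]
        rw [habs]
        have hexp : ℓ - j = 1 := by omega
        unfold Gy
        rw [hexp]; apply le_of_eq; ring
      · -- j + 1 < ℓ
        rw [BB_eq_G _ (by simpa using by omega : ((false, j+1)).2 < ℓ),
          G_fj (by omega : j + 1 ≠ 0)]
        obtain ⟨M, hM1, hM2⟩ : ∃ M, ℓ - (j+1) = M ∧ ℓ - j = M + 1 := ⟨ℓ - (j+1), rfl, by omega⟩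
        unfold Gy
        rw [hM1, hM2, pow_succ]
        apply le_of_eq; ring
    · -- current run of ones, length j ≥ 1, j < ℓ
      have e0 : mstep (true, j) false = (false, 1) := by
        unfold mstep; rw [if_neg]; simp
      have e1 : mstep (true, j) true = (true, j + 1) := by
        unfold mstep; rw [if_pos ⟨rfl, hj⟩]
      rw [e0, e1, BB_eq_G _ (by simpa using by omega : ((false,(1:ℕ))).2 < ℓ),
        G_fj one_ne_zero, hGy1, G_tj (by omega : j ≠ 0)]
      rcases eq_or_lt_of_le (by omega : j + 1 ≤ ℓ) with heq | hlt
      · -- stepping 1 absorbs: BB = 0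
        have habs : BB h ℓ (true, j + 1) = 0 := by
          unfold BB; rw [if_neg, if_pos ⟨rfl, by omega⟩]
          rintro ⟨hfalse, _⟩; exact absurd hfalse (by simp)
        rw [habs]
        have hexp : ℓ - j = 1 := by omega
        unfold Gx
        rw [hexp]; apply le_of_eq; ring
      · rw [BB_eq_G _ (by simpa using by omega : ((true, j+1)).2 < ℓ),
          G_tj (by omega : j + 1 ≠ 0)]
        obtain ⟨M, hM1, hM2⟩ : ∃ M, ℓ - (j+1) = M ∧ ℓ - j = M + 1 := ⟨ℓ - (j+1), rfl, by omega⟩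
        unfold Gx
        rw [hM1, hM2, pow_succ]
        apply le_of_eq; ring

end Harmonic
section Sums

open scoped Classical

noncomputable def Wt (h : ℝ) {n : ℕ} (w : Fin n → Bool) : ℝ :=
  ∏ i, (if w i then h else 1 - h)

def ext {n : ℕ} (w : Fin n → Bool) : ℕ → Bool :=
  fun i => if hi : i < n then w ⟨i, hi⟩ else false

variable {h : ℝ} {ℓ : ℕ}

lemma sum_cons {κ : Type*} [Fintype κ] {n : ℕ} (F : (Fin (n + 1) → κ) → ℝ) :
    ∑ w, F w = ∑ c : κ, ∑ v : Fin n → κ, F (Fin.cons c v) := by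
  rw [← (Fin.consEquiv (fun _ : Fin (n+1) => κ)).sum_comp F, Fintype.sum_prod_type]
  rfl

lemma Wt_cons (c : Bool) {n : ℕ} (v : Fin n → Bool) :
    Wt h (Fin.cons c v) = (if c then h else 1 - h) * Wt h v := by
  unfold Wt
  rw [Fin.prod_univ_succ]
  simp [Fin.cons_zero, Fin.cons_succ]

lemma Wt_nonneg (hh0 : 0 < h) (hh1 : h < 1) {n : ℕ} (w : Fin n → Bool) : 0 ≤ Wt h w := by
  unfold Wt
  apply Finset.prod_nonneg
  intro i _
  split <;> linarith

lemma sum_Wt (hh0 : 0 < h) (hh1 : h < 1) : ∀ n, ∑ w : Fin n → Bool, Wt h w = 1 := by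
  intro n; induction n with
  | zero => simp [Wt]
  | succ n ih =>
      rw [sum_cons (fun w => Wt h w)]
      simp only [Wt_cons]
      rw [Fintype.sum_bool]
      rw [← Finset.mul_sum, ← Finset.mul_sum, ih]
      simp

lemma ext_cons_zero (c : Bool) {n : ℕ} (v : Fin n → Bool) : ext (Fin.cons c v) 0 = c := by
  simp [ext]

lemma ext_cons_succ (c : Bool) {n : ℕ} (v : Fin n → Bool) :
    (fun i => ext (Fin.cons c v) (i + 1)) = ext v := by
  funext i
  unfold ext
  by_cases hi : i < n
  · rw [dif_pos (by omega : i + 1 < n + 1), dif_pos hi]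
    exact Fin.cons_succ (α := fun _ : Fin (n+1) => Bool) c v ⟨i, hi⟩
  · rw [dif_neg (by omega), dif_neg hi]

/-- Master bound: the weight of words whose run-machine 0-absorbs before 1-absorbing
is at most the potential `BB`. -/
lemma ruin_sum (hh0 : 0 < h) (hh1 : h < 1) (hℓ : 2 ≤ ℓ) :
    ∀ n (s : Bool × ℕ),
      (∑ w : Fin n → Bool, if RUIN ℓ s (ext w) n then Wt h w else 0) ≤ BB h ℓ s := by
  intro n; induction n with
  | zero =>
      intro s
      by_cases habs : abs0 ℓ s
      · have : ∀ w : Fin 0 → Bool, RUIN ℓ s (ext w) 0 := fun w => ruin_absorbed0 ℓ s _ 0 habs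
        simp only [if_pos (this _)]
        have : BB h ℓ s = 1 := by unfold BB; rw [if_pos habs]
        rw [this]
        simpa [Wt] using le_refl (1:ℝ)
      · have hno : ∀ w : Fin 0 → Bool, ¬ RUIN ℓ s (ext w) 0 := by
          intro w ⟨m, hm, habs0, _⟩
          interval_cases m
          exact habs habs0
        simp only [if_neg (hno _)]
        simpa using BB_nonneg hh0 hh1 s
  | succ n ih =>
      intro s
      rw [sum_cons (fun w => if RUIN ℓ s (ext w) (n+1) then Wt h w else 0)]
      by_cases habs0 : abs0 ℓ s
      · have hBB : BB h ℓ s = 1 := by unfold BB; rw [if_pos habs0]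
        rw [hBB]
        have hr : ∀ (c : Bool) (v : Fin n → Bool), RUIN ℓ s (ext (Fin.cons c v)) (n+1) :=
          fun c v => ruin_absorbed0 ℓ s _ _ habs0
        calc ∑ c : Bool, ∑ v : Fin n → Bool,
              (if RUIN ℓ s (ext (Fin.cons c v)) (n+1) then Wt h (Fin.cons c v) else 0)
            = ∑ c : Bool, ∑ v : Fin n → Bool, (if c then h else 1 - h) * Wt h v := by
              apply Finset.sum_congr rfl; intro c _
              apply Finset.sum_congr rfl; intro v _
              rw [if_pos (hr c v), Wt_cons]
          _ = 1 := by
              rw [Fintype.sum_bool, ← Finset.mul_sum, ← Finset.mul_sum, sum_Wt hh0 hh1]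
              simp
          _ ≤ 1 := le_refl 1
      · by_cases habs1 : abs1 ℓ s
        · have hBB : BB h ℓ s = 0 := by unfold BB; rw [if_neg habs0, if_pos habs1]
          rw [hBB]
          have hr : ∀ (c : Bool) (v : Fin n → Bool), ¬ RUIN ℓ s (ext (Fin.cons c v)) (n+1) :=
            fun c v => ruin_absorbed1 ℓ s _ _ habs1
          apply le_of_eq
          apply Finset.sum_eq_zero; intro c _
          apply Finset.sum_eq_zero; intro v _
          rw [if_neg (hr c v)]
        · have hok : s.2 < ℓ := by
            by_contra hge
            push_neg at hge
            rcases Bool.eq_false_or_eq_true s.1 with hb | hb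
            · exact habs1 ⟨hb, hge⟩
            · exact habs0 ⟨hb, hge⟩
          have key : ∀ (c : Bool) (v : Fin n → Bool),
              RUIN ℓ s (ext (Fin.cons c v)) (n+1) ↔ RUIN ℓ (mstep s c) (ext v) n := by
            intro c v
            rw [ruin_rec ℓ s _ n hok, ext_cons_zero]
            constructor
            · rintro ⟨m, hm, ha, hno⟩
              refine ⟨m, hm, ?_, ?_⟩
              · rwa [stF_congr _ _ (ext v) m
                  (fun i _ => congrFun (ext_cons_succ c v) i)] at ha
              · intro m' hm'
                rw [← stF_congr _ _ (ext v) m' (fun i _ => congrFun (ext_cons_succ c v) i)]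
                exact hno m' hm'
            · rintro ⟨m, hm, ha, hno⟩
              refine ⟨m, hm, ?_, ?_⟩
              · rwa [stF_congr _ (ext v) _ m
                  (fun i _ => (congrFun (ext_cons_succ c v) i).symm)] at ha
              · intro m' hm'
                rw [stF_congr _ _ (ext v) m' (fun i _ => congrFun (ext_cons_succ c v) i)]
                exact hno m' hm'
          calc ∑ c : Bool, ∑ v : Fin n → Bool,
                (if RUIN ℓ s (ext (Fin.cons c v)) (n+1) then Wt h (Fin.cons c v) else 0)
              = ∑ c : Bool, (if c then h else 1 - h) *
                  ∑ v : Fin n → Bool, (if RUIN ℓ (mstep s c) (ext v) n then Wt h v else 0) := by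
                apply Finset.sum_congr rfl; intro c _
                rw [Finset.mul_sum]
                apply Finset.sum_congr rfl; intro v _
                rw [Wt_cons]
                by_cases hR : RUIN ℓ (mstep s c) (ext v) n
                · rw [if_pos ((key c v).mpr hR), if_pos hR]
                · rw [if_neg (fun hx => hR ((key c v).mp hx)), if_neg hR, mul_zero]
            _ ≤ ∑ c : Bool, (if c then h else 1 - h) * BB h ℓ (mstep s c) := by
                apply Finset.sum_le_sum
                intro c _
                apply mul_le_mul_of_nonneg_left (ih (mstep s c))
                split <;> linarith
            _ ≤ BB h ℓ s := by
                rw [Fintype.sum_bool, BB_eq_G s hok]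
                have := mstep_harm hh0 hh1 hℓ s hok
                simp only [if_pos, if_neg, Bool.false_eq_true, if_true, if_false]
                linarith

end Sums
section Blocks

open scoped Classical

variable {h : ℝ} {ℓ u : ℕ}

lemma sum_prod_pow {κ : Type*} [Fintype κ] (H : κ → ℝ) :
    ∀ m, ∑ G : Fin m → κ, ∏ k, H (G k) = (∑ v, H v) ^ m := by
  intro m; induction m with
  | zero => simp
  | succ m ih =>
      rw [sum_cons (fun G : Fin (m+1) → κ => ∏ k, H (G k)), pow_succ]
      have : ∀ (c : κ) (v : Fin m → κ), ∏ k, H ((Fin.cons c v : Fin (m+1) → κ) k) = H c * ∏ k, H (v k) := by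
        intro c v
        rw [Fin.prod_univ_succ]
        simp [Fin.cons_zero, Fin.cons_succ]
      calc ∑ c : κ, ∑ v : Fin m → κ, ∏ k, H ((Fin.cons c v : Fin (m+1) → κ) k)
          = ∑ c : κ, H c * ∑ v : Fin m → κ, ∏ k, H (v k) := by
            apply Finset.sum_congr rfl; intro c _
            rw [Finset.mul_sum]
            exact Finset.sum_congr rfl (fun v _ => this c v)
        _ = (∑ v, H v) ^ m * ∑ c : κ, H c := by
            rw [← Finset.sum_mul, ih]
            ring
        _ = (∑ v, H v) ^ m * ∑ v, H v := rfl

lemma ext_lt {n : ℕ} (w : Fin n → Bool) {i : ℕ} (hi : i < n) : ext w i = w ⟨i, hi⟩ :=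
  dif_pos hi

def Acond (ℓ u : ℕ) (w : Fin (ℓ * u) → Bool) : Prop :=
  ∃ k, k < u ∧ ∀ j, j < ℓ → ext w (k * ℓ + j) = true

noncomputable def blockE (ℓ u : ℕ) : Fin u × Fin ℓ ≃ Fin (ℓ * u) :=
  finProdFinEquiv.trans (finCongr (mul_comm u ℓ))

lemma blockE_val (k : Fin u) (j : Fin ℓ) : ((blockE ℓ u) (k, j) : ℕ) = k * ℓ + j := by
  unfold blockE
  simp [finProdFinEquiv]
  ring

noncomputable def fullE (ℓ u : ℕ) : (Fin u → Fin ℓ → Bool) ≃ (Fin (ℓ * u) → Bool) :=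
  ((Equiv.curry (Fin u) (Fin ℓ) Bool).symm).trans
    (Equiv.arrowCongr (blockE ℓ u) (Equiv.refl Bool))

lemma fullE_apply (G : Fin u → Fin ℓ → Bool) (k : Fin u) (j : Fin ℓ) :
    (fullE ℓ u G) ((blockE ℓ u) (k, j)) = G k j := by
  unfold fullE
  simp [Equiv.curry, Equiv.arrowCongr, Function.uncurry]

lemma Acond_fullE (G : Fin u → Fin ℓ → Bool) :
    Acond ℓ u (fullE ℓ u G) ↔ ∃ k : Fin u, ∀ j : Fin ℓ, G k j = true := by
  constructor
  · rintro ⟨k, hk, hall⟩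
    refine ⟨⟨k, hk⟩, fun j => ?_⟩
    have hlt : k * ℓ + (j : ℕ) < ℓ * u := by
      have := (blockE ℓ u (⟨k, hk⟩, j)).2
      rwa [blockE_val] at this
    have := hall j j.2
    rw [ext_lt _ hlt] at this
    rw [← fullE_apply G ⟨k, hk⟩ j]
    convert this using 2
    apply Fin.ext
    rw [blockE_val]
  · rintro ⟨k, hall⟩
    refine ⟨k, k.2, fun j hj => ?_⟩
    have hlt : (k : ℕ) * ℓ + j < ℓ * u := by
      have := (blockE ℓ u (k, ⟨j, hj⟩)).2
      rwa [blockE_val] at this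
    rw [ext_lt _ hlt]
    have := hall ⟨j, hj⟩
    rw [← fullE_apply G k ⟨j, hj⟩] at this
    convert this using 2
    apply Fin.ext
    rw [blockE_val]

lemma Wt_fullE (G : Fin u → Fin ℓ → Bool) :
    Wt h (fullE ℓ u G) = ∏ k, ∏ j, (if G k j then h else 1 - h) := by
  unfold Wt
  rw [← Equiv.prod_comp (blockE ℓ u) (fun i => if (fullE ℓ u G) i then h else 1 - h)]
  rw [Fintype.prod_prod_type]
  apply Finset.prod_congr rfl
  intro k _
  apply Finset.prod_congr rfl
  intro j _
  rw [fullE_apply]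

lemma sum_not_Acond (hh0 : 0 < h) (hh1 : h < 1) :
    ∑ w : Fin (ℓ * u) → Bool, (if Acond ℓ u w then 0 else Wt h w) = (1 - h ^ ℓ) ^ u := by
  rw [← Equiv.sum_comp (fullE ℓ u) (fun w => if Acond ℓ u w then 0 else Wt h w)]
  have step1 : ∀ G : Fin u → Fin ℓ → Bool,
      (if Acond ℓ u (fullE ℓ u G) then (0:ℝ) else Wt h (fullE ℓ u G))
        = ∏ k, (if (∀ j, G k j = true) then 0 else ∏ j, (if G k j then h else 1 - h)) := by
    intro G
    by_cases hA : Acond ℓ u (fullE ℓ u G)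
    · rw [if_pos hA]
      obtain ⟨k, hall⟩ := (Acond_fullE G).mp hA
      symm
      apply Finset.prod_eq_zero (Finset.mem_univ k)
      rw [if_pos hall]
    · rw [if_neg hA, Wt_fullE]
      apply Finset.prod_congr rfl
      intro k _
      rw [if_neg]
      intro hall
      exact hA ((Acond_fullE G).mpr ⟨k, hall⟩)
  rw [Finset.sum_congr rfl (fun G _ => step1 G)]
  rw [sum_prod_pow (fun v : Fin ℓ → Bool =>
    if (∀ j, v j = true) then 0 else ∏ j, (if v j then h else 1 - h)) u]
  congr 1
  have split : ∀ v : Fin ℓ → Bool,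
      (if (∀ j, v j = true) then (0:ℝ) else ∏ j, (if v j then h else 1 - h))
        = Wt h v - (if v = (fun _ => true) then Wt h v else 0) := by
    intro v
    by_cases hv : ∀ j, v j = true
    · rw [if_pos hv, if_pos (funext hv)]; ring
    · rw [if_neg hv, if_neg]
      · unfold Wt; ring
      · intro he; exact hv (fun j => congrFun he j)
  rw [Finset.sum_congr rfl (fun v _ => split v), Finset.sum_sub_distrib, sum_Wt hh0 hh1]
  rw [Finset.sum_ite_eq' Finset.univ (fun _ => true) (Wt h)]
  simp only [Finset.mem_univ, if_pos]
  unfold Wt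
  simp

lemma v0v_le (hh0 : 0 < h) (hh1 : h < 1) : v0v h ℓ ≤ ((1 - h) / h) ^ (ℓ - 1) := by
  have hD := DD_pos (ℓ := ℓ) hh0 hh1
  have hq : (0:ℝ) ≤ (1 - h) ^ (ℓ - 1) := pow_nonneg (by linarith) _
  have hhp : (0:ℝ) < h ^ (ℓ - 1) := pow_pos hh0 _
  have hh1' : h ^ (ℓ - 1) ≤ 1 := pow_le_one₀ hh0.le hh1.le
  have hhl : (0:ℝ) ≤ h ^ ℓ := pow_nonneg hh0.le _
  rw [div_pow]
  unfold v0v y1v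
  rw [div_mul_eq_mul_div, div_le_div_iff₀ hD hhp]
  have key : (1 - h ^ ℓ) * h ^ (ℓ - 1) ≤ DD h ℓ := by
    unfold DD
    nlinarith
  calc (1 - h) ^ (ℓ - 1) * (1 - h ^ ℓ) * h ^ (ℓ - 1)
      = (1 - h) ^ (ℓ - 1) * ((1 - h ^ ℓ) * h ^ (ℓ - 1)) := by ring
    _ ≤ (1 - h) ^ (ℓ - 1) * DD h ℓ := by
        exact mul_le_mul_of_nonneg_left key hq
    _ = (1 - h) ^ (ℓ - 1) * DD h ℓ := rfl

/-- Main combinatorial estimate. -/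
lemma main_comb (hh0 : 0 < h) (hh1 : h < 1) (hℓ : 2 ≤ ℓ) :
    1 - (1 - h ^ ℓ) ^ u - ((1 - h) / h) ^ (ℓ - 1)
      ≤ ∑ w : Fin (ℓ * u) → Bool, (if WIN ℓ start (ext w) (ℓ * u) then Wt h w else 0) := by
  have pointwise : ∀ w : Fin (ℓ * u) → Bool,
      (if Acond ℓ u w then Wt h w else 0)
        ≤ (if WIN ℓ start (ext w) (ℓ * u) then Wt h w else 0)
          + (if RUIN ℓ start (ext w) (ℓ * u) then Wt h w else 0) := by
    intro w
    by_cases hA : Acond ℓ u w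
    · rw [if_pos hA]
      obtain ⟨k, hk, hall⟩ := hA
      have habs : ∃ m ≤ ℓ * u, abs1 ℓ (stF start (ext w) m) := by
        refine ⟨k * ℓ + ℓ, by nlinarith [hk], ?_⟩
        have hrun : ∀ i < ℓ, ext w (k * ℓ + ℓ - 1 - i) = true := by
          intro i hi
          have : k * ℓ + ℓ - 1 - i = k * ℓ + (ℓ - 1 - i) := by omega
          rw [this]
          exact hall _ (by omega)
        have := run_to_abs ℓ (by omega) (ext w) true (k * ℓ + ℓ) (by omega) hrun
        exact ⟨this.1, this.2⟩
      rcases win_or_ruin ℓ (ext w) (ℓ * u) habs with hW | hR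
      · rw [if_pos hW]
        have : (0:ℝ) ≤ if RUIN ℓ start (ext w) (ℓ * u) then Wt h w else 0 := by
          split
          · exact Wt_nonneg hh0 hh1 w
          · exact le_refl 0
        linarith
      · rw [if_pos hR]
        have : (0:ℝ) ≤ if WIN ℓ start (ext w) (ℓ * u) then Wt h w else 0 := by
          split
          · exact Wt_nonneg hh0 hh1 w
          · exact le_refl 0
        linarith
    · rw [if_neg hA]
      have h1 : (0:ℝ) ≤ if WIN ℓ start (ext w) (ℓ * u) then Wt h w else 0 := by
        split
        · exact Wt_nonneg hh0 hh1 w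
        · exact le_refl 0
      have h2 : (0:ℝ) ≤ if RUIN ℓ start (ext w) (ℓ * u) then Wt h w else 0 := by
        split
        · exact Wt_nonneg hh0 hh1 w
        · exact le_refl 0
      linarith
  have hSA : ∑ w : Fin (ℓ * u) → Bool, (if Acond ℓ u w then Wt h w else 0)
      = 1 - (1 - h ^ ℓ) ^ u := by
    have : ∀ w : Fin (ℓ * u) → Bool,
        (if Acond ℓ u w then Wt h w else 0) = Wt h w - (if Acond ℓ u w then 0 else Wt h w) := by
      intro w; split <;> ring
    rw [Finset.sum_congr rfl (fun w _ => this w), Finset.sum_sub_distrib,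
      sum_Wt hh0 hh1, sum_not_Acond hh0 hh1]
  have hSR : ∑ w : Fin (ℓ * u) → Bool, (if RUIN ℓ start (ext w) (ℓ * u) then Wt h w else 0)
      ≤ ((1 - h) / h) ^ (ℓ - 1) := by
    have h1 := ruin_sum hh0 hh1 hℓ (ℓ * u) start
    have h2 : BB h ℓ start = v0v h ℓ := by
      unfold BB
      rw [if_neg, if_neg]
      · exact G_s0 false
      · rintro ⟨_, hle⟩; unfold start at hle; simp at hle; omega
      · rintro ⟨_, hle⟩; unfold start at hle; simp at hle; omega
    rw [h2] at h1
    exact le_trans h1 (v0v_le hh0 hh1)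
  have hsum := Finset.sum_le_sum (s := (Finset.univ : Finset (Fin (ℓ * u) → Bool)))
    (fun w _ => pointwise w)
  rw [hSA, Finset.sum_add_distrib] at hsum
  linarith

end Blocks

end RunAux

open RunAux

open scoped Classical

theorem run_of_ones_fast_and_before_zeros
    {Ω : Type*} [MeasurableSpace Ω] (P : Measure Ω) [IsProbabilityMeasure P]
    (h : ℝ) (h_pos : 0 < h) (h_lt : h < 1)
    (ℓ u : ℕ) (hℓ : 1 ≤ ℓ) (hu : 1 ≤ u)
    (ξ : ℕ → Ω → ℕ) (h_meas : ∀ n, Measurable (ξ n))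
    (h_indep : iIndepFun ξ P)
    (h_one : ∀ n, P {ω | ξ n ω = 1} = ENNReal.ofReal h)
    (h_zero : ∀ n, P {ω | ξ n ω = 0} = ENNReal.ofReal (1 - h)) :
    (P {ω | runTime ξ ℓ 1 ω ≤ ((ℓ * u : ℕ) : ℕ∞)
            ∧ runTime ξ ℓ 1 ω < runTime ξ ℓ 0 ω}).toReal
      ≥ 1 - (1 - h ^ ℓ) ^ u - ((1 - h) / h) ^ (ℓ - 1) := by
  rcases eq_or_lt_of_le hℓ with hℓ1 | hℓ2
  · -- ℓ = 1 : the right-hand side is nonpositive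
    have hRHS : 1 - (1 - h ^ ℓ) ^ u - ((1 - h) / h) ^ (ℓ - 1) ≤ 0 := by
      rw [← hℓ1]
      have h1 : ((1 - h) / h) ^ (1 - 1) = 1 := by norm_num
      have h2 : (0:ℝ) ≤ (1 - h ^ 1) ^ u := by
        apply pow_nonneg; simp; linarith
      rw [h1]; linarith
    exact le_trans hRHS ENNReal.toReal_nonneg
  have hℓ2 : 2 ≤ ℓ := hℓ2
  set N := ℓ * u with hN
  -- the word of the first N coin flips
  set word : Ω → (Fin N → Bool) := fun ω i => decide (ξ (i : ℕ) ω = 1) with hword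
  -- cylinder events
  set cylSets : (Fin N → Bool) → ℕ → Set ℕ := fun w n =>
    if hn : n < N then (if w ⟨n, hn⟩ then {1} else {1}ᶜ) else Set.univ with hcyl
  have hmeas_sets : ∀ (w : Fin N → Bool) (n : ℕ), MeasurableSet (cylSets w n) := by
    intro w n
    simp only [hcyl]
    split
    · split
      · exact measurableSet_singleton 1
      · exact (measurableSet_singleton 1).compl
    · exact MeasurableSet.univ
  have hEw : ∀ w : Fin N → Bool,
      {ω | word ω = w} = ⋂ n ∈ Finset.range N, ξ n ⁻¹' cylSets w n := by
    intro w
    ext ω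
    simp only [Set.mem_setOf_eq, Set.mem_iInter, Finset.mem_range]
    constructor
    · intro hw n hn
      have : word ω ⟨n, hn⟩ = w ⟨n, hn⟩ := by rw [hw]
      simp only [hword] at this
      simp only [Set.mem_preimage]
      simp only [hcyl]
      simp only [dif_pos hn]
      by_cases hwn : w ⟨n, hn⟩
      · rw [if_pos hwn]
        rw [hwn] at this
        simpa using of_decide_eq_true this
      · rw [if_neg hwn]
        simp only [Bool.not_eq_true] at hwn
        rw [hwn] at this
        have := of_decide_eq_false this
        simpa using this
    · intro hw
      funext i
      have := hw i i.2
      simp only [Set.mem_preimage] at this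
      simp only [hcyl] at this
      simp only [dif_pos i.2] at this
      simp only [hword]
      by_cases hwn : w ⟨(i:ℕ), i.2⟩
      · rw [if_pos hwn] at this
        simp only [Set.mem_singleton_iff] at this
        rw [Fin.eta] at hwn
        rw [hwn]
        exact decide_eq_true this
      · rw [if_neg hwn] at this
        simp only [Set.mem_compl_iff, Set.mem_singleton_iff] at this
        simp only [Bool.not_eq_true] at hwn
        rw [Fin.eta] at hwn
        rw [hwn]
        exact decide_eq_false this
  have hmeasEw : ∀ w : Fin N → Bool, MeasurableSet {ω | word ω = w} := by
    intro w
    rw [hEw w]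
    exact Finset.measurableSet_biInter _ (fun n _ => (h_meas n) (hmeas_sets w n))
  have hPfactor : ∀ (w : Fin N → Bool) (n : ℕ) (hn : n < N),
      P (ξ n ⁻¹' cylSets w n) = ENNReal.ofReal (if w ⟨n, hn⟩ then h else 1 - h) := by
    intro w n hn
    simp only [hcyl]
    simp only [dif_pos hn]
    have hpre1 : ξ n ⁻¹' {1} = {ω | ξ n ω = 1} := rfl
    by_cases hwn : w ⟨n, hn⟩
    · rw [if_pos hwn, if_pos hwn, hpre1, h_one n]
    · rw [if_neg hwn, if_neg hwn, Set.preimage_compl, hpre1,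
        prob_compl_eq_one_sub (by exact (h_meas n) (measurableSet_singleton 1)), h_one n]
      rw [← ENNReal.ofReal_one, ← ENNReal.ofReal_sub _ h_pos.le]
  have hPEw : ∀ w : Fin N → Bool, P {ω | word ω = w} = ENNReal.ofReal (Wt h w) := by
    intro w
    rw [hEw w]
    rw [h_indep.measure_inter_preimage_eq_mul (Finset.range N)
      (fun i _ => hmeas_sets w i)]
    have : ∀ n ∈ Finset.range N, P (ξ n ⁻¹' cylSets w n)
        = (fun n => if hn : n < N then ENNReal.ofReal (if w ⟨n, hn⟩ then h else 1 - h) else 1) n := by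
      intro n hn
      rw [Finset.mem_range] at hn
      rw [hPfactor w n hn]
      simp only [dif_pos hn]
    rw [Finset.prod_congr rfl this]
    rw [← Fin.prod_univ_eq_prod_range
      (fun n => if hn : n < N then ENNReal.ofReal (if w ⟨n, hn⟩ then h else 1 - h) else 1) N]
    have : ∀ i : Fin N,
        (if hn : (i:ℕ) < N then ENNReal.ofReal (if w ⟨(i:ℕ), hn⟩ then h else 1 - h) else 1)
          = ENNReal.ofReal (if w i then h else 1 - h) := by
      intro i
      rw [dif_pos i.2, Fin.eta]
    rw [Finset.prod_congr rfl (fun i _ => this i)]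
    rw [← ENNReal.ofReal_prod_of_nonneg]
    · rfl
    · intro i _
      split <;> linarith
  -- the main event
  set S : Finset (Fin N → Bool) :=
    Finset.univ.filter (fun w => WIN ℓ start (ext w) N) with hS
  have hEvent : {ω | WIN ℓ start (ext (word ω)) N} = ⋃ w ∈ S, {ω | word ω = w} := by
    ext ω
    simp only [Set.mem_setOf_eq, Set.mem_iUnion, hS, Finset.mem_filter, Finset.mem_univ,
      true_and]
    constructor
    · intro hw
      exact ⟨word ω, hw, rfl⟩
    · rintro ⟨w, hw, he⟩
      rwa [he]
  have hPE : P {ω | WIN ℓ start (ext (word ω)) N}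
      = ENNReal.ofReal (∑ w : Fin N → Bool, if WIN ℓ start (ext w) N then Wt h w else 0) := by
    rw [hEvent, measure_biUnion_finset ?_ (fun w _ => hmeasEw w)]
    · rw [Finset.sum_congr rfl (fun w _ => hPEw w)]
      rw [← ENNReal.ofReal_sum_of_nonneg (fun w _ => Wt_nonneg h_pos h_lt w)]
      congr 1
      rw [hS, Finset.sum_filter]
    · intro w _ w' _ hne
      simp only [Function.onFun, Set.disjoint_left]
      intro ω hω hω'
      exact hne (hω ▸ hω')
  -- the event is included in the target event
  have hsub : {ω | WIN ℓ start (ext (word ω)) N}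
      ⊆ {ω | runTime ξ ℓ 1 ω ≤ ((ℓ * u : ℕ) : ℕ∞)
            ∧ runTime ξ ℓ 1 ω < runTime ξ ℓ 0 ω} := by
    intro ω hω
    obtain ⟨m, hmN, habs1, hno0⟩ := hω
    have hrun := abs_to_run ℓ (ext (word ω)) m habs1.2
    have hm1 : ∀ i < ℓ, ξ (m - 1 - i) ω = 1 := by
      intro i hi
      have hidx : m - 1 - i < N := by omega
      have := hrun.2 i hi
      rw [habs1.1, ext_lt _ hidx] at this
      rw [hword] at this
      simpa using of_decide_eq_true this
    have hmem : (m : ℕ∞) ∈ {t : ℕ∞ | ∃ m' : ℕ, t = (m' : ℕ∞) ∧ ℓ ≤ m' ∧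
        ∀ i < ℓ, ξ (m' - 1 - i) ω = 1} := ⟨m, rfl, hrun.1, hm1⟩
    have hτ1 : runTime ξ ℓ 1 ω ≤ (m : ℕ∞) := sInf_le hmem
    constructor
    · exact le_trans hτ1 (by exact_mod_cast Nat.cast_le.mpr hmN)
    · have hτ0 : ((m + 1 : ℕ) : ℕ∞) ≤ runTime ξ ℓ 0 ω := by
        apply le_sInf
        rintro t ⟨m', rfl, hℓm', hrun0⟩
        by_contra hlt
        push_neg at hlt
        have hm'm : m' ≤ m := by
          have := lt_of_lt_of_le hlt (le_refl _)
          exact_mod_cast Nat.lt_succ_iff.mp (by exact_mod_cast this)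
        have hrunw : ∀ i < ℓ, ext (word ω) (m' - 1 - i) = false := by
          intro i hi
          have hidx : m' - 1 - i < N := by omega
          rw [ext_lt _ hidx]
          simp only [hword]
          apply decide_eq_false
          rw [hrun0 i hi]
          omega
        have := run_to_abs ℓ (by omega) (ext (word ω)) false m' hℓm' hrunw
        exact hno0 m' hm'm ⟨this.1, this.2⟩
      calc runTime ξ ℓ 1 ω ≤ (m : ℕ∞) := hτ1
        _ < ((m + 1 : ℕ) : ℕ∞) := by exact_mod_cast Nat.lt_succ_self m
        _ ≤ runTime ξ ℓ 0 ω := hτ0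
  -- conclude
  set R := 1 - (1 - h ^ ℓ) ^ u - ((1 - h) / h) ^ (ℓ - 1) with hR
  have hcomb := main_comb (u := u) h_pos h_lt hℓ2
  have hSnonneg : 0 ≤ ∑ w : Fin N → Bool, if WIN ℓ start (ext w) N then Wt h w else 0 := by
    apply Finset.sum_nonneg
    intro w _
    split
    · exact Wt_nonneg h_pos h_lt w
    · exact le_refl 0
  have hPmono : P {ω | WIN ℓ start (ext (word ω)) N}
      ≤ P {ω | runTime ξ ℓ 1 ω ≤ ((ℓ * u : ℕ) : ℕ∞)
            ∧ runTime ξ ℓ 1 ω < runTime ξ ℓ 0 ω} := measure_mono hsub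
  have htop : P {ω | runTime ξ ℓ 1 ω ≤ ((ℓ * u : ℕ) : ℕ∞)
            ∧ runTime ξ ℓ 1 ω < runTime ξ ℓ 0 ω} ≠ ⊤ := measure_ne_top P _
  have h1 := ENNReal.toReal_mono htop hPmono
  rw [hPE, ENNReal.toReal_ofReal hSnonneg] at h1
  have h2 : R ≤ ∑ w : Fin N → Bool, if WIN ℓ start (ext w) N then Wt h w else 0 := hcomb
  linarith
end

section
/- Let h ∈ (0,1), let ℓ ≥ 1, u ≥ 1 and N ≥ 1 be integers, and for each j = 1, …, N let (ξ_m^{(j)})_{m≥1} be a sequence of i.i.d. Bernoulli(h) random variables (the N sequences are defined on a common probability space but are not assumed independent of each other). For each j let τ_j⁽¹⁾ (respectively τ_j⁽⁰⁾) be the first time m ≥ ℓ such that ξ_m^{(j)} = ξ_{m−1}^{(j)} = ⋯ = ξ_{m−ℓ+1}^{(j)} = 1 (respectively all equal 0). Then P[τ_j⁽¹⁾ ≤ ℓu and τ_j⁽¹⁾ < τ_j⁽⁰⁾ for all j = 1, …, N] ≥ 1 − N((1 − h^ℓ)^u + ((1−h)/h)^{ℓ−1}). -/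
set_option linter.unusedSectionVars false
set_option linter.unusedVariables false
set_option maxHeartbeats 1000000

open MeasureTheory ProbabilityTheory
open scoped ENNReal

section Runs

variable {Ω : Type*}

/-- run of length `ℓ` of value `v` completed at (1-based) time `m`. -/
def runAt (ξ : ℕ → Ω → ℕ) (ℓ v m : ℕ) (ω : Ω) : Prop :=
  ℓ ≤ m ∧ ∀ i < ℓ, ξ (m - 1 - i) ω = v

lemma runAt_iff {ξ : ℕ → Ω → ℕ} {ℓ v m : ℕ} {ω : Ω} (hℓ : 1 ≤ ℓ) :
    runAt ξ ℓ v m ω ↔ ℓ ≤ m ∧ ∀ c, m - ℓ ≤ c → c ≤ m - 1 → ξ c ω = v := by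
  constructor
  · rintro ⟨hm, H⟩
    refine ⟨hm, fun c h1 h2 => ?_⟩
    have := H (m - 1 - c) (by omega)
    rwa [show m - 1 - (m - 1 - c) = c by omega] at this
  · rintro ⟨hm, H⟩
    exact ⟨hm, fun i hi => H (m - 1 - i) (by omega) (by omega)⟩

lemma runTime_eq_sInf_image (ξ : ℕ → Ω → ℕ) (ℓ v : ℕ) (ω : Ω) :
    runTime ξ ℓ v ω = sInf ((fun m : ℕ => (m : ℕ∞)) '' {m | runAt ξ ℓ v m ω}) := by
  unfold runTime
  congr 1
  ext t
  constructor
  · rintro ⟨m, rfl, h1, h2⟩; exact ⟨m, ⟨h1, h2⟩, rfl⟩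
  · rintro ⟨m, ⟨h1, h2⟩, rfl⟩; exact ⟨m, rfl, h1, h2⟩

lemma runTime_le_coe {ξ : ℕ → Ω → ℕ} {ℓ v m : ℕ} {ω : Ω} (hm : runAt ξ ℓ v m ω) :
    runTime ξ ℓ v ω ≤ (m : ℕ∞) := by
  rw [runTime_eq_sInf_image]
  exact sInf_le ⟨m, hm, rfl⟩

lemma runTime_le_iff {ξ : ℕ → Ω → ℕ} {ℓ v n : ℕ} {ω : Ω} :
    runTime ξ ℓ v ω ≤ (n : ℕ∞) ↔ ∃ m ≤ n, runAt ξ ℓ v m ω := by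
  constructor
  · intro hle
    by_contra hcon
    push_neg at hcon
    have : ((n + 1 : ℕ) : ℕ∞) ≤ runTime ξ ℓ v ω := by
      rw [runTime_eq_sInf_image]
      refine le_sInf ?_
      rintro t ⟨m, hm, rfl⟩
      have : ¬ m ≤ n := fun hmn => hcon m hmn hm
      have hh : n + 1 ≤ m := by omega
      show ((n+1:ℕ) : ℕ∞) ≤ (m : ℕ∞)
      exact_mod_cast hh
    have := this.trans hle
    exact absurd (by exact_mod_cast this) (by omega)
  · rintro ⟨m, hmn, hm⟩
    exact (runTime_le_coe hm).trans (by exact_mod_cast hmn)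

lemma runTime_eq_coe_sInf {ξ : ℕ → Ω → ℕ} {ℓ v : ℕ} {ω : Ω}
    (hne : {m | runAt ξ ℓ v m ω}.Nonempty) :
    runTime ξ ℓ v ω = ((sInf {m | runAt ξ ℓ v m ω} : ℕ) : ℕ∞) := by
  refine le_antisymm (runTime_le_coe (Nat.sInf_mem hne)) ?_
  rw [runTime_eq_sInf_image]
  refine le_sInf ?_
  rintro t ⟨m, hm, rfl⟩
  show ((sInf {m | runAt ξ ℓ v m ω} : ℕ) : ℕ∞) ≤ (m : ℕ∞)
  exact_mod_cast Nat.sInf_le hm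

lemma runTime_lt_iff {ξ : ℕ → Ω → ℕ} {ℓ v v' : ℕ} {ω : Ω} :
    runTime ξ ℓ v ω < runTime ξ ℓ v' ω ↔
      ∃ m, runAt ξ ℓ v m ω ∧ ∀ t ≤ m, ¬ runAt ξ ℓ v' t ω := by
  constructor
  · intro hlt
    have hne : {m | runAt ξ ℓ v m ω}.Nonempty := by
      by_contra hcon
      rw [Set.not_nonempty_iff_eq_empty] at hcon
      rw [runTime_eq_sInf_image, hcon, Set.image_empty, sInf_empty] at hlt
      exact (not_top_lt (hlt.trans_le le_top))
    set m₀ := sInf {m | runAt ξ ℓ v m ω} with hm₀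
    refine ⟨m₀, Nat.sInf_mem hne, fun t ht hrun => ?_⟩
    have h1 : runTime ξ ℓ v' ω ≤ (t : ℕ∞) := runTime_le_coe hrun
    have h2 : runTime ξ ℓ v ω = (m₀ : ℕ∞) := runTime_eq_coe_sInf hne
    rw [h2] at hlt
    have : (m₀ : ℕ∞) < (t : ℕ∞) := lt_of_lt_of_le hlt h1
    exact absurd (by exact_mod_cast this) (by omega)
  · rintro ⟨m, hrun, hno⟩
    have h1 : runTime ξ ℓ v ω ≤ (m : ℕ∞) := runTime_le_coe hrun
    have h2 : ¬ runTime ξ ℓ v' ω ≤ (m : ℕ∞) := by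
      rw [runTime_le_iff]
      rintro ⟨t, htm, ht⟩
      exact hno t htm ht
    exact lt_of_le_of_lt h1 (lt_of_not_ge h2)

/-! ### Events -/

/-- no run (of either value) is completed at any time `t` with `ℓ ≤ t ≤ a`. -/
def NRset (ξ : ℕ → Ω → ℕ) (ℓ a : ℕ) : Set Ω :=
  {ω | ∀ t, ℓ ≤ t → t ≤ a → ¬ runAt ξ ℓ 0 t ω ∧ ¬ runAt ξ ℓ 1 t ω}

def onesSet (ξ : ℕ → Ω → ℕ) (s k : ℕ) : Set Ω :=
  {ω | ∀ c, s ≤ c → c < s + k → ξ c ω = 1}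

def zerosSet (ξ : ℕ → Ω → ℕ) (s k : ℕ) : Set Ω :=
  {ω | ∀ c, s ≤ c → c < s + k → ξ c ω = 0}

def DSet (ξ : ℕ → Ω → ℕ) (ℓ m : ℕ) : Set Ω :=
  {ω | runAt ξ ℓ 0 m ω ∧ ∀ t < m, ¬ runAt ξ ℓ 0 t ω ∧ ¬ runAt ξ ℓ 1 t ω}

def BSet (ξ : ℕ → Ω → ℕ) (ℓ m : ℕ) : Set Ω :=
  NRset ξ ℓ (m - ℓ) ∩ {ω | ξ (m - ℓ - 1) ω ≠ 0}

def ESet (ξ : ℕ → Ω → ℕ) (ℓ m : ℕ) : Set Ω :=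
  (BSet ξ ℓ m ∩ onesSet ξ (m - ℓ) (ℓ - 1)) ∩ {ω | ξ (m - 1) ω = 0}

def ASet (ξ : ℕ → Ω → ℕ) (ℓ s : ℕ) : Set Ω :=
  NRset ξ ℓ s ∩ {ω | s = 0 ∨ ξ (s - 1) ω ≠ 1}

def GSet (ξ : ℕ → Ω → ℕ) (ℓ s : ℕ) : Set Ω := ASet ξ ℓ s ∩ onesSet ξ s ℓ

def GLSet (ξ : ℕ → Ω → ℕ) (ℓ s : ℕ) : Set Ω := ASet ξ ℓ s ∩ onesSet ξ s (2 * ℓ - 1)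

def omega01 (ξ : ℕ → Ω → ℕ) : Set Ω := {ω | ∀ n, ξ n ω = 0 ∨ ξ n ω = 1}

def goodSet (ξ : ℕ → Ω → ℕ) (ℓ : ℕ) : Set Ω :=
  {ω | ∃ m, runAt ξ ℓ 1 m ω ∧ ∀ t ≤ m, ¬ runAt ξ ℓ 0 t ω}

def ZinfSet (ξ : ℕ → Ω → ℕ) (ℓ : ℕ) : Set Ω := {ω | ∀ m, ¬ runAt ξ ℓ 1 m ω}

def CSet (ξ : ℕ → Ω → ℕ) (ℓ u : ℕ) : Set Ω :=
  {ω | ∀ k < u, ∃ i < ℓ, ξ (k * ℓ + i) ω ≠ 1}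

variable {ξ : ℕ → Ω → ℕ} {ℓ : ℕ} {ω : Ω}

/-! ### Facts about `ESet` -/

lemma E_ones (hℓ : 1 ≤ ℓ) (hω : ω ∈ omega01 ξ) {m : ℕ} (hm : ℓ + 1 ≤ m)
    (hE : ω ∈ ESet ξ ℓ m) : ∀ c, m - ℓ - 1 ≤ c → c ≤ m - 2 → ξ c ω = 1 := by
  intro c h1 h2
  rcases eq_or_lt_of_le h1 with heq | hlt
  · rcases hω c with h0 | h1'
    · exact absurd (heq ▸ h0) hE.1.1.2
    · exact h1'
  · exact hE.1.2 c (by omega) (by omega)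

lemma E_run1 (hℓ : 1 ≤ ℓ) (hω : ω ∈ omega01 ξ) {m : ℕ} (hm : ℓ + 1 ≤ m)
    (hE : ω ∈ ESet ξ ℓ m) : runAt ξ ℓ 1 (m - 1) ω := by
  rw [runAt_iff hℓ]
  exact ⟨by omega, fun c h1 h2 => E_ones hℓ hω hm hE c (by omega) (by omega)⟩

lemma E_zero {m : ℕ} (hE : ω ∈ ESet ξ ℓ m) : ξ (m - 1) ω = 0 := hE.2

lemma E_NR {m : ℕ} (hE : ω ∈ ESet ξ ℓ m) : ω ∈ NRset ξ ℓ (m - ℓ) := hE.1.1.1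

/-! ### Facts about `DSet` -/

lemma D_zeros (hℓ : 1 ≤ ℓ) {m : ℕ} (hD : ω ∈ DSet ξ ℓ m) :
    ∀ c, m - ℓ ≤ c → c ≤ m - 1 → ξ c ω = 0 := ((runAt_iff hℓ).1 hD.1).2

lemma D_le {m : ℕ} (hD : ω ∈ DSet ξ ℓ m) : ℓ ≤ m := hD.1.1

lemma D_subset_BZ (hℓ : 1 ≤ ℓ) {m : ℕ} (hm : ℓ + 1 ≤ m) (hω : ω ∈ omega01 ξ)
    (hD : ω ∈ DSet ξ ℓ m) :
    ω ∈ (BSet ξ ℓ m ∩ zerosSet ξ (m - ℓ) (ℓ - 1)) ∩ {ω | ξ (m - 1) ω = 0} := by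
  have hz := D_zeros hℓ hD
  refine ⟨⟨⟨fun t h1 h2 => hD.2 t (by omega), ?_⟩, fun c h1 h2 => hz c (by omega) (by omega)⟩,
    hz (m - 1) (by omega) le_rfl⟩
  -- ξ (m - ℓ - 1) ω ≠ 0
  intro h0
  have : runAt ξ ℓ 0 (m - 1) ω := by
    rw [runAt_iff hℓ]
    refine ⟨by omega, fun c hc1 hc2 => ?_⟩
    rcases eq_or_lt_of_le hc1 with heq | hlt
    · rw [show m - 1 - ℓ = m - ℓ - 1 by omega] at heq
      exact heq ▸ h0
    · exact hz c (by omega) (by omega)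
  exact (hD.2 (m - 1) (by omega)).1 this

lemma D_subset_zeros (hℓ : 1 ≤ ℓ) (hD : ω ∈ DSet ξ ℓ ℓ) : ω ∈ zerosSet ξ 0 ℓ :=
  fun c h1 h2 => D_zeros hℓ hD c (by omega) (by omega)

/-! ### Facts about `GSet` -/

lemma GL_subset_G (hℓ : 1 ≤ ℓ) {s : ℕ} : GLSet ξ ℓ s ⊆ GSet ξ ℓ s := by
  rintro ω ⟨hA, hones⟩
  exact ⟨hA, fun c h1 h2 => hones c h1 (by omega)⟩

lemma G_run1 (hℓ : 1 ≤ ℓ) {s : ℕ} (hG : ω ∈ GSet ξ ℓ s) : runAt ξ ℓ 1 (s + ℓ) ω := by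
  rw [runAt_iff hℓ]
  exact ⟨by omega, fun c h1 h2 => hG.2 c (by omega) (by omega)⟩

lemma G_no0 (hℓ : 1 ≤ ℓ) {s : ℕ} (hG : ω ∈ GSet ξ ℓ s) :
    ∀ t ≤ s + ℓ, ¬ runAt ξ ℓ 0 t ω := by
  intro t ht hrun
  rcases le_or_gt t s with hts | hts
  · exact (hG.1.1 t hrun.1 hts).1 hrun
  · have := ((runAt_iff hℓ).1 hrun).2 (t - 1) (by omega) le_rfl
    have h1 : ξ (t - 1) ω = 1 := hG.2 (t - 1) (by omega) (by omega)
    omega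

lemma G_subset_good (hℓ : 1 ≤ ℓ) {s : ℕ} : GSet ξ ℓ s ⊆ goodSet ξ ℓ := by
  intro ω hG
  exact ⟨s + ℓ, G_run1 hℓ hG, G_no0 hℓ hG⟩

/-! ### Disjointness -/

lemma D_disj {m m' : ℕ} (hmm : m < m') (hD : ω ∈ DSet ξ ℓ m) (hD' : ω ∈ DSet ξ ℓ m') :
    False := (hD'.2 m hmm).1 hD.1

lemma E_disj (hℓ : 1 ≤ ℓ) (hω : ω ∈ omega01 ξ) {m m' : ℕ} (hm : ℓ + 1 ≤ m)
    (hm' : ℓ + 1 ≤ m') (hmm : m < m') (hE : ω ∈ ESet ξ ℓ m) (hE' : ω ∈ ESet ξ ℓ m') :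
    False := by
  rcases le_or_gt m' (m + ℓ) with hc | hc
  · have h1 : ξ (m - 1) ω = 1 := E_ones hℓ hω hm' hE' (m - 1) (by omega) (by omega)
    have h0 : ξ (m - 1) ω = 0 := E_zero hE
    omega
  · exact (E_NR hE' (m - 1) (by omega) (by omega)).2 (E_run1 hℓ hω hm hE)

lemma D_not_good {m : ℕ} (hD : ω ∈ DSet ξ ℓ m) (hG : ω ∈ goodSet ξ ℓ) : False := by
  obtain ⟨m₁, hrun1, hno0⟩ := hG
  rcases le_or_gt m m₁ with hc | hc
  · exact hno0 m hc hD.1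
  · exact (hD.2 m₁ hc).2 hrun1

lemma ED_disj (hℓ : 1 ≤ ℓ) (hω : ω ∈ omega01 ξ) {m m' : ℕ} (hm : ℓ + 1 ≤ m)
    (hE : ω ∈ ESet ξ ℓ m) (hD : ω ∈ DSet ξ ℓ m') : False := by
  rcases lt_or_ge (m - 1) m' with hc | hc
  · exact (hD.2 (m - 1) hc).2 (E_run1 hℓ hω hm hE)
  · have hℓm' : ℓ ≤ m' := D_le hD
    rcases le_or_gt m' (m - ℓ - 1) with hc2 | hc2
    · exact (E_NR hE m' hℓm' (by omega)).1 hD.1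
    · have h1 : ξ (m' - 1) ω = 1 := E_ones hℓ hω hm hE (m' - 1) (by omega) (by omega)
      have h0 : ξ (m' - 1) ω = 0 := D_zeros hℓ hD (m' - 1) (by omega) (by omega)
      omega

lemma GLE_disj (hℓ : 1 ≤ ℓ) (hω : ω ∈ omega01 ξ) {s m : ℕ} (hm : ℓ + 1 ≤ m)
    (hGL : ω ∈ GLSet ξ ℓ s) (hE : ω ∈ ESet ξ ℓ m) : False := by
  have hG : ω ∈ GSet ξ ℓ s := GL_subset_G hℓ hGL
  rcases le_or_gt (s + ℓ) (m - ℓ) with hc | hc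
  · exact (E_NR hE (s + ℓ) (by omega) hc).2 (G_run1 hℓ hG)
  · rcases le_or_gt s (m - 1) with hc2 | hc2
    · have h1 : ξ (m - 1) ω = 1 := hGL.2 (m - 1) hc2 (by omega)
      have h0 : ξ (m - 1) ω = 0 := E_zero hE
      omega
    · exact (hGL.1.1 (m - 1) (by omega) (by omega)).2 (E_run1 hℓ hω hm hE)

lemma G_disj (hℓ : 1 ≤ ℓ) {s s' : ℕ} (hss : s < s') (hG : ω ∈ GSet ξ ℓ s)
    (hG' : ω ∈ GSet ξ ℓ s') : False := by
  rcases le_or_gt (s + ℓ) s' with hc | hc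
  · exact (hG'.1.1 (s + ℓ) (by omega) hc).2 (G_run1 hℓ hG)
  · have h1 : ξ (s' - 1) ω = 1 := hG.2 (s' - 1) (by omega) (by omega)
    rcases hG'.1.2 with h | h
    · omega
    · exact h h1

/-! ### `goodSet` decomposition -/

lemma good_eq_iUnion_G (hℓ : 1 ≤ ℓ) : goodSet ξ ℓ = ⋃ s, GSet ξ ℓ s := by
  apply Set.Subset.antisymm
  · intro ω hgood
    obtain ⟨m, hrun1, hno0⟩ := hgood
    have hne : {t | runAt ξ ℓ 1 t ω}.Nonempty := ⟨m, hrun1⟩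
    set m₀ := sInf {t | runAt ξ ℓ 1 t ω} with hm₀def
    have hm₀ : runAt ξ ℓ 1 m₀ ω := Nat.sInf_mem hne
    have hm₀le : m₀ ≤ m := Nat.sInf_le hrun1
    have hℓm₀ : ℓ ≤ m₀ := hm₀.1
    have hSne : (m₀ - ℓ) ∈ {c | ∀ d, c ≤ d → d ≤ m₀ - 1 → ξ d ω = 1} := by
      intro d h1 h2
      exact ((runAt_iff hℓ).1 hm₀).2 d (by omega) h2
    set s := sInf {c | ∀ d, c ≤ d → d ≤ m₀ - 1 → ξ d ω = 1} with hsdef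
    have hs : ∀ d, s ≤ d → d ≤ m₀ - 1 → ξ d ω = 1 := Nat.sInf_mem ⟨_, hSne⟩
    have hsle : s ≤ m₀ - ℓ := Nat.sInf_le hSne
    refine Set.mem_iUnion.2 ⟨s, ⟨⟨?_, ?_⟩, ?_⟩⟩
    · intro t h1 h2
      constructor
      · exact fun hr => hno0 t (by omega) hr
      · intro hr
        have := Nat.sInf_le (show t ∈ {t | runAt ξ ℓ 1 t ω} from hr)
        omega
    · rcases Nat.eq_zero_or_pos s with h | h
      · exact Or.inl h
      · refine Or.inr fun h1 => ?_
        have : (s - 1) ∈ {c | ∀ d, c ≤ d → d ≤ m₀ - 1 → ξ d ω = 1} := by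
          intro d hd1 hd2
          rcases eq_or_lt_of_le hd1 with heq | hlt
          · exact heq ▸ h1
          · exact hs d (by omega) hd2
        have := Nat.sInf_le this
        omega
    · exact fun c h1 h2 => hs c h1 (by omega)
  · exact Set.iUnion_subset fun s => G_subset_good hℓ

/-! ### bad covering -/

lemma bad_cover (hω : ω ∉ goodSet ξ ℓ) :
    ω ∈ ZinfSet ξ ℓ ∨ ∃ m, ℓ ≤ m ∧ ω ∈ DSet ξ ℓ m := by
  have hng : ∀ m, runAt ξ ℓ 1 m ω → ∃ t ≤ m, runAt ξ ℓ 0 t ω := by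
    intro m hr
    by_contra hcon
    push_neg at hcon
    exact hω ⟨m, hr, hcon⟩
  by_cases hex : ∃ t, runAt ξ ℓ 0 t ω
  · right
    have hne : {t | runAt ξ ℓ 0 t ω}.Nonempty := hex
    set t₀ := sInf {t | runAt ξ ℓ 0 t ω} with ht₀def
    have ht₀ : runAt ξ ℓ 0 t₀ ω := Nat.sInf_mem hne
    refine ⟨t₀, ht₀.1, ht₀, fun t ht => ⟨fun hr => ?_, fun hr => ?_⟩⟩
    · have := Nat.sInf_le (show t ∈ {t | runAt ξ ℓ 0 t ω} from hr); omega
    · obtain ⟨t', ht', hr'⟩ := hng t hr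
      have := Nat.sInf_le (show t' ∈ {t | runAt ξ ℓ 0 t ω} from hr'); omega
  · left
    intro m hr
    obtain ⟨t, _, hr'⟩ := hng m hr
    exact hex ⟨t, hr'⟩

lemma Zinf_subset_C (hℓ : 1 ≤ ℓ) (u : ℕ) : ZinfSet ξ ℓ ⊆ CSet ξ ℓ u := by
  intro ω hZ k _
  by_contra hcon
  push_neg at hcon
  refine hZ (k * ℓ + ℓ) ?_
  rw [runAt_iff hℓ]
  refine ⟨by omega, fun c h1 h2 => ?_⟩
  have := hcon (c - k * ℓ) (by omega)
  rwa [show k * ℓ + (c - k * ℓ) = c by omega] at this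

lemma noRun1_subset_C (hℓ : 1 ≤ ℓ) {u : ℕ}
    (hno : ∀ m ≤ ℓ * u, ¬ runAt ξ ℓ 1 m ω) : ω ∈ CSet ξ ℓ u := by
  intro k hk
  by_contra hcon
  push_neg at hcon
  refine hno (k * ℓ + ℓ) (by nlinarith) ?_
  rw [runAt_iff hℓ]
  refine ⟨by omega, fun c h1 h2 => ?_⟩
  have := hcon (c - k * ℓ) (by omega)
  rwa [show k * ℓ + (c - k * ℓ) = c by omega] at this

lemma CSet_eq (ξ : ℕ → Ω → ℕ) (ℓ κ : ℕ) (hℓ : 1 ≤ ℓ) :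
    CSet ξ ℓ κ = ⋂ k ∈ Set.Iio κ, (onesSet ξ (k * ℓ) ℓ)ᶜ := by
  ext ω
  simp only [CSet, Set.mem_setOf_eq, Set.mem_iInter, Set.mem_Iio, Set.mem_compl_iff]
  refine forall_congr' fun k => forall_congr' fun hk => ?_
  constructor
  · rintro ⟨i, hi, hne⟩ hall
    exact hne (hall (k * ℓ + i) (by omega) (by omega))
  · intro hn
    by_contra hcon
    push_neg at hcon
    refine hn fun c h1 h2 => ?_
    have := hcon (c - k * ℓ) (by omega)
    rwa [show k * ℓ + (c - k * ℓ) = c by omega] at this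

end Runs

/-! ### Independence infrastructure -/

section Prob
variable {Ω : Type*} [MeasurableSpace Ω] {P : Measure Ω} [IsProbabilityMeasure P]
  {ξ : ℕ → Ω → ℕ} {ℓ : ℕ} {h : ℝ}

/-- the σ-algebra generated by the coordinates in `S`. -/
def blockMS (ξ : ℕ → Ω → ℕ) (S : Set ℕ) : MeasurableSpace Ω :=
  ⨆ n ∈ S, MeasurableSpace.comap (ξ n) inferInstance

lemma ms_mono' {m1 m2 : MeasurableSpace Ω} (hle : m1 ≤ m2) {A : Set Ω}
    (hA : MeasurableSet[m1] A) : MeasurableSet[m2] A := hle _ hA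

lemma blockMS_mono {S T : Set ℕ} (hST : S ⊆ T) : blockMS ξ S ≤ blockMS ξ T :=
  iSup₂_le fun n hn =>
    le_iSup₂ (f := fun n (_ : n ∈ T) => MeasurableSpace.comap (ξ n) inferInstance) n (hST hn)

lemma blockMS_le (hmeas : ∀ n, Measurable (ξ n)) (S : Set ℕ) :
    blockMS ξ S ≤ ‹MeasurableSpace Ω› :=
  iSup₂_le fun n _ => (hmeas n).comap_le

lemma atom_comap (n v : ℕ) :
    MeasurableSet[MeasurableSpace.comap (ξ n) inferInstance] {ω | ξ n ω = v} :=
  ⟨{v}, measurableSet_singleton v, by ext ω; simp⟩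

lemma atom_block {S : Set ℕ} {n : ℕ} (hn : n ∈ S) (v : ℕ) :
    MeasurableSet[blockMS ξ S] {ω | ξ n ω = v} :=
  ms_mono' (le_iSup₂ (f := fun n (_ : n ∈ S) => MeasurableSpace.comap (ξ n) inferInstance) n hn)
    (atom_comap n v)

lemma atomNe_block {S : Set ℕ} {n : ℕ} (hn : n ∈ S) (v : ℕ) :
    MeasurableSet[blockMS ξ S] {ω | ξ n ω ≠ v} := by
  have heq : {ω | ξ n ω ≠ v} = {ω | ξ n ω = v}ᶜ := rfl
  rw [heq]
  exact MeasurableSet.compl (atom_block hn v)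

lemma runAt_block {S : Set ℕ} {t : ℕ} (hS : ∀ c < t, c ∈ S) (v : ℕ) :
    MeasurableSet[blockMS ξ S] {ω | runAt ξ ℓ v t ω} := by
  rcases le_or_gt ℓ t with hc | hc
  · have heq : {ω | runAt ξ ℓ v t ω} = ⋂ i ∈ Set.Iio ℓ, {ω | ξ (t - 1 - i) ω = v} := by
      ext ω
      simp only [Set.mem_setOf_eq, runAt, Set.mem_iInter, Set.mem_Iio]
      exact ⟨fun hr i hi => hr.2 i hi, fun hr => ⟨hc, fun i hi => hr i hi⟩⟩
    rw [heq]
    refine MeasurableSet.biInter (Set.to_countable _) fun i hi => ?_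
    have hi' : i < ℓ := hi
    exact atom_block (hS (t - 1 - i) (by omega)) v
  · have heq : {ω | runAt ξ ℓ v t ω} = (∅ : Set Ω) := by
      ext ω
      simp only [Set.mem_setOf_eq, runAt, Set.mem_empty_iff_false, iff_false, not_and]
      intro hle; omega
    rw [heq]
    exact @MeasurableSet.empty _ (blockMS ξ S)

lemma NRset_block {a : ℕ} : MeasurableSet[blockMS ξ (Set.Iio a)] (NRset ξ ℓ a) := by
  have heq : NRset ξ ℓ a =
      ⋂ t ∈ {t : ℕ | ℓ ≤ t ∧ t ≤ a}, ({ω | runAt ξ ℓ 0 t ω}ᶜ ∩ {ω | runAt ξ ℓ 1 t ω}ᶜ) := by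
    ext ω
    simp only [NRset, Set.mem_setOf_eq, Set.mem_iInter, Set.mem_inter_iff, Set.mem_compl_iff]
    exact ⟨fun H t ht => H t ht.1 ht.2, fun H t h1 h2 => H t ⟨h1, h2⟩⟩
  rw [heq]
  refine MeasurableSet.biInter (Set.to_countable _) fun t ht => ?_
  have hS : ∀ c < t, c ∈ Set.Iio a := fun c hcx => by
    simp only [Set.mem_Iio]; exact lt_of_lt_of_le hcx ht.2
  exact ((runAt_block hS 0).compl).inter ((runAt_block hS 1).compl)

lemma onesSet_block {s k : ℕ} :
    MeasurableSet[blockMS ξ (Set.Ico s (s + k))] (onesSet ξ s k) := by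
  have heq : onesSet ξ s k = ⋂ c ∈ Set.Ico s (s + k), {ω | ξ c ω = 1} := by
    ext ω
    simp only [onesSet, Set.mem_setOf_eq, Set.mem_iInter, Set.mem_Ico]
    exact ⟨fun H c hc => H c hc.1 hc.2, fun H c h1 h2 => H c ⟨h1, h2⟩⟩
  rw [heq]
  exact MeasurableSet.biInter (Set.to_countable _) fun c hc => atom_block hc 1

lemma zerosSet_block {s k : ℕ} :
    MeasurableSet[blockMS ξ (Set.Ico s (s + k))] (zerosSet ξ s k) := by
  have heq : zerosSet ξ s k = ⋂ c ∈ Set.Ico s (s + k), {ω | ξ c ω = 0} := by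
    ext ω
    simp only [zerosSet, Set.mem_setOf_eq, Set.mem_iInter, Set.mem_Ico]
    exact ⟨fun H c hc => H c hc.1 hc.2, fun H c h1 h2 => H c ⟨h1, h2⟩⟩
  rw [heq]
  exact MeasurableSet.biInter (Set.to_countable _) fun c hc => atom_block hc 0

lemma BSet_block (hℓ : 1 ≤ ℓ) {m : ℕ} (hm : ℓ + 1 ≤ m) :
    MeasurableSet[blockMS ξ (Set.Iio (m - ℓ))] (BSet ξ ℓ m) :=
  NRset_block.inter (atomNe_block (show m - ℓ - 1 ∈ Set.Iio (m - ℓ) by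
    simp only [Set.mem_Iio]; omega) 0)

lemma ASet_block {s : ℕ} : MeasurableSet[blockMS ξ (Set.Iio s)] (ASet ξ ℓ s) := by
  refine NRset_block.inter ?_
  rcases Nat.eq_zero_or_pos s with hs | hs
  · have heq : {ω : Ω | s = 0 ∨ ξ (s - 1) ω ≠ 1} = Set.univ := by
      ext ω; simp [hs]
    rw [heq]
    exact @MeasurableSet.univ _ (blockMS ξ (Set.Iio s))
  · have heq : {ω : Ω | s = 0 ∨ ξ (s - 1) ω ≠ 1} = {ω | ξ (s - 1) ω ≠ 1} := by
      ext ω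
      simp only [Set.mem_setOf_eq, or_iff_right_iff_imp]
      intro hs0; omega
    rw [heq]
    exact atomNe_block (show s - 1 ∈ Set.Iio s by simp only [Set.mem_Iio]; omega) 1

lemma CSet_block (hℓ : 1 ≤ ℓ) {κ : ℕ} :
    MeasurableSet[blockMS ξ (Set.Iio (κ * ℓ))] (CSet ξ ℓ κ) := by
  rw [CSet_eq ξ ℓ κ hℓ]
  refine MeasurableSet.biInter (Set.to_countable _) fun k hk => ?_
  refine MeasurableSet.compl ?_
  refine ms_mono' (blockMS_mono ?_) onesSet_block
  intro c hc
  have hc' : k * ℓ ≤ c ∧ c < k * ℓ + ℓ := hc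
  have hkl : (k + 1) * ℓ ≤ κ * ℓ := Nat.mul_le_mul_right ℓ (by exact hk)
  have : k * ℓ + ℓ = (k + 1) * ℓ := by ring
  simp only [Set.mem_Iio]
  omega

lemma disjIioIci (a : ℕ) : Disjoint (Set.Iio a) (Set.Ici a) := by
  rw [Set.disjoint_left]
  intro c h1 h2
  simp only [Set.mem_Iio] at h1
  simp only [Set.mem_Ici] at h2
  omega

lemma indep_blocks (hmeas : ∀ n, Measurable (ξ n))
    (hindep : iIndepFun ξ P) {S T : Set ℕ} (hST : Disjoint S T) :
    Indep (blockMS ξ S) (blockMS ξ T) P :=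
  indep_iSup_of_disjoint (fun n => (hmeas n).comap_le) hindep.iIndep hST

lemma indep_mul (hmeas : ∀ n, Measurable (ξ n))
    (hindep : iIndepFun ξ P) {S T : Set ℕ} (hST : Disjoint S T)
    {A B : Set Ω} (hA : MeasurableSet[blockMS ξ S] A) (hB : MeasurableSet[blockMS ξ T] B) :
    P (A ∩ B) = P A * P B :=
  (Indep_iff _ _ _).1 (indep_blocks hmeas hindep hST) A B hA hB

lemma prob_onesSet (hindep : iIndepFun ξ P)
    (h1 : ∀ n, P {ω | ξ n ω = 1} = ENNReal.ofReal h) (s k : ℕ) :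
    P (onesSet ξ s k) = ENNReal.ofReal h ^ k := by
  have heq : onesSet ξ s k = ⋂ c ∈ Finset.Ico s (s + k), {ω | ξ c ω = 1} := by
    ext ω
    simp only [onesSet, Set.mem_setOf_eq, Set.mem_iInter, Finset.mem_Ico]
    exact ⟨fun H c hc => H c hc.1 hc.2, fun H c hh1 h2 => H c ⟨hh1, h2⟩⟩
  rw [heq, hindep.meas_biInter (fun c _ => atom_comap c 1)]
  rw [Finset.prod_congr rfl fun c _ => h1 c, Finset.prod_const, Nat.card_Ico]
  congr 1
  omega

lemma prob_zerosSet (hindep : iIndepFun ξ P)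
    (h0 : ∀ n, P {ω | ξ n ω = 0} = ENNReal.ofReal (1 - h)) (s k : ℕ) :
    P (zerosSet ξ s k) = ENNReal.ofReal (1 - h) ^ k := by
  have heq : zerosSet ξ s k = ⋂ c ∈ Finset.Ico s (s + k), {ω | ξ c ω = 0} := by
    ext ω
    simp only [zerosSet, Set.mem_setOf_eq, Set.mem_iInter, Finset.mem_Ico]
    exact ⟨fun H c hc => H c hc.1 hc.2, fun H c hh1 h2 => H c ⟨hh1, h2⟩⟩
  rw [heq, hindep.meas_biInter (fun c _ => atom_comap c 0)]
  rw [Finset.prod_congr rfl fun c _ => h0 c, Finset.prod_const, Nat.card_Ico]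
  congr 1
  omega

lemma prob_CSet (h_pos : 0 < h) (h_lt : h < 1) (hℓ : 1 ≤ ℓ)
    (hmeas : ∀ n, Measurable (ξ n))
    (hindep : iIndepFun ξ P)
    (h1 : ∀ n, P {ω | ξ n ω = 1} = ENNReal.ofReal h) :
    ∀ κ, P (CSet ξ ℓ κ) ≤ ENNReal.ofReal ((1 - h ^ ℓ) ^ κ) := by
  have hone : (0:ℝ) ≤ 1 - h ^ ℓ := by
    have : h ^ ℓ ≤ 1 := pow_le_one₀ h_pos.le h_lt.le
    linarith
  intro κ
  induction κ with
  | zero =>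
      have : CSet ξ ℓ 0 = Set.univ := by
        ext ω; simp [CSet]
      rw [this, pow_zero, ENNReal.ofReal_one, measure_univ]
  | succ κ ih =>
      have hsplit : CSet ξ ℓ (κ + 1) = CSet ξ ℓ κ ∩ (onesSet ξ (κ * ℓ) ℓ)ᶜ := by
        rw [CSet_eq ξ ℓ (κ+1) hℓ, CSet_eq ξ ℓ κ hℓ]
        ext ω
        simp only [Set.mem_iInter, Set.mem_Iio, Set.mem_inter_iff, Set.mem_compl_iff]
        constructor
        · intro H
          exact ⟨fun k hk => H k (by omega), H κ (by omega)⟩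
        · rintro ⟨H1, H2⟩ k hk
          rcases Nat.lt_succ_iff_lt_or_eq.1 hk with hlt | heq
          · exact H1 k hlt
          · subst heq; exact H2
      have hcomplql : MeasurableSet[blockMS ξ (Set.Ici (κ * ℓ))] (onesSet ξ (κ * ℓ) ℓ)ᶜ := by
        refine MeasurableSet.compl ?_
        refine ms_mono' (blockMS_mono ?_) onesSet_block
        intro c hc
        have hc' : κ * ℓ ≤ c ∧ c < κ * ℓ + ℓ := hc
        exact Set.mem_Ici.2 hc'.1
      have hmul : P (CSet ξ ℓ (κ + 1)) = P (CSet ξ ℓ κ) * P (onesSet ξ (κ * ℓ) ℓ)ᶜ := by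
        rw [hsplit]
        exact indep_mul hmeas hindep (disjIioIci (κ * ℓ)) (CSet_block hℓ) hcomplql
      have hmOnes : MeasurableSet (onesSet ξ (κ * ℓ) ℓ) :=
        blockMS_le hmeas _ _ onesSet_block
      have hcompl : P (onesSet ξ (κ * ℓ) ℓ)ᶜ = ENNReal.ofReal (1 - h ^ ℓ) := by
        rw [prob_compl_eq_one_sub hmOnes, prob_onesSet hindep h1]
        rw [← ENNReal.ofReal_pow h_pos.le, ← ENNReal.ofReal_one,
          ← ENNReal.ofReal_sub 1 (by positivity)]
      rw [hmul, hcompl, pow_succ]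
      rw [ENNReal.ofReal_mul (by positivity)]
      exact mul_le_mul' ih le_rfl

end Prob

/-! ### The per-sequence estimate -/

theorem perSeq {Ω : Type*} [MeasurableSpace Ω] (P : Measure Ω) [IsProbabilityMeasure P]
    (h : ℝ) (h_pos : 0 < h) (h_lt : h < 1) (ℓ u : ℕ) (hℓ2 : 2 ≤ ℓ)
    (ξ : ℕ → Ω → ℕ) (hmeas : ∀ n, Measurable (ξ n))
    (hindep : iIndepFun ξ P)
    (h1 : ∀ n, P {ω | ξ n ω = 1} = ENNReal.ofReal h)
    (h0 : ∀ n, P {ω | ξ n ω = 0} = ENNReal.ofReal (1 - h)) :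
    P {ω | ¬(runTime ξ ℓ 1 ω ≤ ((ℓ * u : ℕ) : ℕ∞)
        ∧ runTime ξ ℓ 1 ω < runTime ξ ℓ 0 ω)}
      ≤ ENNReal.ofReal ((1 - h ^ ℓ) ^ u + ((1 - h) / h) ^ (ℓ - 1)) := by
  have hℓ1 : 1 ≤ ℓ := by omega
  set r : ℝ := ((1 - h) / h) ^ (ℓ - 1) with hrdef
  set c : ℝ := (1 - h ^ ℓ) ^ u with hcdef
  have hh1 : (0:ℝ) ≤ 1 - h := by linarith
  have hr0 : 0 ≤ r := by positivity
  have hc0 : 0 ≤ c := by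
    have : h ^ ℓ ≤ 1 := pow_le_one₀ h_pos.le h_lt.le
    have : (0:ℝ) ≤ 1 - h ^ ℓ := by linarith
    positivity
  -- atoms and basic measurability
  have mAtom : ∀ n v, MeasurableSet {ω | ξ n ω = v} := fun n v => by
    have heq : {ω | ξ n ω = v} = ξ n ⁻¹' {v} := rfl
    rw [heq]; exact (hmeas n) (measurableSet_singleton v)
  have mW : MeasurableSet (omega01 ξ) := by
    have heq : omega01 ξ = ⋂ n, ({ω | ξ n ω = 0} ∪ {ω | ξ n ω = 1}) := by
      ext ω; simp [omega01]
    rw [heq]; exact MeasurableSet.iInter fun n => (mAtom n 0).union (mAtom n 1)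
  have hWc : P (omega01 ξ)ᶜ = 0 := by
    have heq : (omega01 ξ)ᶜ = ⋃ n, ({ω | ξ n ω = 0} ∪ {ω | ξ n ω = 1})ᶜ := by
      ext ω
      simp only [omega01, Set.mem_compl_iff, Set.mem_setOf_eq, not_forall, Set.mem_iUnion,
        Set.mem_union]
    rw [heq]
    refine measure_iUnion_null fun n => ?_
    have h01 : P ({ω | ξ n ω = 0} ∪ {ω | ξ n ω = 1}) = 1 := by
      rw [measure_union ?_ (mAtom n 1), h0 n, h1 n,
        ← ENNReal.ofReal_add (by linarith) h_pos.le]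
      · norm_num
      · rw [Set.disjoint_left]
        intro ω hω0 hω1
        simp only [Set.mem_setOf_eq] at hω0 hω1
        omega
    rw [prob_compl_eq_one_sub ((mAtom n 0).union (mAtom n 1)), h01, tsub_self]
  have interW : ∀ X : Set Ω, P (X ∩ omega01 ξ) = P X := by
    intro X
    refine le_antisymm (measure_mono Set.inter_subset_left) ?_
    calc P X = P ((X ∩ omega01 ξ) ∪ (X ∩ (omega01 ξ)ᶜ)) := by
          rw [← Set.inter_union_distrib_left, Set.union_compl_self, Set.inter_univ]
      _ ≤ P (X ∩ omega01 ξ) + P (X ∩ (omega01 ξ)ᶜ) := measure_union_le _ _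
      _ ≤ P (X ∩ omega01 ξ) + 0 := by
          gcongr
          exact le_trans (measure_mono Set.inter_subset_right) (le_of_eq hWc)
      _ = P (X ∩ omega01 ξ) := add_zero _
  -- ambient measurability of the events
  have mRun : ∀ v t, MeasurableSet {ω | runAt ξ ℓ v t ω} := fun v t =>
    blockMS_le hmeas Set.univ _ (runAt_block (fun c _ => Set.mem_univ c) v)
  have mNR : ∀ a, MeasurableSet (NRset ξ ℓ a) := fun a =>
    blockMS_le hmeas _ _ NRset_block
  have mOnes : ∀ s k, MeasurableSet (onesSet ξ s k) := fun s k =>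
    blockMS_le hmeas _ _ onesSet_block
  have mZeros : ∀ s k, MeasurableSet (zerosSet ξ s k) := fun s k =>
    blockMS_le hmeas _ _ zerosSet_block
  have mB : ∀ m, ℓ + 1 ≤ m → MeasurableSet (BSet ξ ℓ m) := fun m hm =>
    blockMS_le hmeas _ _ (BSet_block hℓ1 hm)
  have mA : ∀ s, MeasurableSet (ASet ξ ℓ s) := fun s =>
    blockMS_le hmeas _ _ ASet_block
  have mE : ∀ m, ℓ + 1 ≤ m → MeasurableSet (ESet ξ ℓ m) := fun m hm =>
    ((mB m hm).inter (mOnes _ _)).inter (mAtom _ 0)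
  have mD : ∀ m, MeasurableSet (DSet ξ ℓ m) := by
    intro m
    have heq : DSet ξ ℓ m = {ω | runAt ξ ℓ 0 m ω} ∩
        ⋂ t ∈ Set.Iio m, ({ω | runAt ξ ℓ 0 t ω}ᶜ ∩ {ω | runAt ξ ℓ 1 t ω}ᶜ) := by
      ext ω
      simp only [DSet, Set.mem_setOf_eq, Set.mem_inter_iff, Set.mem_iInter, Set.mem_Iio,
        Set.mem_compl_iff]
    rw [heq]
    exact (mRun 0 m).inter (MeasurableSet.biInter (Set.to_countable _)
      fun t _ => ((mRun 0 t).compl.inter (mRun 1 t).compl))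
  have mG : ∀ s, MeasurableSet (GSet ξ ℓ s) := fun s => (mA s).inter (mOnes _ _)
  have mGL : ∀ s, MeasurableSet (GLSet ξ ℓ s) := fun s => (mA s).inter (mOnes _ _)
  have mGood : MeasurableSet (goodSet ξ ℓ) := by
    have heq : goodSet ξ ℓ = ⋃ m, ({ω | runAt ξ ℓ 1 m ω} ∩
        ⋂ t ∈ Set.Iic m, {ω | runAt ξ ℓ 0 t ω}ᶜ) := by
      ext ω
      simp only [goodSet, Set.mem_setOf_eq, Set.mem_iUnion, Set.mem_inter_iff, Set.mem_iInter,
        Set.mem_Iic, Set.mem_compl_iff]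
    rw [heq]
    exact MeasurableSet.iUnion fun m => (mRun 1 m).inter
      (MeasurableSet.biInter (Set.to_countable _) fun t _ => (mRun 0 t).compl)
  have mZinf : MeasurableSet (ZinfSet ξ ℓ) := by
    have heq : ZinfSet ξ ℓ = ⋂ m, {ω | runAt ξ ℓ 1 m ω}ᶜ := by
      ext ω; simp [ZinfSet]
    rw [heq]
    exact MeasurableSet.iInter fun m => (mRun 1 m).compl
  have mC : MeasurableSet (CSet ξ ℓ u) :=
    blockMS_le hmeas _ _ (CSet_block hℓ1)
  -- probability identities
  have PE : ∀ m, ℓ + 1 ≤ m →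
      P (ESet ξ ℓ m) = P (BSet ξ ℓ m) * ENNReal.ofReal (h ^ (ℓ - 1) * (1 - h)) := by
    intro m hm
    have hEeq : ESet ξ ℓ m
        = BSet ξ ℓ m ∩ (onesSet ξ (m - ℓ) (ℓ - 1) ∩ {ω | ξ (m - 1) ω = 0}) := by
      rw [ESet, Set.inter_assoc]
    have htail : MeasurableSet[blockMS ξ (Set.Ici (m - ℓ))]
        (onesSet ξ (m - ℓ) (ℓ - 1) ∩ {ω | ξ (m - 1) ω = 0}) := by
      refine MeasurableSet.inter ?_ (atom_block (Set.mem_Ici.2 (by omega)) 0)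
      refine ms_mono' (blockMS_mono ?_) onesSet_block
      intro cc hcc
      have hcc' : m - ℓ ≤ cc ∧ cc < m - ℓ + (ℓ - 1) := hcc
      exact Set.mem_Ici.2 hcc'.1
    have hstep1 : P (ESet ξ ℓ m) = P (BSet ξ ℓ m)
        * P (onesSet ξ (m - ℓ) (ℓ - 1) ∩ {ω | ξ (m - 1) ω = 0}) := by
      rw [hEeq]
      exact indep_mul hmeas hindep (disjIioIci (m - ℓ)) (BSet_block hℓ1 hm) htail
    have hdisj2 : Disjoint (Set.Ico (m - ℓ) (m - ℓ + (ℓ - 1))) ({m - 1} : Set ℕ) := by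
      rw [Set.disjoint_singleton_right]
      intro hmem
      have : m - ℓ ≤ m - 1 ∧ m - 1 < m - ℓ + (ℓ - 1) := hmem
      omega
    have hstep2 : P (onesSet ξ (m - ℓ) (ℓ - 1) ∩ {ω | ξ (m - 1) ω = 0})
        = P (onesSet ξ (m - ℓ) (ℓ - 1)) * P {ω | ξ (m - 1) ω = 0} :=
      indep_mul hmeas hindep hdisj2 onesSet_block (atom_block (show m - 1 ∈ ({m - 1} : Set ℕ) from rfl) 0)
    rw [hstep1, hstep2, prob_onesSet hindep h1, h0 (m - 1)]
    congr 1
    rw [← ENNReal.ofReal_pow h_pos.le, ← ENNReal.ofReal_mul (by positivity)]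
  have PDle : ∀ m, ℓ + 1 ≤ m →
      P (DSet ξ ℓ m ∩ omega01 ξ)
        ≤ P (BSet ξ ℓ m) * ENNReal.ofReal ((1 - h) ^ (ℓ - 1) * (1 - h)) := by
    intro m hm
    have hsub : DSet ξ ℓ m ∩ omega01 ξ ⊆
        (BSet ξ ℓ m ∩ zerosSet ξ (m - ℓ) (ℓ - 1)) ∩ {ω | ξ (m - 1) ω = 0} := by
      rintro ω ⟨hD, hωW⟩
      exact D_subset_BZ hℓ1 hm hωW hD
    refine le_trans (measure_mono hsub) (le_of_eq ?_)
    have hEeq : (BSet ξ ℓ m ∩ zerosSet ξ (m - ℓ) (ℓ - 1)) ∩ {ω | ξ (m - 1) ω = 0}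
        = BSet ξ ℓ m ∩ (zerosSet ξ (m - ℓ) (ℓ - 1) ∩ {ω | ξ (m - 1) ω = 0}) := by
      rw [Set.inter_assoc]
    have htail : MeasurableSet[blockMS ξ (Set.Ici (m - ℓ))]
        (zerosSet ξ (m - ℓ) (ℓ - 1) ∩ {ω | ξ (m - 1) ω = 0}) := by
      refine MeasurableSet.inter ?_ (atom_block (Set.mem_Ici.2 (by omega)) 0)
      refine ms_mono' (blockMS_mono ?_) zerosSet_block
      intro cc hcc
      have hcc' : m - ℓ ≤ cc ∧ cc < m - ℓ + (ℓ - 1) := hcc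
      exact Set.mem_Ici.2 hcc'.1
    have hstep1 : P ((BSet ξ ℓ m ∩ zerosSet ξ (m - ℓ) (ℓ - 1)) ∩ {ω | ξ (m - 1) ω = 0})
        = P (BSet ξ ℓ m) * P (zerosSet ξ (m - ℓ) (ℓ - 1) ∩ {ω | ξ (m - 1) ω = 0}) := by
      rw [hEeq]
      exact indep_mul hmeas hindep (disjIioIci (m - ℓ)) (BSet_block hℓ1 hm) htail
    have hdisj2 : Disjoint (Set.Ico (m - ℓ) (m - ℓ + (ℓ - 1))) ({m - 1} : Set ℕ) := by
      rw [Set.disjoint_singleton_right]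
      intro hmem
      have : m - ℓ ≤ m - 1 ∧ m - 1 < m - ℓ + (ℓ - 1) := hmem
      omega
    have hstep2 : P (zerosSet ξ (m - ℓ) (ℓ - 1) ∩ {ω | ξ (m - 1) ω = 0})
        = P (zerosSet ξ (m - ℓ) (ℓ - 1)) * P {ω | ξ (m - 1) ω = 0} :=
      indep_mul hmeas hindep hdisj2 zerosSet_block (atom_block (show m - 1 ∈ ({m - 1} : Set ℕ) from rfl) 0)
    rw [hstep1, hstep2, prob_zerosSet hindep h0, h0 (m - 1)]
    congr 1
    rw [← ENNReal.ofReal_pow hh1, ← ENNReal.ofReal_mul (by positivity)]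
  have hrh : r * (h ^ (ℓ - 1) * (1 - h)) = (1 - h) ^ (ℓ - 1) * (1 - h) := by
    rw [hrdef, div_pow, ← mul_assoc, div_mul_cancel₀]
    exact pow_ne_zero _ (ne_of_gt h_pos)
  have PDE : ∀ m, ℓ + 1 ≤ m →
      P (DSet ξ ℓ m ∩ omega01 ξ) ≤ ENNReal.ofReal r * P (ESet ξ ℓ m) := by
    intro m hm
    rw [PE m hm, ← mul_assoc, mul_comm (ENNReal.ofReal r), mul_assoc,
      ← ENNReal.ofReal_mul hr0, hrh]
    exact PDle m hm
  have PGL : ∀ s, P (GLSet ξ ℓ s)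
      = P (ASet ξ ℓ s) * ENNReal.ofReal (h ^ (2 * ℓ - 1)) := by
    intro s
    have htail : MeasurableSet[blockMS ξ (Set.Ici s)] (onesSet ξ s (2 * ℓ - 1)) := by
      refine ms_mono' (blockMS_mono ?_) onesSet_block
      intro cc hcc
      have hcc' : s ≤ cc ∧ cc < s + (2 * ℓ - 1) := hcc
      exact Set.mem_Ici.2 hcc'.1
    rw [GLSet, indep_mul hmeas hindep (disjIioIci s) ASet_block htail,
      prob_onesSet hindep h1, ← ENNReal.ofReal_pow h_pos.le]
  have PG : ∀ s, P (GSet ξ ℓ s) = P (ASet ξ ℓ s) * ENNReal.ofReal (h ^ ℓ) := by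
    intro s
    have htail : MeasurableSet[blockMS ξ (Set.Ici s)] (onesSet ξ s ℓ) := by
      refine ms_mono' (blockMS_mono ?_) onesSet_block
      intro cc hcc
      have hcc' : s ≤ cc ∧ cc < s + ℓ := hcc
      exact Set.mem_Ici.2 hcc'.1
    rw [GSet, indep_mul hmeas hindep (disjIioIci s) ASet_block htail,
      prob_onesSet hindep h1, ← ENNReal.ofReal_pow h_pos.le]
  have PD0 : P (DSet ξ ℓ ℓ ∩ omega01 ξ) ≤ ENNReal.ofReal ((1 - h) ^ ℓ) := by
    have hsub : DSet ξ ℓ ℓ ∩ omega01 ξ ⊆ zerosSet ξ 0 ℓ := by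
      rintro ω ⟨hD, _⟩
      exact D_subset_zeros hℓ1 hD
    refine le_trans (measure_mono hsub) (le_of_eq ?_)
    rw [prob_zerosSet hindep h0, ← ENNReal.ofReal_pow hh1]
  have PZ : P (ZinfSet ξ ℓ) = 0 := by
    have hble : ∀ κ : ℕ, P (ZinfSet ξ ℓ) ≤ ENNReal.ofReal ((1 - h ^ ℓ) ^ κ) := fun κ =>
      le_trans (measure_mono (Zinf_subset_C hℓ1 κ))
        (prob_CSet h_pos h_lt hℓ1 hmeas hindep h1 κ)
    have htend : Filter.Tendsto (fun κ : ℕ => ENNReal.ofReal ((1 - h ^ ℓ) ^ κ))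
        Filter.atTop (nhds 0) := by
      have h2 : Filter.Tendsto (fun κ : ℕ => (1 - h ^ ℓ) ^ κ) Filter.atTop (nhds 0) := by
        apply tendsto_pow_atTop_nhds_zero_of_abs_lt_one
        rw [abs_lt]
        have hp1 : h ^ ℓ ≤ 1 := pow_le_one₀ h_pos.le h_lt.le
        have hp0 : 0 < h ^ ℓ := pow_pos h_pos ℓ
        constructor <;> linarith
      have := ENNReal.tendsto_ofReal h2
      simpa using this
    have := ge_of_tendsto' htend hble
    exact le_antisymm this zero_le
  -- disjointness of the master family
  have disjD : Pairwise (Function.onFun Disjoint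
      (fun k => DSet ξ ℓ (ℓ + 1 + k) ∩ omega01 ξ)) := by
    intro i j hij
    have key : ∀ i j : ℕ, i < j → Disjoint (DSet ξ ℓ (ℓ + 1 + i) ∩ omega01 ξ)
        (DSet ξ ℓ (ℓ + 1 + j) ∩ omega01 ξ) := by
      intro i j hij
      rw [Set.disjoint_left]
      rintro ω ⟨hDi, _⟩ ⟨hDj, _⟩
      exact D_disj (by omega) hDi hDj
    rcases lt_or_gt_of_ne hij with hc | hc
    · exact key i j hc
    · exact (key j i hc).symm
  have disjE : Pairwise (Function.onFun Disjoint
      (fun k => ESet ξ ℓ (ℓ + 1 + k) ∩ omega01 ξ)) := by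
    intro i j hij
    have key : ∀ i j : ℕ, i < j → Disjoint (ESet ξ ℓ (ℓ + 1 + i) ∩ omega01 ξ)
        (ESet ξ ℓ (ℓ + 1 + j) ∩ omega01 ξ) := by
      intro i j hij
      rw [Set.disjoint_left]
      rintro ω ⟨hEi, hωW⟩ ⟨hEj, _⟩
      exact E_disj hℓ1 hωW (by omega) (by omega) (by omega) hEi hEj
    rcases lt_or_gt_of_ne hij with hc | hc
    · exact key i j hc
    · exact (key j i hc).symm
  have disjGL : Pairwise (Function.onFun Disjoint
      (fun s => GLSet ξ ℓ s ∩ omega01 ξ)) := by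
    intro i j hij
    have key : ∀ i j : ℕ, i < j → Disjoint (GLSet ξ ℓ i ∩ omega01 ξ)
        (GLSet ξ ℓ j ∩ omega01 ξ) := by
      intro i j hij
      rw [Set.disjoint_left]
      rintro ω ⟨hGi, _⟩ ⟨hGj, _⟩
      exact G_disj hℓ1 hij (GL_subset_G hℓ1 hGi) (GL_subset_G hℓ1 hGj)
    rcases lt_or_gt_of_ne hij with hc | hc
    · exact key i j hc
    · exact (key j i hc).symm
  have disjG : Pairwise (Function.onFun Disjoint (fun s => GSet ξ ℓ s)) := by
    intro i j hij
    have key : ∀ i j : ℕ, i < j → Disjoint (GSet ξ ℓ i) (GSet ξ ℓ j) := by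
      intro i j hij
      rw [Set.disjoint_left]
      rintro ω hGi hGj
      exact G_disj hℓ1 hij hGi hGj
    rcases lt_or_gt_of_ne hij with hc | hc
    · exact key i j hc
    · exact (key j i hc).symm
  -- abbreviations for the sums
  set A0 : ℝ≥0∞ := P (DSet ξ ℓ ℓ ∩ omega01 ξ) with hA0def
  set SD : ℝ≥0∞ := ∑' k, P (DSet ξ ℓ (ℓ + 1 + k) ∩ omega01 ξ) with hSDdef
  set SE : ℝ≥0∞ := ∑' k, P (ESet ξ ℓ (ℓ + 1 + k) ∩ omega01 ξ) with hSEdef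
  set SA : ℝ≥0∞ := ∑' s, P (ASet ξ ℓ s) with hSAdef
  have hDU : P (⋃ k, DSet ξ ℓ (ℓ + 1 + k) ∩ omega01 ξ) = SD :=
    measure_iUnion disjD fun k => (mD _).inter mW
  have hEU : P (⋃ k, ESet ξ ℓ (ℓ + 1 + k) ∩ omega01 ξ) = SE :=
    measure_iUnion disjE fun k => (mE _ (by omega)).inter mW
  have hGLU : P (⋃ s, GLSet ξ ℓ s ∩ omega01 ξ)
      = SA * ENNReal.ofReal (h ^ (2 * ℓ - 1)) := by
    rw [measure_iUnion disjGL fun s => (mGL s).inter mW]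
    rw [show (fun s => P (GLSet ξ ℓ s ∩ omega01 ξ)) = fun s => P (ASet ξ ℓ s)
        * ENNReal.ofReal (h ^ (2 * ℓ - 1)) from funext fun s => by rw [interW, PGL s]]
    exact ENNReal.tsum_mul_right
  have hgoodP : P (goodSet ξ ℓ) = SA * ENNReal.ofReal (h ^ ℓ) := by
    rw [good_eq_iUnion_G hℓ1, measure_iUnion disjG mG]
    rw [show (fun s => P (GSet ξ ℓ s)) = fun s => P (ASet ξ ℓ s)
        * ENNReal.ofReal (h ^ ℓ) from funext fun s => PG s]
    exact ENNReal.tsum_mul_right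
  -- the master disjoint-union bound
  have hbig : A0 + SD + SE + SA * ENNReal.ofReal (h ^ (2 * ℓ - 1)) ≤ 1 := by
    set U1 : Set Ω := ⋃ k, DSet ξ ℓ (ℓ + 1 + k) ∩ omega01 ξ with hU1def
    set U2 : Set Ω := ⋃ k, ESet ξ ℓ (ℓ + 1 + k) ∩ omega01 ξ with hU2def
    set U3 : Set Ω := ⋃ s, GLSet ξ ℓ s ∩ omega01 ξ with hU3def
    have mU1 : MeasurableSet U1 := MeasurableSet.iUnion fun k => (mD _).inter mW
    have mU2 : MeasurableSet U2 :=
      MeasurableSet.iUnion fun k => (mE _ (by omega)).inter mW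
    have mU3 : MeasurableSet U3 := MeasurableSet.iUnion fun s => (mGL s).inter mW
    have d23 : Disjoint U2 U3 := by
      rw [Set.disjoint_left]
      intro ω hω2 hω3
      obtain ⟨k, hEk, hωW⟩ := Set.mem_iUnion.1 hω2
      obtain ⟨s, hGLs, _⟩ := Set.mem_iUnion.1 hω3
      exact GLE_disj hℓ1 hωW (by omega) hGLs hEk
    have d123 : Disjoint U1 (U2 ∪ U3) := by
      rw [Set.disjoint_left]
      intro ω hω1 hω23
      obtain ⟨k, hDk, hωW⟩ := Set.mem_iUnion.1 hω1
      rcases hω23 with hω2 | hω3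
      · obtain ⟨k', hEk', _⟩ := Set.mem_iUnion.1 hω2
        exact ED_disj hℓ1 hωW (by omega) hEk' hDk
      · obtain ⟨s, hGLs, _⟩ := Set.mem_iUnion.1 hω3
        exact D_not_good hDk (G_subset_good hℓ1 (GL_subset_G hℓ1 hGLs))
    have d0123 : Disjoint (DSet ξ ℓ ℓ ∩ omega01 ξ) (U1 ∪ (U2 ∪ U3)) := by
      rw [Set.disjoint_left]
      rintro ω ⟨hD0, hωW⟩ hrest
      rcases hrest with hω1 | hω23
      · obtain ⟨k, hDk, _⟩ := Set.mem_iUnion.1 hω1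
        exact D_disj (by omega) hD0 hDk
      · rcases hω23 with hω2 | hω3
        · obtain ⟨k', hEk', _⟩ := Set.mem_iUnion.1 hω2
          exact ED_disj hℓ1 hωW (by omega) hEk' hD0
        · obtain ⟨s, hGLs, _⟩ := Set.mem_iUnion.1 hω3
          exact D_not_good hD0 (G_subset_good hℓ1 (GL_subset_G hℓ1 hGLs))
    calc A0 + SD + SE + SA * ENNReal.ofReal (h ^ (2 * ℓ - 1))
        = A0 + (P U1 + (P U2 + P U3)) := by
          rw [hDU, hEU, hGLU]; ring
      _ = P ((DSet ξ ℓ ℓ ∩ omega01 ξ) ∪ (U1 ∪ (U2 ∪ U3))) := by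
          rw [measure_union d0123 (mU1.union (mU2.union mU3)),
            measure_union d123 (mU2.union mU3), measure_union d23 mU3]
      _ ≤ 1 := prob_le_one
  -- bad bound
  have hbad : (1:ℝ≥0∞) ≤ A0 + SD + SA * ENNReal.ofReal (h ^ ℓ) := by
    have hcovers : (goodSet ξ ℓ)ᶜ ∩ omega01 ξ ⊆
        ZinfSet ξ ℓ ∪ ((DSet ξ ℓ ℓ ∩ omega01 ξ)
          ∪ ⋃ k, DSet ξ ℓ (ℓ + 1 + k) ∩ omega01 ξ) := by
      rintro ω ⟨hωb, hωW⟩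
      rcases bad_cover hωb with hz | ⟨m, hm, hD⟩
      · exact Or.inl hz
      · rcases eq_or_lt_of_le hm with heq | hlt
        · exact Or.inr (Or.inl ⟨heq ▸ hD, hωW⟩)
        · refine Or.inr (Or.inr (Set.mem_iUnion.2 ⟨m - ℓ - 1, ?_⟩))
          have hmeq : ℓ + 1 + (m - ℓ - 1) = m := by omega
          rw [hmeq]
          exact ⟨hD, hωW⟩
    have hPbad : P (goodSet ξ ℓ)ᶜ ≤ A0 + SD := by
      calc P (goodSet ξ ℓ)ᶜ = P ((goodSet ξ ℓ)ᶜ ∩ omega01 ξ) := (interW _).symm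
        _ ≤ P (ZinfSet ξ ℓ) + (P (DSet ξ ℓ ℓ ∩ omega01 ξ)
            + P (⋃ k, DSet ξ ℓ (ℓ + 1 + k) ∩ omega01 ξ)) := by
            refine le_trans (measure_mono hcovers) ?_
            refine le_trans (measure_union_le _ _) ?_
            gcongr
            exact measure_union_le _ _
        _ = A0 + SD := by rw [PZ, hDU, zero_add]
    have hcompl : P (goodSet ξ ℓ)ᶜ = 1 - P (goodSet ξ ℓ) :=
      prob_compl_eq_one_sub mGood
    have hgle : P (goodSet ξ ℓ) ≤ 1 := prob_le_one
    calc (1:ℝ≥0∞) = P (goodSet ξ ℓ)ᶜ + P (goodSet ξ ℓ) := by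
          rw [hcompl, tsub_add_cancel_of_le hgle]
      _ ≤ (A0 + SD) + SA * ENNReal.ofReal (h ^ ℓ) := by
          rw [hgoodP] at *
          exact add_le_add hPbad le_rfl
      _ = A0 + SD + SA * ENNReal.ofReal (h ^ ℓ) := by ring
  -- termwise D ≤ r E
  have hSDSE : SD ≤ ENNReal.ofReal r * SE := by
    have : SD ≤ ∑' k, ENNReal.ofReal r * P (ESet ξ ℓ (ℓ + 1 + k) ∩ omega01 ξ) := by
      rw [hSDdef]
      refine ENNReal.tsum_le_tsum fun k => ?_
      rw [interW (ESet ξ ℓ (ℓ + 1 + k))]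
      exact PDE (ℓ + 1 + k) (by omega)
    rwa [ENNReal.tsum_mul_left] at this
  -- finiteness
  have hA0ne : A0 ≠ ⊤ := measure_ne_top P _
  have hSDne : SD ≠ ⊤ := by
    intro htop
    rw [htop] at hbig
    simp [ENNReal.add_eq_top] at hbig
  have hSEne : SE ≠ ⊤ := by
    intro htop
    rw [htop] at hbig
    simp [ENNReal.add_eq_top] at hbig
  have hq2ne : ENNReal.ofReal (h ^ (2 * ℓ - 1)) ≠ 0 := by
    simp only [ne_eq, ENNReal.ofReal_eq_zero, not_le]
    positivity
  have hSAne : SA ≠ ⊤ := by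
    intro htop
    have : SA * ENNReal.ofReal (h ^ (2 * ℓ - 1)) = ⊤ := by
      rw [htop, ENNReal.top_mul hq2ne]
    rw [this] at hbig
    simp [ENNReal.add_eq_top] at hbig
  -- real versions
  set a0 : ℝ := A0.toReal with ha0def
  set sd : ℝ := SD.toReal with hsddef
  set se : ℝ := SE.toReal with hsedef
  set sa : ℝ := SA.toReal with hsadef
  have ha0nn : 0 ≤ a0 := ENNReal.toReal_nonneg
  have hsdnn : 0 ≤ sd := ENNReal.toReal_nonneg
  have hsenn : 0 ≤ se := ENNReal.toReal_nonneg
  have hsann : 0 ≤ sa := ENNReal.toReal_nonneg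
  have t1 : a0 + sd + se + sa * h ^ (2 * ℓ - 1) ≤ 1 := by
    have := ENNReal.toReal_mono (by norm_num) hbig
    rw [ENNReal.toReal_add (by
        exact ENNReal.add_ne_top.2 ⟨ENNReal.add_ne_top.2 ⟨hA0ne, hSDne⟩, hSEne⟩)
      (ENNReal.mul_ne_top hSAne ENNReal.ofReal_ne_top),
      ENNReal.toReal_add (ENNReal.add_ne_top.2 ⟨hA0ne, hSDne⟩) hSEne,
      ENNReal.toReal_add hA0ne hSDne, ENNReal.toReal_mul,
      ENNReal.toReal_ofReal (by positivity)] at this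
    simpa using this
  have t2 : 1 ≤ a0 + sd + sa * h ^ ℓ := by
    have := ENNReal.toReal_mono (by
        exact ENNReal.add_ne_top.2 ⟨ENNReal.add_ne_top.2 ⟨hA0ne, hSDne⟩,
          ENNReal.mul_ne_top hSAne ENNReal.ofReal_ne_top⟩) hbad
    rw [ENNReal.toReal_add (ENNReal.add_ne_top.2 ⟨hA0ne, hSDne⟩)
      (ENNReal.mul_ne_top hSAne ENNReal.ofReal_ne_top),
      ENNReal.toReal_add hA0ne hSDne, ENNReal.toReal_mul,
      ENNReal.toReal_ofReal (by positivity)] at this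
    simpa using this
  have t3 : a0 ≤ (1 - h) ^ ℓ := by
    have := ENNReal.toReal_mono ENNReal.ofReal_ne_top PD0
    rwa [ENNReal.toReal_ofReal (by positivity)] at this
  have t4 : sd ≤ r * se := by
    have := ENNReal.toReal_mono
      (ENNReal.mul_ne_top ENNReal.ofReal_ne_top hSEne) hSDSE
    rwa [ENNReal.toReal_mul, ENNReal.toReal_ofReal hr0] at this
  -- the key real arithmetic: a0 + sd ≤ r
  have hkey : a0 + sd ≤ r := by
    have hX0 : (0:ℝ) < h ^ (ℓ - 1) := pow_pos h_pos _
    have hX1 : h ^ (ℓ - 1) ≤ 1 := pow_le_one₀ h_pos.le h_lt.le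
    have h2l : h ^ (2 * ℓ - 1) = h ^ (ℓ - 1) * h ^ ℓ := by
      rw [← pow_add]; congr 1; omega
    have hpl : (1 - h) ^ ℓ = (1 - h) ^ (ℓ - 1) * (1 - h) := by
      rw [← pow_succ]; congr 1; omega
    have hrX : r * h ^ (ℓ - 1) = (1 - h) ^ (ℓ - 1) := by
      rw [hrdef, div_pow, div_mul_cancel₀]
      exact pow_ne_zero _ (ne_of_gt h_pos)
    have e_le : se ≤ 1 - a0 - sd - h ^ (ℓ - 1) * (sa * h ^ ℓ) := by
      have hre : sa * h ^ (2 * ℓ - 1) = h ^ (ℓ - 1) * (sa * h ^ ℓ) := by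
        rw [h2l]; ring
      linarith [t1, hre.le, hre.ge]
    have hq : 1 - a0 - sd ≤ sa * h ^ ℓ := by linarith [t2]
    have hmulX : h ^ (ℓ - 1) * (1 - a0 - sd) ≤ h ^ (ℓ - 1) * (sa * h ^ ℓ) :=
      mul_le_mul_of_nonneg_left hq hX0.le
    have e_le2 : se ≤ (1 - a0 - sd) * (1 - h ^ (ℓ - 1)) := by nlinarith [e_le, hmulX]
    have h5 : a0 + sd ≤ r * h ^ (ℓ - 1) * (1 - h)
        + r * ((1 - a0 - sd) * (1 - h ^ (ℓ - 1))) := by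
      have hrse : r * se ≤ r * ((1 - a0 - sd) * (1 - h ^ (ℓ - 1))) :=
        mul_le_mul_of_nonneg_left e_le2 hr0
      have ht3' : a0 ≤ r * h ^ (ℓ - 1) * (1 - h) := by
        calc a0 ≤ (1 - h) ^ ℓ := t3
          _ = r * h ^ (ℓ - 1) * (1 - h) := by rw [hrX, ← hpl]
      linarith [t4, hrse, ht3']
    have h6 : (a0 + sd) + (a0 + sd) * (r * (1 - h ^ (ℓ - 1)))
        ≤ r * h ^ (ℓ - 1) * (1 - h) + r * (1 - h ^ (ℓ - 1)) := by nlinarith [h5]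
    have h7 : r * h ^ (ℓ - 1) * (1 - h) + r * (1 - h ^ (ℓ - 1))
        ≤ r + r * (r * (1 - h ^ (ℓ - 1))) := by
      have hn1 : 0 ≤ r * h ^ (ℓ - 1) * h := by positivity
      have hn2 : 0 ≤ r * (r * (1 - h ^ (ℓ - 1))) := by
        have : 0 ≤ 1 - h ^ (ℓ - 1) := by linarith
        positivity
      nlinarith [hn1, hn2]
    have hk0 : 0 ≤ r * (1 - h ^ (ℓ - 1)) := by
      have : 0 ≤ 1 - h ^ (ℓ - 1) := by linarith
      positivity
    have h8 : (a0 + sd) * (1 + r * (1 - h ^ (ℓ - 1)))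
        ≤ r * (1 + r * (1 - h ^ (ℓ - 1))) := by nlinarith [h6, h7]
    have hpos : (0:ℝ) < 1 + r * (1 - h ^ (ℓ - 1)) := by linarith
    exact le_of_mul_le_mul_right h8 hpos
  -- covering the target complement
  have cover : {ω | ¬(runTime ξ ℓ 1 ω ≤ ((ℓ * u : ℕ) : ℕ∞)
      ∧ runTime ξ ℓ 1 ω < runTime ξ ℓ 0 ω)} ∩ omega01 ξ ⊆
      CSet ξ ℓ u ∪ (ZinfSet ξ ℓ ∪ ((DSet ξ ℓ ℓ ∩ omega01 ξ)
        ∪ ⋃ k, DSet ξ ℓ (ℓ + 1 + k) ∩ omega01 ξ)) := by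
    rintro ω ⟨hωT, hωW⟩
    rw [Set.mem_setOf_eq] at hωT
    rcases not_and_or.1 hωT with hc | hc
    · left
      refine noRun1_subset_C hℓ1 fun m hm hr => hc ?_
      exact runTime_le_iff.2 ⟨m, hm, hr⟩
    · right
      have hng : ω ∉ goodSet ξ ℓ := by
        rintro ⟨m, hr, hn⟩
        exact hc (runTime_lt_iff.2 ⟨m, hr, hn⟩)
      rcases bad_cover hng with hz | ⟨m, hm, hD⟩
      · exact Or.inl hz
      · right
        rcases eq_or_lt_of_le hm with heq | hlt
        · exact Or.inl ⟨heq ▸ hD, hωW⟩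
        · refine Or.inr (Set.mem_iUnion.2 ⟨m - ℓ - 1, ?_⟩)
          have hmeq : ℓ + 1 + (m - ℓ - 1) = m := by omega
          rw [hmeq]
          exact ⟨hD, hωW⟩
  have hTbound : P {ω | ¬(runTime ξ ℓ 1 ω ≤ ((ℓ * u : ℕ) : ℕ∞)
      ∧ runTime ξ ℓ 1 ω < runTime ξ ℓ 0 ω)} ≤ ENNReal.ofReal c + (A0 + SD) := by
    calc P {ω | ¬(runTime ξ ℓ 1 ω ≤ ((ℓ * u : ℕ) : ℕ∞)
        ∧ runTime ξ ℓ 1 ω < runTime ξ ℓ 0 ω)}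
        = P ({ω | ¬(runTime ξ ℓ 1 ω ≤ ((ℓ * u : ℕ) : ℕ∞)
            ∧ runTime ξ ℓ 1 ω < runTime ξ ℓ 0 ω)} ∩ omega01 ξ) := (interW _).symm
      _ ≤ P (CSet ξ ℓ u) + (P (ZinfSet ξ ℓ) + (P (DSet ξ ℓ ℓ ∩ omega01 ξ)
          + P (⋃ k, DSet ξ ℓ (ℓ + 1 + k) ∩ omega01 ξ))) := by
          refine le_trans (measure_mono cover) ?_
          refine le_trans (measure_union_le _ _) ?_
          gcongr
          refine le_trans (measure_union_le _ _) ?_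
          gcongr
          exact measure_union_le _ _
      _ ≤ ENNReal.ofReal c + (A0 + SD) := by
          rw [PZ, hDU, zero_add]
          gcongr
          exact prob_CSet h_pos h_lt hℓ1 hmeas hindep h1 u
  -- conclude
  have hADfin : A0 + SD ≠ ⊤ := ENNReal.add_ne_top.2 ⟨hA0ne, hSDne⟩
  have hADr : A0 + SD ≤ ENNReal.ofReal r := by
    have : A0 + SD = ENNReal.ofReal (a0 + sd) := by
      rw [ENNReal.ofReal_add ha0nn hsdnn, ha0def, hsddef,
        ENNReal.ofReal_toReal hA0ne, ENNReal.ofReal_toReal hSDne]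
    rw [this]
    exact ENNReal.ofReal_le_ofReal hkey
  calc P {ω | ¬(runTime ξ ℓ 1 ω ≤ ((ℓ * u : ℕ) : ℕ∞)
      ∧ runTime ξ ℓ 1 ω < runTime ξ ℓ 0 ω)}
      ≤ ENNReal.ofReal c + (A0 + SD) := hTbound
    _ ≤ ENNReal.ofReal c + ENNReal.ofReal r := by gcongr
    _ = ENNReal.ofReal (c + r) := (ENNReal.ofReal_add hc0 hr0).symm

/-! ### Main theorem -/

theorem runs_of_ones_simultaneously_for_N_sequences
    {Ω : Type*} [MeasurableSpace Ω] (P : Measure Ω) [IsProbabilityMeasure P]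
    (h : ℝ) (h_pos : 0 < h) (h_lt : h < 1)
    (ℓ u N : ℕ) (hℓ : 1 ≤ ℓ) (hu : 1 ≤ u) (hN : 1 ≤ N)
    (ξ : Fin N → ℕ → Ω → ℕ) (h_meas : ∀ j n, Measurable (ξ j n))
    (h_indep : ∀ j, iIndepFun (ξ j) P)
    (h_one : ∀ j n, P {ω | ξ j n ω = 1} = ENNReal.ofReal h)
    (h_zero : ∀ j n, P {ω | ξ j n ω = 0} = ENNReal.ofReal (1 - h)) :
    (P {ω | ∀ j, runTime (ξ j) ℓ 1 ω ≤ ((ℓ * u : ℕ) : ℕ∞)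
            ∧ runTime (ξ j) ℓ 1 ω < runTime (ξ j) ℓ 0 ω}).toReal
      ≥ 1 - N * ((1 - h ^ ℓ) ^ u + ((1 - h) / h) ^ (ℓ - 1)) := by
  set r : ℝ := ((1 - h) / h) ^ (ℓ - 1) with hrdef
  set c : ℝ := (1 - h ^ ℓ) ^ u with hcdef
  have hh1 : (0:ℝ) ≤ 1 - h := by linarith
  have hr0 : 0 ≤ r := by positivity
  have hc0 : 0 ≤ c := by
    have : h ^ ℓ ≤ 1 := pow_le_one₀ h_pos.le h_lt.le
    have : (0:ℝ) ≤ 1 - h ^ ℓ := by linarith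
    positivity
  have hN1 : (1:ℝ) ≤ (N:ℝ) := by exact_mod_cast hN
  rcases le_or_gt (1 - (N:ℝ) * (c + r)) 0 with htriv | hnontriv
  · exact le_trans htriv ENNReal.toReal_nonneg
  · -- here necessarily 2 ≤ ℓ
    have hℓ2 : 2 ≤ ℓ := by
      by_contra hcon
      have hℓeq : ℓ = 1 := by omega
      have hreq : r = 1 := by
        rw [hrdef, hℓeq]
        norm_num
      have : (N:ℝ) * (c + r) ≥ 1 := by
        rw [hreq]
        nlinarith [hc0, hN1]
      linarith
    -- the per-sequence bad sets
    set Tc : Fin N → Set Ω := fun j => {ω | ¬(runTime (ξ j) ℓ 1 ω ≤ ((ℓ * u : ℕ) : ℕ∞)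
      ∧ runTime (ξ j) ℓ 1 ω < runTime (ξ j) ℓ 0 ω)} with hTcdef
    have hTc : ∀ j, P (Tc j) ≤ ENNReal.ofReal (c + r) := fun j =>
      perSeq P h h_pos h_lt ℓ u hℓ2 (ξ j) (h_meas j) (h_indep j) (h_one j) (h_zero j)
    -- measurability of each Tc j
    have mTc : ∀ j, MeasurableSet (Tc j) := by
      intro j
      have hℓ1 : 1 ≤ ℓ := by omega
      have mRun : ∀ v t, MeasurableSet {ω | runAt (ξ j) ℓ v t ω} := fun v t =>
        blockMS_le (h_meas j) Set.univ _ (runAt_block (fun cc _ => Set.mem_univ cc) v)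
      have heq : Tc j = ((⋃ m ∈ Set.Iic (ℓ * u), {ω | runAt (ξ j) ℓ 1 m ω}) ∩
          ⋃ m, ({ω | runAt (ξ j) ℓ 1 m ω} ∩
            ⋂ t ∈ Set.Iic m, {ω | runAt (ξ j) ℓ 0 t ω}ᶜ))ᶜ := by
        ext ω
        rw [hTcdef]
        simp only [Set.mem_setOf_eq, Set.mem_compl_iff, Set.mem_inter_iff, Set.mem_iUnion,
          Set.mem_iInter, Set.mem_Iic, Set.mem_compl_iff, exists_prop]
        rw [runTime_le_iff, runTime_lt_iff]
      rw [heq]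
      refine MeasurableSet.compl ?_
      refine MeasurableSet.inter ?_ ?_
      · exact MeasurableSet.biUnion (Set.to_countable _) fun m _ => mRun 1 m
      · exact MeasurableSet.iUnion fun m => (mRun 1 m).inter
          (MeasurableSet.biInter (Set.to_countable _) fun t _ => (mRun 0 t).compl)
    -- the target set is the complement of the union of the Tc j
    have htarget : {ω | ∀ j, runTime (ξ j) ℓ 1 ω ≤ ((ℓ * u : ℕ) : ℕ∞)
        ∧ runTime (ξ j) ℓ 1 ω < runTime (ξ j) ℓ 0 ω} = (⋃ j, Tc j)ᶜ := by
      ext ω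
      simp only [Set.mem_setOf_eq, Set.mem_compl_iff, Set.mem_iUnion, hTcdef, not_exists,
        Set.mem_setOf_eq, not_not]
    have mU : MeasurableSet (⋃ j, Tc j) := MeasurableSet.iUnion fun j => mTc j
    have hPU : P (⋃ j, Tc j) ≤ (N : ℝ≥0∞) * ENNReal.ofReal (c + r) := by
      refine le_trans (measure_iUnion_le _) ?_
      calc ∑' j : Fin N, P (Tc j) ≤ ∑' _ : Fin N, ENNReal.ofReal (c + r) :=
            ENNReal.tsum_le_tsum fun j => hTc j
        _ = (N : ℝ≥0∞) * ENNReal.ofReal (c + r) := by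
            rw [tsum_fintype]
            simp [Finset.sum_const, Finset.card_univ, nsmul_eq_mul]
    have hPtarget : P {ω | ∀ j, runTime (ξ j) ℓ 1 ω ≤ ((ℓ * u : ℕ) : ℕ∞)
        ∧ runTime (ξ j) ℓ 1 ω < runTime (ξ j) ℓ 0 ω} = 1 - P (⋃ j, Tc j) := by
      rw [htarget, prob_compl_eq_one_sub mU]
    rw [hPtarget]
    have hPU1 : P (⋃ j, Tc j) ≤ 1 := prob_le_one
    rw [ENNReal.toReal_sub_of_le hPU1 ENNReal.one_ne_top]
    have hPUr : (P (⋃ j, Tc j)).toReal ≤ (N:ℝ) * (c + r) := by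
      have hne : (N : ℝ≥0∞) * ENNReal.ofReal (c + r) ≠ ⊤ :=
        ENNReal.mul_ne_top (ENNReal.natCast_ne_top N) ENNReal.ofReal_ne_top
      have := ENNReal.toReal_mono hne hPU
      rwa [ENNReal.toReal_mul, ENNReal.toReal_natCast,
        ENNReal.toReal_ofReal (by positivity)] at this
    simp only [ENNReal.toReal_one]
    linarith
end

section
/- Let q ∈ (0,1), p ∈ [0,1] and β ∈ (0, 1/2). Then for every γ ∈ [0,1], the Lebesgue measure (length) of the intersection [β, 1−β] ∩ I_γ is at most 1/(2−q) − β, where I_γ = [p(1−q)/(1 − (1−γ)q), (p(1−q) + (1−γ)q)/(1 − γq)]. In particular, max over γ ∈ [0,1] of |[β, 1−β] ∩ I_γ| ≤ 1/(2−q) − β. -/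
/-!
The denominators `d₁ = 1 - (1 - γ) q` and `d₂ = 1 - γ q` of the endpoints of `I_γ` satisfy
`(1 - q) d₁ + (1 - γ) q (2 - q) = d₂`. Hence the upper endpoint of `I_γ` is at most `1/(2 - q)`
when `p (2 - q) ≤ d₁`, and the lower endpoint is at least `1 - 1/(2 - q)` when `p (2 - q) ≥ d₁`.
In the first case `[β, 1 - β] ∩ I_γ ⊆ [β, 1/(2 - q)]`, in the second
`[β, 1 - β] ∩ I_γ ⊆ [1 - 1/(2 - q), 1 - β]`, and both intervals have length `1/(2 - q) - β`.
-/

open MeasureTheory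

namespace Real

theorem volume_Icc_inter_Icc_le_ofReal_sub (x y a b : ℝ) :
    volume (Set.Icc x y ∩ Set.Icc a b) ≤ ENNReal.ofReal (b - x) :=
  (measure_mono fun t ht => (⟨ht.1.1, ht.2.2⟩ : t ∈ Set.Icc x b)).trans_eq volume_Icc

theorem volume_Icc_inter_Icc_le_ofReal_sub' (x y a b : ℝ) :
    volume (Set.Icc x y ∩ Set.Icc a b) ≤ ENNReal.ofReal (y - a) :=
  (measure_mono fun t ht => (⟨ht.2.1, ht.1.2⟩ : t ∈ Set.Icc a y)).trans_eq volume_Icc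

end Real

theorem semicautious_upper_le_or_le_lower {q γ : ℝ} (p : ℝ) (hq : q ∈ Set.Ioo (0 : ℝ) 1)
    (hγ : γ ∈ Set.Icc (0 : ℝ) 1) :
    (p * (1 - q) + (1 - γ) * q) / (1 - γ * q) ≤ 1 / (2 - q) ∨
      1 - 1 / (2 - q) ≤ p * (1 - q) / (1 - (1 - γ) * q) := by
  obtain ⟨hq0, hq1⟩ := hq
  obtain ⟨hγ0, hγ1⟩ := hγ
  have hd₁ : 0 < 1 - (1 - γ) * q := by nlinarith
  have hd₂ : 0 < 1 - γ * q := by nlinarith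
  have h2q : 0 < 2 - q := by linarith
  have hd : (1 - q) * (1 - (1 - γ) * q) + (1 - γ) * q * (2 - q) = 1 - γ * q := by ring
  rcases le_total (p * (2 - q)) (1 - (1 - γ) * q) with h | h
  · left
    rw [div_le_div_iff₀ hd₂ h2q]
    nlinarith [mul_le_mul_of_nonneg_left h (sub_nonneg.2 hq1.le)]
  · right
    rw [one_sub_div h2q.ne', div_le_div_iff₀ h2q hd₁]
    nlinarith [mul_le_mul_of_nonneg_left h (sub_nonneg.2 hq1.le)]

theorem semicautious_control_interval_intersection_bound_general
    (q p β : ℝ) (hq : q ∈ Set.Ioo (0 : ℝ) 1) :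
    ∀ γ ∈ Set.Icc (0 : ℝ) 1,
      volume (Set.Icc β (1 - β)
          ∩ Set.Icc (p * (1 - q) / (1 - (1 - γ) * q))
              ((p * (1 - q) + (1 - γ) * q) / (1 - γ * q)))
        ≤ ENNReal.ofReal (1 / (2 - q) - β) := by
  intro γ hγ
  rcases semicautious_upper_le_or_le_lower p hq hγ with h | h
  · refine (Real.volume_Icc_inter_Icc_le_ofReal_sub _ _ _ _).trans (ENNReal.ofReal_le_ofReal ?_)
    linarith
  · refine (Real.volume_Icc_inter_Icc_le_ofReal_sub' _ _ _ _).trans (ENNReal.ofReal_le_ofReal ?_)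
    linarith

theorem semicautious_control_interval_intersection_bound
    (q p β : ℝ) (hq : q ∈ Set.Ioo (0 : ℝ) 1) (hp : p ∈ Set.Icc (0 : ℝ) 1)
    (hβ : β ∈ Set.Ioo (0 : ℝ) (1 / 2)) :
    ∀ γ ∈ Set.Icc (0 : ℝ) 1,
      volume (Set.Icc β (1 - β)
          ∩ Set.Icc (p * (1 - q) / (1 - (1 - γ) * q))
              ((p * (1 - q) + (1 - γ) * q) / (1 - γ * q)))
        ≤ ENNReal.ofReal (1 / (2 - q) - β) :=
  semicautious_control_interval_intersection_bound_general q p β hq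
end

section
/- Let φ = (1 + √5)/2 be the Golden Ratio. Then (3 − √5)/2 = 1/(1 + φ) = φ⁻², and for any q ∈ (0,1) the following equivalence holds: there exists β ∈ (0, 1/2) with q < β and q < 2 − 1/(1−β) if and only if q < (3 − √5)/2. -/
/-!
The threshold is the best value of `min β (2 - 1 / (1 - β))` over admissible `β`. The first
term increases and the second decreases in `β`, so the best choice is their crossing point, the
root of `β ^ 2 - 3 β + 1 = 0` in `(0, 1/2)`, namely `ψ ^ 2 = (3 - √5) / 2` where `ψ = -φ⁻¹` is
the conjugate of the golden ratio.
-/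

open Set

theorem exists_lt_and_lt_iff_lt_of_strictAntiOn {α : Type*} [LinearOrder α] {s : Set α}
    {f : α → α} (hf : StrictAntiOn f s) {c : α} (hc : c ∈ s) (hfc : f c = c) (q : α) :
    (∃ β ∈ s, q < β ∧ q < f β) ↔ q < c := by
  constructor
  · rintro ⟨β, hβ, hqβ, hqf⟩
    rcases le_or_gt β c with hβc | hcβ
    · exact hqβ.trans_le hβc
    · exact hfc ▸ hqf.trans (hf hc hβ hcβ)
  · exact fun hqc => ⟨c, hc, hqc, hfc.symm ▸ hqc⟩

theorem strictAntiOn_two_sub_one_div_one_sub :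
    StrictAntiOn (fun β : ℝ => 2 - 1 / (1 - β)) (Iio 1) := by
  intro a ha b hb hab
  have hb' : 0 < 1 - b := sub_pos.mpr hb
  simpa using one_div_lt_one_div_of_lt hb' (by linarith : 1 - b < 1 - a)

namespace Real

open scoped goldenRatio

theorem goldenConj_sq_eq : ψ ^ 2 = (3 - √5) / 2 := by
  rw [goldenConj_sq, goldenConj]
  ring

theorem goldenConj_sq_eq_inv_goldenRatio_sq : ψ ^ 2 = (φ ^ 2)⁻¹ := by
  rw [← inv_pow, inv_goldenRatio, neg_sq]

theorem goldenConj_sq_eq_one_div_one_add_goldenRatio : ψ ^ 2 = 1 / (1 + φ) := by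
  rw [goldenConj_sq_eq_inv_goldenRatio_sq, goldenRatio_sq, add_comm, one_div]

theorem two_sub_one_div_one_sub_goldenConj_sq : 2 - 1 / (1 - ψ ^ 2) = ψ ^ 2 := by
  have h : 1 - ψ ^ 2 = φ⁻¹ := by rw [goldenConj_sq, inv_goldenRatio]; ring
  rw [h, one_div, inv_inv, goldenConj_sq, ← one_sub_goldenConj]
  ring

theorem goldenConj_sq_mem_Ioo : ψ ^ 2 ∈ Ioo (0 : ℝ) (1 / 2) := by
  have h : (2 : ℝ) < √5 := by
    rw [lt_sqrt zero_le_two]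
    norm_num
  refine ⟨sq_pos_of_neg goldenConj_neg, ?_⟩
  rw [goldenConj_sq_eq]
  linarith

end Real

theorem golden_ratio_security_threshold
    (φ : ℝ) (hφ : φ = (1 + Real.sqrt 5) / 2) :
    (3 - Real.sqrt 5) / 2 = 1 / (1 + φ)
    ∧ (3 - Real.sqrt 5) / 2 = (φ ^ 2)⁻¹
    ∧ ∀ q ∈ Set.Ioo (0 : ℝ) 1,
        ((∃ β ∈ Set.Ioo (0 : ℝ) (1 / 2), q < β ∧ q < 2 - 1 / (1 - β))
          ↔ q < (3 - Real.sqrt 5) / 2) := by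
  obtain rfl : φ = Real.goldenRatio := hφ
  rw [← Real.goldenConj_sq_eq]
  refine ⟨Real.goldenConj_sq_eq_one_div_one_add_goldenRatio,
    Real.goldenConj_sq_eq_inv_goldenRatio_sq, fun q _ => ?_⟩
  have hanti : StrictAntiOn (fun β : ℝ => 2 - 1 / (1 - β)) (Ioo 0 (1 / 2)) :=
    strictAntiOn_two_sub_one_div_one_sub.mono
      (Ioo_subset_Iio_self.trans (Iio_subset_Iio (by norm_num)))
  exact exists_lt_and_lt_iff_lt_of_strictAntiOn hanti Real.goldenConj_sq_mem_Ioo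
    Real.two_sub_one_div_one_sub_goldenConj_sq q
end
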